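/- arXiv:1801.07002 — 6 statements merged into one kernel-verified Lean document; each statement's English description precedes it below -/
import Mathlib

section
/- Let p, q, n be natural numbers with p + q = 2n and with p − q + 1 congruent to 1 or 3 modulo 8 (as integers). Then the real Clifford algebra Cl_{p,q}(ℝ) is isomorphic, as an ℝ-algebra, to the matrix algebra M_{2^n}(ℝ) of 2^n × 2^n real matrices. -/
set_option linter.unusedSectionVars false
set_option maxHeartbeats 1000000

/-- The quadratic form of signature `(p, q)` on `Fin (p+q) → ℝ`:
`Q(v) = ∑_{i < p} v i ^ 2 - ∑_{p ≤ i < p+q} v i ^ 2`. -/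
noncomputable def Qpq (p q : ℕ) : QuadraticForm ℝ (Fin (p + q) → ℝ) :=
  QuadraticMap.weightedSumSquares ℝ
    (fun i : Fin (p + q) => if (i : ℕ) < p then (1 : ℝ) else -1)

open CliffordAlgebra Finset

noncomputable section CliffHelpers

variable {B : Type} [Ring B] [Algebra ℝ B]

variable {m : ℕ} (w : Fin m → ℝ)

/-- the `i`-th standard generator of the Clifford algebra of a weighted sum of squares. -/
def egen (i : Fin m) : CliffordAlgebra (QuadraticMap.weightedSumSquares ℝ w) :=
  ι _ (Pi.single i (1:ℝ))

lemma wss_single (i : Fin m) :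
    QuadraticMap.weightedSumSquares ℝ w (Pi.single i (1:ℝ)) = w i := by
  rw [QuadraticMap.weightedSumSquares_apply]
  rw [Finset.sum_eq_single i]
  · simp
  · intro j _ hj
    simp [Pi.single_eq_of_ne hj]
  · simp

lemma egen_sq (i : Fin m) :
    egen w i * egen w i = algebraMap ℝ _ (w i) := by
  rw [egen, ι_sq_scalar, wss_single]

lemma wss_single_add (i j : Fin m) (hij : i ≠ j) :
    QuadraticMap.weightedSumSquares ℝ w (Pi.single i (1:ℝ) + Pi.single j 1) = w i + w j := by
  rw [QuadraticMap.weightedSumSquares_apply]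
  rw [← Finset.sum_subset (Finset.subset_univ {i, j}) (fun k _ hk => ?_)]
  · rw [Finset.sum_pair hij]
    simp [Pi.single_eq_of_ne hij, Pi.single_eq_of_ne (Ne.symm hij)]
  · simp only [Finset.mem_insert, Finset.mem_singleton, not_or] at hk
    rw [Pi.add_apply, Pi.single_eq_of_ne hk.1, Pi.single_eq_of_ne hk.2, add_zero, mul_zero,
      smul_zero]

lemma egen_anticomm {i j : Fin m} (hij : i ≠ j) :
    egen w i * egen w j = -(egen w j * egen w i) := by
  have h := ι_mul_ι_add_swap (Q := QuadraticMap.weightedSumSquares ℝ w)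
    (Pi.single i (1:ℝ)) (Pi.single j 1)
  rw [QuadraticMap.polar, wss_single_add w i j hij, wss_single, wss_single,
    show w i + w j - w i - w j = 0 by ring, map_zero] at h
  rw [eq_neg_iff_add_eq_zero]
  exact h

/-- Build an algebra hom out of a Clifford algebra of a weighted sum of squares from
a family of elements satisfying the Clifford relations. -/
def mkHom (A : Fin m → B)
    (hsq : ∀ i, A i * A i = algebraMap ℝ B (w i))
    (hac : ∀ i j, i ≠ j → A i * A j = -(A j * A i)) :
    CliffordAlgebra (QuadraticMap.weightedSumSquares ℝ w) →ₐ[ℝ] B :=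
  CliffordAlgebra.lift _ ⟨LinearMap.lsum ℝ (fun _ : Fin m => ℝ) ℝ
      (fun i => LinearMap.toSpanSingleton ℝ B (A i)), by
    intro v
    have hfv : (LinearMap.lsum ℝ (fun _ : Fin m => ℝ) ℝ
        (fun i => LinearMap.toSpanSingleton ℝ B (A i))) v = ∑ i, v i • A i := by
      simp [LinearMap.lsum_apply, LinearMap.toSpanSingleton_apply]
    rw [hfv, Finset.sum_mul_sum]
    set t : Fin m → Fin m → B := fun i j => (v i * v j) • (A i * A j) with ht
    have hterm : ∀ i j : Fin m, (v i • A i) * (v j • A j) = t i j := by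
      intro i j; rw [ht]; rw [smul_mul_smul_comm]
    simp only [hterm]
    have hanti : ∀ i j : Fin m, i ≠ j → t i j + t j i = 0 := by
      intro i j hij
      rw [ht]
      simp only
      rw [hac i j hij, smul_neg, mul_comm (v j) (v i), neg_add_cancel]
    have hdiag : ∀ i : Fin m, (∑ j, (t i j + t j i)) = t i i + t i i := by
      intro i
      rw [Finset.sum_eq_single i]
      · intro j _ hj
        exact hanti i j (Ne.symm hj)
      · simp
    have hS : (∑ i, ∑ j, t i j) + (∑ i, ∑ j, t i j) = (∑ i, t i i) + (∑ i, t i i) := by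
      conv_lhs => rw [show (∑ i, ∑ j, t i j) + (∑ i, ∑ j, t i j)
        = (∑ i, ∑ j, t i j) + (∑ i, ∑ j, t j i) from by rw [Finset.sum_comm (f := fun j i => t j i)]]
      rw [← Finset.sum_add_distrib]
      simp only [← Finset.sum_add_distrib]
      rw [Finset.sum_congr rfl (fun i _ => hdiag i), Finset.sum_add_distrib]
    have hSS : (∑ i, ∑ j, t i j) = ∑ i, t i i := by
      have h2 : (2:ℝ) • (∑ i, ∑ j, t i j) = (2:ℝ) • (∑ i, t i i) := by
        rw [two_smul, two_smul, hS]
      calc (∑ i, ∑ j, t i j) = (2:ℝ)⁻¹ • ((2:ℝ) • (∑ i, ∑ j, t i j)) := by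
            rw [smul_smul]; norm_num
        _ = (2:ℝ)⁻¹ • ((2:ℝ) • (∑ i, t i i)) := by rw [h2]
        _ = ∑ i, t i i := by rw [smul_smul]; norm_num
    rw [hSS, ht]
    simp only
    rw [QuadraticMap.weightedSumSquares_apply, Algebra.algebraMap_eq_smul_one, Finset.sum_smul]
    refine Finset.sum_congr rfl fun i _ => ?_
    rw [hsq i, Algebra.algebraMap_eq_smul_one, smul_smul, smul_eq_mul]
    congr 1
    ring⟩

lemma mkHom_ι (A : Fin m → B) (hsq) (hac) (v : Fin m → ℝ) :
    mkHom w A hsq hac (ι _ v) = ∑ i, v i • A i := by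
  rw [mkHom, CliffordAlgebra.lift_ι_apply]
  simp [LinearMap.lsum_apply, LinearMap.toSpanSingleton_apply]

lemma mkHom_egen (A : Fin m → B) (hsq) (hac) (i : Fin m) :
    mkHom w A hsq hac (egen w i) = A i := by
  rw [egen, mkHom_ι, Finset.sum_eq_single i]
  · simp
  · intro j _ hj
    simp [Pi.single_eq_of_ne hj]
  · simp

/-- extensionality of algebra homs from a Clifford algebra of a weighted form:
it suffices they agree on the standard generators. -/
lemma hom_ext_egen {f g : CliffordAlgebra (QuadraticMap.weightedSumSquares ℝ w) →ₐ[ℝ] B}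
    (h : ∀ i, f (egen w i) = g (egen w i)) : f = g := by
  apply CliffordAlgebra.hom_ext
  apply Module.Basis.ext (Pi.basisFun ℝ (Fin m))
  intro i
  simpa [egen, Pi.basisFun_apply] using h i

end CliffHelpers

noncomputable section UnitsHom

variable {B : Type} [Ring B] [Algebra ℝ B]

lemma push_anti {x y : B} (h : y * x = -(x * y)) (t : B) : y * (x * t) = -(x * (y * t)) := by
  rw [← mul_assoc, h, neg_mul, mul_assoc]

lemma push_sq {x : B} (h : x * x = 1) (t : B) : x * (x * t) = t := by
  rw [← mul_assoc, h, one_mul]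

lemma push_sq_smul {x : B} {σ : ℝ} (h : x * x = σ • 1) (t : B) : x * (x * t) = σ • t := by
  rw [← mul_assoc, h, smul_mul_assoc, one_mul]

/-- Build an algebra hom out of a matrix algebra from a system of matrix units and a
compatible algebra hom on entries. -/
def unitsHom {n : Type} [Fintype n] [DecidableEq n] {A : Type} [Ring A] [Algebra ℝ A]
    (α : A →ₐ[ℝ] B) (E : n → n → B)
    (hE : ∀ i j k l, E i j * E k l = if j = k then E i l else 0)
    (hone : (∑ i, E i i) = 1)
    (hcomm : ∀ a i j, α a * E i j = E i j * α a) : Matrix n n A →ₐ[ℝ] B where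
  toFun M := ∑ i, ∑ j, α (M i j) * E i j
  map_one' := by
    simp only [Matrix.one_apply, apply_ite α, map_one, map_zero, ite_mul, one_mul, zero_mul]
    rw [← hone]
    refine Finset.sum_congr rfl fun i _ => ?_
    rw [Finset.sum_ite_eq (Finset.univ) i (fun j => E i j)]
    simp
  map_mul' M N := by
    show ∑ i, ∑ l, α ((M * N) i l) * E i l
        = (∑ i, ∑ j, α (M i j) * E i j) * (∑ k, ∑ l, α (N k l) * E k l)
    have lhs_eq : ∀ i l, α ((M * N) i l) * E i l = ∑ j, α (M i j) * α (N j l) * E i l := by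
      intro i l
      rw [Matrix.mul_apply, map_sum, Finset.sum_mul]
      exact Finset.sum_congr rfl fun j _ => by rw [map_mul]
    have rhs_term : ∀ i j k l, (α (M i j) * E i j) * (α (N k l) * E k l)
        = if j = k then α (M i j) * α (N k l) * E i l else 0 := by
      intro i j k l
      have swp : E i j * (α (N k l) * E k l) = α (N k l) * (E i j * E k l) := by
        rw [← mul_assoc, ← hcomm, mul_assoc]
      rw [mul_assoc, swp, ← mul_assoc, hE i j k l]
      split
      · rfl
      · rw [mul_zero]
    rw [Finset.sum_mul_sum]
    have : ∀ i k, (∑ j, α (M i j) * E i j) * (∑ l, α (N k l) * E k l)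
        = ∑ j, ∑ l, if j = k then α (M i j) * α (N k l) * E i l else 0 := by
      intro i k
      rw [Finset.sum_mul_sum]
      exact Finset.sum_congr rfl fun j _ => Finset.sum_congr rfl fun l _ => rhs_term i j k l
    simp only [this, lhs_eq]
    have inner : ∀ i, (∑ k, ∑ j, ∑ l, if j = k then α (M i j) * α (N k l) * E i l else 0)
        = ∑ l, ∑ j, α (M i j) * α (N j l) * E i l := by
      intro i
      rw [Finset.sum_comm]
      have h1 : ∀ j, (∑ k, ∑ l, if j = k then α (M i j) * α (N k l) * E i l else 0)
          = ∑ l, α (M i j) * α (N j l) * E i l := by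
        intro j
        rw [Finset.sum_comm]
        refine Finset.sum_congr rfl fun l _ => ?_
        rw [Finset.sum_ite_eq (Finset.univ) j (fun k => α (M i j) * α (N k l) * E i l)]
        simp
      rw [Finset.sum_congr rfl fun j _ => h1 j]
      exact Finset.sum_comm
    exact Finset.sum_congr rfl fun i _ => (inner i).symm
  map_zero' := by simp
  map_add' M N := by
    simp only [Matrix.add_apply, map_add, add_mul, Finset.sum_add_distrib]
  commutes' r := by
    simp only [Matrix.algebraMap_matrix_apply, apply_ite α, map_zero, zero_mul, ite_mul]
    rw [show (algebraMap ℝ B) r = α ((algebraMap ℝ A) r) * 1 by rw [AlgHom.commutes, mul_one],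
      ← hone, Finset.mul_sum]
    refine Finset.sum_congr rfl fun i _ => ?_
    rw [Finset.sum_ite_eq (Finset.univ) i (fun j => α ((algebraMap ℝ A) r) * E i j)]
    simp

lemma unitsHom_apply {n : Type} [Fintype n] [DecidableEq n] {A : Type} [Ring A] [Algebra ℝ A]
    (α : A →ₐ[ℝ] B) (E : n → n → B) (hE) (hone) (hcomm) (M : Matrix n n A) :
    unitsHom α E hE hone hcomm M = ∑ i, ∑ j, α (M i j) * E i j := rfl

/-- standard 2×2 matrix units built from two anticommuting square roots of one. -/
def E2 (x z : B) : Fin 2 → Fin 2 → B := fun i j =>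
  if i = 0 then (if j = 0 then (2⁻¹:ℝ) • (1 + z) else (2⁻¹:ℝ) • (x - x * z))
  else (if j = 0 then (2⁻¹:ℝ) • (x + x * z) else (2⁻¹:ℝ) • (1 - z))

section E2
variable {x z : B} (hx : x * x = 1) (hz : z * z = 1) (hzx : z * x = -(x * z))
include hx hz hzx

lemma E2_mul (i j k l : Fin 2) :
    E2 x z i j * E2 x z k l = if j = k then E2 x z i l else 0 := by
  have hzx2 := push_anti hzx
  have hx2 := push_sq hx
  have hz2 := push_sq hz
  fin_cases i <;> fin_cases j <;> fin_cases k <;> fin_cases l <;>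
    simp only [E2, Fin.zero_eta, Fin.mk_one, Fin.isValue, Fin.reduceEq, reduceIte] <;>
    rw [smul_mul_smul_comm] <;>
    simp only [mul_add, add_mul, mul_sub, sub_mul, one_mul, mul_one, mul_assoc,
      hzx, hzx2, hx, hx2, hz, hz2, mul_neg, neg_mul, neg_neg, mul_one, one_mul,
      smul_add, smul_sub, smul_neg, smul_smul] <;>
    module

lemma E2_sum : (∑ i, E2 x z i i) = 1 := by
  rw [Fin.sum_univ_two]
  simp only [E2, reduceIte, one_ne_zero]
  module

lemma E2_diff : E2 x z 0 0 - E2 x z 1 1 = z := by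
  simp only [E2, Fin.reduceEq, reduceIte]
  module

lemma E2_offsum : E2 x z 0 1 + E2 x z 1 0 = x := by
  simp only [E2, Fin.reduceEq, reduceIte]
  module

lemma E2_offdiff : E2 x z 1 0 - E2 x z 0 1 = x * z := by
  simp only [E2, Fin.reduceEq, reduceIte]
  module

end E2

end UnitsHom

noncomputable section Bases

/-- weights of the (p,q) form -/
def wpq (p q : ℕ) : Fin (p + q) → ℝ := fun i => if (i : ℕ) < p then 1 else -1

abbrev Clpq (p q : ℕ) := CliffordAlgebra (QuadraticMap.weightedSumSquares ℝ (wpq p q))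

/-- 1×1 real matrices are ℝ. -/
def mat1equiv : Matrix (Fin 1) (Fin 1) ℝ ≃ₐ[ℝ] ℝ where
  toFun M := M 0 0
  invFun r := Matrix.diagonal (fun _ => r)
  left_inv M := by
    ext a b
    rw [Subsingleton.elim a 0, Subsingleton.elim b 0]
    simp [Matrix.diagonal]
  right_inv r := by simp [Matrix.diagonal]
  map_mul' M N := by
    show (M * N) 0 0 = M 0 0 * N 0 0
    rw [Matrix.mul_apply, Fin.sum_univ_one]
  map_add' M N := by simp
  commutes' r := by simp [Matrix.algebraMap_matrix_apply]

/-- Clifford algebra of the zero-dimensional form. -/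
def equiv00 : Clpq 0 0 ≃ₐ[ℝ] ℝ := by
  refine AlgEquiv.ofAlgHom
    (mkHom (wpq 0 0) (fun _ => (1:ℝ)) (fun i => i.elim0) (fun i => i.elim0))
    (Algebra.ofId ℝ _) ?_ ?_
  · apply AlgHom.ext
    intro r
    simp [Algebra.ofId_apply]
  · apply hom_ext_egen
    intro i
    exact i.elim0

end Bases

noncomputable section Base2

def sigX : Matrix (Fin 2) (Fin 2) ℝ := !![0,1;1,0]
def sigZ : Matrix (Fin 2) (Fin 2) ℝ := !![1,0;0,-1]

lemma sigX_sq : sigX * sigX = algebraMap ℝ _ (1:ℝ) := by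
  ext a b
  fin_cases a <;> fin_cases b <;>
    simp [sigX, Matrix.mul_apply, Fin.sum_univ_two, Matrix.algebraMap_matrix_apply]

lemma sigZ_sq : sigZ * sigZ = algebraMap ℝ _ (1:ℝ) := by
  ext a b
  fin_cases a <;> fin_cases b <;>
    simp [sigZ, Matrix.mul_apply, Fin.sum_univ_two, Matrix.algebraMap_matrix_apply]

lemma sigXZ_anti : sigX * sigZ = -(sigZ * sigX) := by
  ext a b
  fin_cases a <;> fin_cases b <;>
    simp [sigX, sigZ, Matrix.mul_apply, Fin.sum_univ_two]

-- generators of Cl(2,0)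
def x20 : Clpq 2 0 := egen (wpq 2 0) ⟨0, by omega⟩
def z20 : Clpq 2 0 := egen (wpq 2 0) ⟨1, by omega⟩

lemma x20_sq : x20 * x20 = 1 := by
  rw [x20, egen_sq, show wpq 2 0 ⟨0, by omega⟩ = 1 from rfl, map_one]

lemma z20_sq : z20 * z20 = 1 := by
  rw [z20, egen_sq, show wpq 2 0 ⟨1, by omega⟩ = 1 from rfl, map_one]

lemma zx20_anti : z20 * x20 = -(x20 * z20) := by
  rw [z20, x20]
  exact egen_anticomm _ (by decide)

def A20 : Fin (2+0) → Matrix (Fin 2) (Fin 2) ℝ := ![sigX, sigZ]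

lemma A20_sq : ∀ i, A20 i * A20 i = algebraMap ℝ _ (wpq 2 0 i) := by
  intro i
  fin_cases i <;>
    simp only [A20, Matrix.cons_val_zero, Matrix.cons_val_one, Matrix.head_cons] <;>
    [exact sigX_sq.trans (by norm_num [wpq]); exact sigZ_sq.trans (by norm_num [wpq])]

lemma A20_anti : ∀ i j, i ≠ j → A20 i * A20 j = -(A20 j * A20 i) := by
  intro i j hij
  fin_cases i <;> fin_cases j
  · exact absurd rfl hij
  · exact sigXZ_anti
  · show sigZ * sigX = -(sigX * sigZ)
    rw [sigXZ_anti, neg_neg]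
  · exact absurd rfl hij

def phi20 : Clpq 2 0 →ₐ[ℝ] Matrix (Fin 2) (Fin 2) ℝ := mkHom (wpq 2 0) A20 A20_sq A20_anti

lemma psi20_comm : ∀ (a : ℝ) (i j : Fin 2), (Algebra.ofId ℝ (Clpq 2 0)) a * E2 x20 z20 i j
    = E2 x20 z20 i j * (Algebra.ofId ℝ (Clpq 2 0)) a :=
  fun a i j => by simp [Algebra.ofId_apply, Algebra.commutes]

def psi20 : Matrix (Fin 2) (Fin 2) ℝ →ₐ[ℝ] Clpq 2 0 :=
  unitsHom (Algebra.ofId ℝ _) (E2 x20 z20)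
    (E2_mul x20_sq z20_sq zx20_anti) (E2_sum x20_sq z20_sq zx20_anti)
    psi20_comm

lemma phi20_x : phi20 x20 = sigX := by
  rw [phi20, x20, mkHom_egen]; rfl

lemma phi20_z : phi20 z20 = sigZ := by
  rw [phi20, z20, mkHom_egen]; rfl

lemma phi20_E (i j : Fin 2) : phi20 (E2 x20 z20 i j) = E2 sigX sigZ i j := by
  fin_cases i <;> fin_cases j <;>
    simp only [E2, Fin.zero_eta, Fin.mk_one, Fin.reduceEq, reduceIte, map_smul, map_add, map_sub,
      map_one, map_mul, phi20_x, phi20_z]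

lemma E2mat_decomp (M : Matrix (Fin 2) (Fin 2) ℝ) :
    ∑ i, ∑ j, algebraMap ℝ (Matrix (Fin 2) (Fin 2) ℝ) (M i j) * E2 sigX sigZ i j = M := by
  rw [Fin.sum_univ_two, Fin.sum_univ_two, Fin.sum_univ_two]
  ext a b
  fin_cases a <;> fin_cases b <;>
    · simp only [E2, sigX, sigZ, Fin.zero_eta, Fin.mk_one, Fin.reduceEq, reduceIte]
      simp [Matrix.algebraMap_matrix_apply, Matrix.mul_apply, Fin.sum_univ_two]
      norm_num
      try ring

def equiv20 : Clpq 2 0 ≃ₐ[ℝ] Matrix (Fin 2) (Fin 2) ℝ := by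
  refine AlgEquiv.ofAlgHom phi20 psi20 (AlgHom.ext fun M => ?_) (hom_ext_egen _ ?_)
  · rw [AlgHom.comp_apply, psi20, unitsHom_apply]
    simp only [map_sum, map_mul, Algebra.ofId_apply, AlgHom.commutes, phi20_E, AlgHom.id_apply]
    exact E2mat_decomp M
  · intro i
    rw [AlgHom.comp_apply, AlgHom.id_apply]
    fin_cases i
    · rw [show egen (wpq 2 0) ⟨0, by omega⟩ = x20 from rfl, phi20_x, psi20, unitsHom_apply]
      rw [Fin.sum_univ_two, Fin.sum_univ_two, Fin.sum_univ_two]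
      simp only [Algebra.ofId_apply, sigX, Matrix.of_apply, Matrix.cons_val_zero,
        Matrix.cons_val_one, Matrix.head_cons, Matrix.head_fin_const, Matrix.cons_val',
        Matrix.empty_val', Matrix.cons_val_fin_one, map_zero, map_one, zero_mul, one_mul,
        zero_add, add_zero]
      exact E2_offsum x20_sq z20_sq zx20_anti
    · rw [show egen (wpq 2 0) ⟨1, by omega⟩ = z20 from rfl, phi20_z, psi20, unitsHom_apply]
      rw [Fin.sum_univ_two, Fin.sum_univ_two, Fin.sum_univ_two]
      simp only [Algebra.ofId_apply, sigZ, Matrix.of_apply, Matrix.cons_val_zero,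
        Matrix.cons_val_one, Matrix.head_cons, Matrix.head_fin_const, Matrix.cons_val',
        Matrix.empty_val', Matrix.cons_val_fin_one, map_zero, map_one, map_neg, zero_mul,
        one_mul, neg_one_mul, zero_add, add_zero]
      have h := E2_diff x20_sq z20_sq zx20_anti
      rw [sub_eq_add_neg] at h
      exact h

end Base2

noncomputable section HelperLemmas
variable {B : Type} [Ring B] [Algebra ℝ B]

lemma anti_symm {u v : B} (h : u * v = -(v * u)) : v * u = -(u * v) := by rw [h, neg_neg]

lemma comm_of_two_anti {u v w : B} (hu : u * w = -(w * u)) (hv : v * w = -(w * v)) :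
    (u * v) * w = w * (u * v) := by
  rw [mul_assoc, hv, mul_neg, ← mul_assoc, hu, neg_mul, neg_neg, mul_assoc]

lemma mul_z_mul {z a b : B} (hza : z * b = b * z) (hz : z * z = 1) :
    (a * z) * (b * z) = a * b := by
  rw [mul_assoc, ← mul_assoc z b z, hza, mul_assoc b z z, hz, mul_one]

end HelperLemmas

noncomputable section Hyp

variable (p q : ℕ)

-- the two distinguished generators of Cl(p+1, q+1)
def xH : Clpq (p+1) (q+1) := egen _ ⟨p, by omega⟩
def yH : Clpq (p+1) (q+1) := egen _ ⟨p+q+1, by omega⟩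
def zH : Clpq (p+1) (q+1) := xH p q * yH p q

lemma xH_sq : xH p q * xH p q = 1 := by
  rw [xH, egen_sq, show wpq (p+1) (q+1) ⟨p, by omega⟩ = 1 by simp [wpq], map_one]

lemma yH_sq : yH p q * yH p q = -1 := by
  rw [yH, egen_sq, show wpq (p+1) (q+1) ⟨p+q+1, by omega⟩ = -1 by simp [wpq], map_neg, map_one]

lemma yx_anti : yH p q * xH p q = -(xH p q * yH p q) := by
  rw [yH, xH]
  exact egen_anticomm _ (by simp only [ne_eq, Fin.mk.injEq]; omega)

lemma zH_sq : zH p q * zH p q = 1 := by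
  rw [zH, mul_assoc, push_anti (yx_anti p q), mul_neg, push_sq (xH_sq p q), yH_sq, neg_neg]

lemma zx_anti : zH p q * xH p q = -(xH p q * zH p q) := by
  rw [zH, mul_assoc, yx_anti, mul_neg, ← mul_assoc]

lemma zy_comm_aux : zH p q * yH p q = -(yH p q * zH p q) := by
  -- z*y = x*y*y ; y*z = y*x*y = -(x*y*y)
  rw [zH, ← mul_assoc, anti_symm (yx_anti p q), neg_mul, mul_assoc]

/-- embedding of small indices into the big index type -/
def embH (i : Fin (p + q)) : Fin ((p+1) + (q+1)) :=
  if (i : ℕ) < p then ⟨i, by omega⟩ else ⟨(i : ℕ) + 1, by omega⟩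

lemma w_embH (i : Fin (p + q)) : wpq (p+1) (q+1) (embH p q i) = wpq p q i := by
  rw [embH, wpq, wpq]
  split_ifs with h1 h2 h3 <;> simp_all <;> omega

lemma embH_inj {i j : Fin (p + q)} (hij : i ≠ j) : embH p q i ≠ embH p q j := by
  rw [embH, embH]
  have : (i : ℕ) ≠ (j : ℕ) := fun h => hij (Fin.ext h)
  split_ifs <;> simp [Fin.ext_iff] <;> omega

def aH (i : Fin (p + q)) : Clpq (p+1) (q+1) := egen _ (embH p q i)

lemma aH_x_anti (i : Fin (p + q)) : aH p q i * xH p q = -(xH p q * aH p q i) := by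
  rw [aH, xH]
  refine egen_anticomm _ ?_
  rw [embH]
  split_ifs <;> simp [Fin.ext_iff] <;> omega

lemma aH_y_anti (i : Fin (p + q)) : aH p q i * yH p q = -(yH p q * aH p q i) := by
  rw [aH, yH]
  refine egen_anticomm _ ?_
  rw [embH]
  have := i.isLt
  split_ifs <;> simp [Fin.ext_iff] <;> omega

lemma z_aH_comm (i : Fin (p + q)) : zH p q * aH p q i = aH p q i * zH p q := by
  rw [zH]
  exact comm_of_two_anti (anti_symm (aH_x_anti p q i)) (anti_symm (aH_y_anti p q i))

/-- the embedding `Cl(p,q) → Cl(p+1,q+1)`, `e_i ↦ a_i z`. -/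
def alphaH : Clpq p q →ₐ[ℝ] Clpq (p+1) (q+1) :=
  mkHom (wpq p q) (fun i => aH p q i * zH p q)
    (fun i => by
      rw [mul_z_mul (z_aH_comm p q i) (zH_sq p q), aH, egen_sq, w_embH])
    (fun i j hij => by
      rw [mul_z_mul (z_aH_comm p q j) (zH_sq p q), mul_z_mul (z_aH_comm p q i) (zH_sq p q),
        aH, aH]
      exact egen_anticomm _ (embH_inj p q hij))

lemma alphaH_x_comm (b : Clpq p q) : Commute (alphaH p q b) (xH p q) := by
  induction b using CliffordAlgebra.induction with
  | algebraMap r => rw [AlgHom.commutes]; exact Algebra.commutes r _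
  | ι v =>
    rw [alphaH, mkHom_ι]
    refine Commute.sum_left _ _ _ fun i _ => ?_
    refine Commute.smul_left ?_ _
    show aH p q i * zH p q * xH p q = xH p q * (aH p q i * zH p q)
    exact comm_of_two_anti (aH_x_anti p q i) (zx_anti p q)
  | mul b c hb hc => rw [map_mul]; exact hb.mul_left hc
  | add b c hb hc => rw [map_add]; exact hb.add_left hc

lemma alphaH_z_comm (b : Clpq p q) : Commute (alphaH p q b) (zH p q) := by
  induction b using CliffordAlgebra.induction with
  | algebraMap r => rw [AlgHom.commutes]; exact Algebra.commutes r _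
  | ι v =>
    rw [alphaH, mkHom_ι]
    refine Commute.sum_left _ _ _ fun i _ => ?_
    refine Commute.smul_left ?_ _
    show aH p q i * zH p q * zH p q = zH p q * (aH p q i * zH p q)
    rw [mul_assoc, ← mul_assoc (zH p q), z_aH_comm, mul_assoc]
  | mul b c hb hc => rw [map_mul]; exact hb.mul_left hc
  | add b c hb hc => rw [map_add]; exact hb.add_left hc

lemma alphaH_E2_comm (b : Clpq p q) (i j : Fin 2) :
    alphaH p q b * E2 (xH p q) (zH p q) i j = E2 (xH p q) (zH p q) i j * alphaH p q b := by
  have hx := alphaH_x_comm p q b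
  have hz := alphaH_z_comm p q b
  have h1 : Commute (alphaH p q b) 1 := Commute.one_right _
  fin_cases i <;> fin_cases j <;>
    simp only [E2, Fin.zero_eta, Fin.mk_one, Fin.reduceEq, reduceIte] <;>
    [exact (Commute.smul_right (h1.add_right hz) _);
     exact (Commute.smul_right (hx.sub_right (hx.mul_right hz)) _);
     exact (Commute.smul_right (hx.add_right (hx.mul_right hz)) _);
     exact (Commute.smul_right (h1.sub_right hz) _)]

end Hyp

noncomputable section Hyp2

variable (p q : ℕ)

def DH (c : Clpq p q) : Matrix (Fin 2) (Fin 2) (Clpq p q) := !![c, 0; 0, -c]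
def sigX' : Matrix (Fin 2) (Fin 2) (Clpq p q) := !![0, 1; 1, 0]
def sigY' : Matrix (Fin 2) (Fin 2) (Clpq p q) := !![0, -1; 1, 0]
def sigZ' : Matrix (Fin 2) (Fin 2) (Clpq p q) := !![1, 0; 0, -1]

lemma DH_sq (c : Clpq p q) (r : ℝ) (h : c * c = algebraMap ℝ _ r) :
    DH p q c * DH p q c = algebraMap ℝ _ r := by
  ext a b
  fin_cases a <;> fin_cases b <;>
    simp [DH, Matrix.mul_apply, Fin.sum_univ_two, Matrix.algebraMap_matrix_apply, h]

lemma DH_anti (c d : Clpq p q) (h : c * d = -(d * c)) :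
    DH p q c * DH p q d = -(DH p q d * DH p q c) := by
  ext a b
  fin_cases a <;> fin_cases b <;>
    simp [DH, Matrix.mul_apply, Fin.sum_univ_two, h]

lemma DH_X_anti (c : Clpq p q) : DH p q c * sigX' p q = -(sigX' p q * DH p q c) := by
  ext a b
  fin_cases a <;> fin_cases b <;>
    simp [DH, sigX', Matrix.mul_apply, Fin.sum_univ_two]

lemma DH_Y_anti (c : Clpq p q) : DH p q c * sigY' p q = -(sigY' p q * DH p q c) := by
  ext a b
  fin_cases a <;> fin_cases b <;>
    simp [DH, sigY', Matrix.mul_apply, Fin.sum_univ_two]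

lemma X'_sq : sigX' p q * sigX' p q = algebraMap ℝ _ (1:ℝ) := by
  ext a b
  fin_cases a <;> fin_cases b <;>
    simp [sigX', Matrix.mul_apply, Fin.sum_univ_two, Matrix.algebraMap_matrix_apply]

lemma Y'_sq : sigY' p q * sigY' p q = algebraMap ℝ _ (-1:ℝ) := by
  ext a b
  fin_cases a <;> fin_cases b <;>
    simp [sigY', Matrix.mul_apply, Fin.sum_univ_two, Matrix.algebraMap_matrix_apply]

lemma XY'_anti : sigX' p q * sigY' p q = -(sigY' p q * sigX' p q) := by
  ext a b
  fin_cases a <;> fin_cases b <;>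
    simp [sigX', sigY', Matrix.mul_apply, Fin.sum_univ_two]

lemma X'_mul_Y' : sigX' p q * sigY' p q = sigZ' p q := by
  ext a b
  fin_cases a <;> fin_cases b <;>
    simp [sigX', sigY', sigZ', Matrix.mul_apply, Fin.sum_univ_two]

lemma DH_mul_Z (c : Clpq p q) : DH p q c * sigZ' p q = Matrix.scalar (Fin 2) c := by
  ext a b
  fin_cases a <;> fin_cases b <;>
    simp [DH, sigZ', Matrix.mul_apply, Fin.sum_univ_two, Matrix.scalar_apply,
      Matrix.diagonal_apply]

/-- the generator images for the hom `Cl(p+1,q+1) → M₂(Cl(p,q))`. -/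
def AHfam (k : Fin ((p+1) + (q+1))) : Matrix (Fin 2) (Fin 2) (Clpq p q) :=
  if h1 : (k : ℕ) < p then DH p q (egen (wpq p q) ⟨k, by omega⟩)
  else if h2 : (k : ℕ) = p then sigX' p q
  else if h3 : (k : ℕ) < p + q + 1 then DH p q (egen (wpq p q) ⟨(k:ℕ) - 1, by omega⟩)
  else sigY' p q

lemma AH_sq (k : Fin ((p+1) + (q+1))) :
    AHfam p q k * AHfam p q k = algebraMap ℝ _ (wpq (p+1) (q+1) k) := by
  rw [AHfam]
  split_ifs with h1 h2 h3
  · rw [DH_sq p q _ _ (egen_sq (wpq p q) _)]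
    congr 1
    simp only [wpq, Fin.val_mk]
    split_ifs <;> first | rfl | omega
  · rw [X'_sq]
    congr 1
    simp only [wpq]
    split_ifs <;> first | rfl | omega
  · rw [DH_sq p q _ _ (egen_sq (wpq p q) _)]
    congr 1
    simp only [wpq, Fin.val_mk]
    split_ifs <;> first | rfl | omega
  · rw [Y'_sq]
    congr 1
    simp only [wpq]
    split_ifs <;> first | rfl | omega

lemma AHfam_lt {k : Fin ((p+1) + (q+1))} (h : (k:ℕ) < p) :
    AHfam p q k = DH p q (egen (wpq p q) ⟨k, by omega⟩) := by
  rw [AHfam, dif_pos h]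

lemma AHfam_eq {k : Fin ((p+1) + (q+1))} (h : (k:ℕ) = p) : AHfam p q k = sigX' p q := by
  rw [AHfam, dif_neg (by omega), dif_pos h]

lemma AHfam_mid {k : Fin ((p+1) + (q+1))} (h1 : p < (k:ℕ)) (h2 : (k:ℕ) < p + q + 1) :
    AHfam p q k = DH p q (egen (wpq p q) ⟨(k:ℕ) - 1, by omega⟩) := by
  rw [AHfam, dif_neg (by omega), dif_neg (by omega), dif_pos h2]

lemma AHfam_top {k : Fin ((p+1) + (q+1))} (h : p + q + 1 ≤ (k:ℕ)) : AHfam p q k = sigY' p q := by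
  rw [AHfam, dif_neg (by omega), dif_neg (by omega), dif_neg (by omega)]

lemma AH_anti (k l : Fin ((p+1) + (q+1))) (hkl : k ≠ l) :
    AHfam p q k * AHfam p q l = -(AHfam p q l * AHfam p q k) := by
  have hkl' : (k : ℕ) ≠ (l : ℕ) := fun h => hkl (Fin.ext h)
  have hkb := k.isLt
  have hlb := l.isLt
  have hck : (k:ℕ) < p ∨ (k:ℕ) = p ∨ (p < (k:ℕ) ∧ (k:ℕ) < p+q+1) ∨ p+q+1 ≤ (k:ℕ) := by omega
  have hcl : (l:ℕ) < p ∨ (l:ℕ) = p ∨ (p < (l:ℕ) ∧ (l:ℕ) < p+q+1) ∨ p+q+1 ≤ (l:ℕ) := by omega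
  rcases hck with h | h | h | h <;> rcases hcl with g | g | g | g
  · rw [AHfam_lt p q h, AHfam_lt p q g]
    exact DH_anti p q _ _ (egen_anticomm _ (by simp only [ne_eq, Fin.mk.injEq]; omega))
  · rw [AHfam_lt p q h, AHfam_eq p q g]
    exact DH_X_anti p q _
  · rw [AHfam_lt p q h, AHfam_mid p q g.1 g.2]
    exact DH_anti p q _ _ (egen_anticomm _ (by simp only [ne_eq, Fin.mk.injEq]; omega))
  · rw [AHfam_lt p q h, AHfam_top p q g]
    exact DH_Y_anti p q _
  · rw [AHfam_eq p q h, AHfam_lt p q g]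
    exact anti_symm (DH_X_anti p q _)
  · exact absurd (by omega : (k:ℕ) = (l:ℕ)) hkl'
  · rw [AHfam_eq p q h, AHfam_mid p q g.1 g.2]
    exact anti_symm (DH_X_anti p q _)
  · rw [AHfam_eq p q h, AHfam_top p q g]
    exact XY'_anti p q
  · rw [AHfam_mid p q h.1 h.2, AHfam_lt p q g]
    exact DH_anti p q _ _ (egen_anticomm _ (by simp only [ne_eq, Fin.mk.injEq]; omega))
  · rw [AHfam_mid p q h.1 h.2, AHfam_eq p q g]
    exact DH_X_anti p q _
  · rw [AHfam_mid p q h.1 h.2, AHfam_mid p q g.1 g.2]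
    exact DH_anti p q _ _ (egen_anticomm _ (by simp only [ne_eq, Fin.mk.injEq]; omega))
  · rw [AHfam_mid p q h.1 h.2, AHfam_top p q g]
    exact DH_Y_anti p q _
  · rw [AHfam_top p q h, AHfam_lt p q g]
    exact anti_symm (DH_Y_anti p q _)
  · rw [AHfam_top p q h, AHfam_eq p q g]
    exact anti_symm (XY'_anti p q)
  · rw [AHfam_top p q h, AHfam_mid p q g.1 g.2]
    exact anti_symm (DH_Y_anti p q _)
  · exact absurd (by omega : (k:ℕ) = (l:ℕ)) hkl'

def phiH : Clpq (p+1) (q+1) →ₐ[ℝ] Matrix (Fin 2) (Fin 2) (Clpq p q) :=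
  mkHom (wpq (p+1) (q+1)) (AHfam p q) (AH_sq p q) (AH_anti p q)

lemma phiH_x : phiH p q (xH p q) = sigX' p q := by
  rw [phiH, xH, mkHom_egen, AHfam]
  rw [dif_neg (show ¬(p < p) by omega), dif_pos rfl]

lemma phiH_y : phiH p q (yH p q) = sigY' p q := by
  rw [phiH, yH, mkHom_egen, AHfam]
  rw [dif_neg (show ¬(p + q + 1 < p) by omega), dif_neg (show ¬(p + q + 1 = p) by omega),
    dif_neg (show ¬(p + q + 1 < p + q + 1) by omega)]

lemma phiH_z : phiH p q (zH p q) = sigZ' p q := by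
  rw [zH, map_mul, phiH_x, phiH_y, X'_mul_Y']

lemma phiH_a (i : Fin (p + q)) :
    phiH p q (aH p q i) = DH p q (egen (wpq p q) i) := by
  rw [phiH, aH, mkHom_egen, embH]
  split_ifs with h
  · rw [AHfam, dif_pos (show (i:ℕ) < p from h)]
  · rw [AHfam, dif_neg (show ¬((i:ℕ) + 1 < p) by omega),
      dif_neg (show ¬((i:ℕ) + 1 = p) by omega),
      dif_pos (show (i:ℕ) + 1 < p + q + 1 by have := i.isLt; omega)]
    exact congrArg (DH p q) (congrArg (egen (wpq p q))
      (Fin.ext (show (i:ℕ) + 1 - 1 = (i:ℕ) by omega)))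

end Hyp2

noncomputable section Hyp3
variable (p q : ℕ)

/-- the scalar (diagonal) embedding as an ℝ-algebra hom. -/
def scalarA : Clpq p q →ₐ[ℝ] Matrix (Fin 2) (Fin 2) (Clpq p q) :=
  { Matrix.scalar (Fin 2) with
    commutes' := fun r => by
      ext a b
      simp [Matrix.scalar_apply, Matrix.algebraMap_matrix_apply, Matrix.diagonal_apply] }

lemma scalarA_apply (c : Clpq p q) : scalarA p q c = Matrix.scalar (Fin 2) c := rfl

lemma phiH_alphaH (c : Clpq p q) :
    phiH p q (alphaH p q c) = Matrix.scalar (Fin 2) c := by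
  have : (phiH p q).comp (alphaH p q) = scalarA p q := by
    apply hom_ext_egen
    intro i
    rw [AlgHom.comp_apply, alphaH, mkHom_egen, map_mul, phiH_z, phiH_a, DH_mul_Z, scalarA_apply]
  exact congrArg (fun f => f c) (congrArg DFunLike.coe this)

lemma phiH_E2 (i j : Fin 2) :
    phiH p q (E2 (xH p q) (zH p q) i j) = E2 (sigX' p q) (sigZ' p q) i j := by
  fin_cases i <;> fin_cases j <;>
    simp only [E2, Fin.zero_eta, Fin.mk_one, Fin.reduceEq, reduceIte, map_smul, map_add, map_sub,
      map_one, map_mul, phiH_x, phiH_z]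

lemma E2s_00 : E2 (sigX' p q) (sigZ' p q) 0 0 = !![1, 0; 0, 0] := by
  simp only [E2, Fin.reduceEq, reduceIte]
  ext a b
  fin_cases a <;> fin_cases b <;> simp [sigX', sigZ'] <;> module

lemma E2s_01 : E2 (sigX' p q) (sigZ' p q) 0 1 = !![0, 1; 0, 0] := by
  simp only [E2, Fin.reduceEq, reduceIte]
  ext a b
  fin_cases a <;> fin_cases b <;>
    simp [sigX', sigZ', Matrix.mul_apply, Fin.sum_univ_two] <;> module

lemma E2s_10 : E2 (sigX' p q) (sigZ' p q) 1 0 = !![0, 0; 1, 0] := by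
  simp only [E2, Fin.reduceEq, reduceIte]
  ext a b
  fin_cases a <;> fin_cases b <;>
    simp [sigX', sigZ', Matrix.mul_apply, Fin.sum_univ_two] <;> module

lemma E2s_11 : E2 (sigX' p q) (sigZ' p q) 1 1 = !![0, 0; 0, 1] := by
  simp only [E2, Fin.reduceEq, reduceIte]
  ext a b
  fin_cases a <;> fin_cases b <;> simp [sigX', sigZ'] <;> module

lemma scalar_E2_decomp (M : Matrix (Fin 2) (Fin 2) (Clpq p q)) :
    ∑ i, ∑ j, (Matrix.scalar (Fin 2) (M i j)) * E2 (sigX' p q) (sigZ' p q) i j = M := by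
  rw [Fin.sum_univ_two, Fin.sum_univ_two, Fin.sum_univ_two, E2s_00, E2s_01, E2s_10, E2s_11]
  ext a b
  fin_cases a <;> fin_cases b <;>
    simp [Matrix.mul_apply, Fin.sum_univ_two, Matrix.scalar_apply, Matrix.diagonal_apply]

def psiH : Matrix (Fin 2) (Fin 2) (Clpq p q) →ₐ[ℝ] Clpq (p+1) (q+1) :=
  unitsHom (alphaH p q) (E2 (xH p q) (zH p q))
    (E2_mul (xH_sq p q) (zH_sq p q) (zx_anti p q))
    (E2_sum (xH_sq p q) (zH_sq p q) (zx_anti p q))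
    (alphaH_E2_comm p q)

lemma psiH_DH (c : Clpq p q) : psiH p q (DH p q c) = alphaH p q c * zH p q := by
  rw [psiH, unitsHom_apply, Fin.sum_univ_two, Fin.sum_univ_two, Fin.sum_univ_two]
  have e00 : DH p q c 0 0 = c := rfl
  have e01 : DH p q c 0 1 = 0 := rfl
  have e10 : DH p q c 1 0 = 0 := rfl
  have e11 : DH p q c 1 1 = -c := rfl
  rw [e00, e01, e10, e11, map_zero, zero_mul, zero_mul, map_neg, neg_mul, add_zero, zero_add,
    ← sub_eq_add_neg, ← mul_sub, E2_diff (xH_sq p q) (zH_sq p q) (zx_anti p q)]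

lemma psiH_X (_h : True) : psiH p q (sigX' p q) = xH p q := by
  rw [psiH, unitsHom_apply, Fin.sum_univ_two, Fin.sum_univ_two, Fin.sum_univ_two]
  have e00 : sigX' p q 0 0 = 0 := rfl
  have e01 : sigX' p q 0 1 = 1 := rfl
  have e10 : sigX' p q 1 0 = 1 := rfl
  have e11 : sigX' p q 1 1 = 0 := rfl
  rw [e00, e01, e10, e11, map_zero, zero_mul, zero_mul, map_one, one_mul, one_mul, zero_add,
    add_zero]
  exact E2_offsum (xH_sq p q) (zH_sq p q) (zx_anti p q)

lemma psiH_Y (_h : True) : psiH p q (sigY' p q) = yH p q := by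
  rw [psiH, unitsHom_apply, Fin.sum_univ_two, Fin.sum_univ_two, Fin.sum_univ_two]
  have e00 : sigY' p q 0 0 = 0 := rfl
  have e01 : sigY' p q 0 1 = -1 := rfl
  have e10 : sigY' p q 1 0 = 1 := rfl
  have e11 : sigY' p q 1 1 = 0 := rfl
  rw [e00, e01, e10, e11, map_zero, zero_mul, zero_mul, map_one, one_mul, map_neg, map_one,
    neg_one_mul, zero_add, add_zero, ← sub_eq_neg_add,
    E2_offdiff (xH_sq p q) (zH_sq p q) (zx_anti p q), zH, push_sq (xH_sq p q)]

def equivH : Clpq (p+1) (q+1) ≃ₐ[ℝ] Matrix (Fin 2) (Fin 2) (Clpq p q) := by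
  refine AlgEquiv.ofAlgHom (phiH p q) (psiH p q) (AlgHom.ext fun M => ?_) (hom_ext_egen _ ?_)
  · rw [AlgHom.comp_apply, AlgHom.id_apply, psiH, unitsHom_apply]
    simp only [map_sum, map_mul, phiH_alphaH, phiH_E2]
    exact scalar_E2_decomp p q M
  · intro k
    rw [AlgHom.comp_apply, AlgHom.id_apply]
    show psiH p q (phiH p q (egen _ k)) = egen _ k
    rw [phiH, mkHom_egen]
    have hkb := k.isLt
    have hck : (k:ℕ) < p ∨ (k:ℕ) = p ∨ (p < (k:ℕ) ∧ (k:ℕ) < p+q+1) ∨ p+q+1 ≤ (k:ℕ) := by omega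
    rcases hck with h | h | h | h
    · rw [AHfam_lt p q h, psiH_DH, alphaH, mkHom_egen, mul_assoc, zH_sq, mul_one, aH]
      apply congrArg
      rw [embH, if_pos (show ((⟨(k:ℕ), by omega⟩ : Fin (p+q)) : ℕ) < p from h)]
    · rw [AHfam_eq p q h, psiH_X p q trivial, xH]
      exact congrArg _ (Fin.ext h.symm)
    · rw [AHfam_mid p q h.1 h.2, psiH_DH, alphaH, mkHom_egen, mul_assoc, zH_sq, mul_one, aH]
      apply congrArg
      rw [embH, if_neg (show ¬(((⟨(k:ℕ) - 1, by omega⟩ : Fin (p+q)) : ℕ) < p) by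
        simp only [Fin.val_mk]; omega)]
      exact Fin.ext (show (k:ℕ) - 1 + 1 = (k:ℕ) by omega)
    · rw [AHfam_top p q h, psiH_Y p q trivial, yH]
      exact congrArg _ (Fin.ext (show (k:ℕ) = p + q + 1 by omega)).symm

end Hyp3

noncomputable section Omega4
variable {B : Type} [Ring B] [Algebra ℝ B]
variable (u : Fin 4 → B)

def Om4 : B := u 0 * (u 1 * (u 2 * u 3))

variable {σ : ℝ} {u}
variable (hσ : σ * σ = 1)
variable (hsq : ∀ i, u i * u i = σ • 1)
variable (han : ∀ i j : Fin 4, i ≠ j → u i * u j = -(u j * u i))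

include hσ hsq han

lemma OmOm : Om4 u * Om4 u = 1 := by
  have p10 := push_anti (han 1 0 (by decide)); have p20 := push_anti (han 2 0 (by decide))
  have p21 := push_anti (han 2 1 (by decide)); have p30 := push_anti (han 3 0 (by decide))
  have p31 := push_anti (han 3 1 (by decide)); have p32 := push_anti (han 3 2 (by decide))
  have ps0 := push_sq_smul (hsq 0); have ps1 := push_sq_smul (hsq 1)
  have ps2 := push_sq_smul (hsq 2); have ps3 := push_sq_smul (hsq 3)
  simp only [Om4, mul_assoc, han 1 0 (by decide), han 2 0 (by decide), han 2 1 (by decide),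
    han 3 0 (by decide), han 3 1 (by decide), han 3 2 (by decide), p10, p20, p21, p30, p31, p32,
    hsq 0, hsq 1, hsq 2, hsq 3, ps0, ps1, ps2, ps3, mul_neg, neg_mul, neg_neg, mul_smul_comm,
    smul_mul_assoc, smul_smul, smul_neg, neg_smul, hσ, one_smul, mul_one, one_mul]

lemma sq_uOm (k : Fin 4) : (u k * Om4 u) * (u k * Om4 u) = (-σ) • 1 := by
  have p10 := push_anti (han 1 0 (by decide)); have p20 := push_anti (han 2 0 (by decide))
  have p21 := push_anti (han 2 1 (by decide)); have p30 := push_anti (han 3 0 (by decide))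
  have p31 := push_anti (han 3 1 (by decide)); have p32 := push_anti (han 3 2 (by decide))
  have ps0 := push_sq_smul (hsq 0); have ps1 := push_sq_smul (hsq 1)
  have ps2 := push_sq_smul (hsq 2); have ps3 := push_sq_smul (hsq 3)
  fin_cases k <;>
  simp only [Om4, Fin.zero_eta, Fin.mk_one, Fin.reduceFinMk, Fin.isValue, mul_assoc,
    han 1 0 (by decide), han 2 0 (by decide), han 2 1 (by decide),
    han 3 0 (by decide), han 3 1 (by decide), han 3 2 (by decide), p10, p20, p21, p30, p31, p32,
    hsq 0, hsq 1, hsq 2, hsq 3, ps0, ps1, ps2, ps3, mul_neg, neg_mul, neg_neg, mul_smul_comm,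
    smul_mul_assoc, smul_smul, smul_neg, neg_smul, hσ, one_smul, mul_one, one_mul]

lemma anti_uOm (k l : Fin 4) (hkl : k ≠ l) :
    (u k * Om4 u) * (u l * Om4 u) = -((u l * Om4 u) * (u k * Om4 u)) := by
  have p10 := push_anti (han 1 0 (by decide)); have p20 := push_anti (han 2 0 (by decide))
  have p21 := push_anti (han 2 1 (by decide)); have p30 := push_anti (han 3 0 (by decide))
  have p31 := push_anti (han 3 1 (by decide)); have p32 := push_anti (han 3 2 (by decide))
  have ps0 := push_sq_smul (hsq 0); have ps1 := push_sq_smul (hsq 1)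
  have ps2 := push_sq_smul (hsq 2); have ps3 := push_sq_smul (hsq 3)
  fin_cases k <;> fin_cases l <;> (try exact absurd rfl hkl) <;>
  simp only [Om4, Fin.zero_eta, Fin.mk_one, Fin.reduceFinMk, Fin.isValue, mul_assoc,
    han 1 0 (by decide), han 2 0 (by decide), han 2 1 (by decide),
    han 3 0 (by decide), han 3 1 (by decide), han 3 2 (by decide), p10, p20, p21, p30, p31, p32,
    hsq 0, hsq 1, hsq 2, hsq 3, ps0, ps1, ps2, ps3, mul_neg, neg_mul, neg_neg, mul_smul_comm,
    smul_mul_assoc, smul_smul, smul_neg, neg_smul, hσ, one_smul, mul_one, one_mul]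

omit hσ hsq han in
lemma g_anti_uOm (g : B) (hg : ∀ i, g * u i = -(u i * g)) (k : Fin 4) :
    g * (u k * Om4 u) = -((u k * Om4 u) * g) := by
  have pg0 := push_anti (hg 0); have pg1 := push_anti (hg 1)
  have pg2 := push_anti (hg 2); have pg3 := push_anti (hg 3)
  fin_cases k <;>
  simp only [Om4, Fin.zero_eta, Fin.mk_one, Fin.reduceFinMk, Fin.isValue, mul_assoc,
    hg 0, hg 1, hg 2, hg 3, pg0, pg1, pg2, pg3, mul_neg, neg_mul, neg_neg, mul_smul_comm,
    smul_mul_assoc, smul_smul, smul_neg, neg_smul, one_smul, mul_one, one_mul]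

lemma quad_uOm :
    (u 0 * Om4 u) * ((u 1 * Om4 u) * ((u 2 * Om4 u) * (u 3 * Om4 u))) = Om4 u := by
  have p10 := push_anti (han 1 0 (by decide)); have p20 := push_anti (han 2 0 (by decide))
  have p21 := push_anti (han 2 1 (by decide)); have p30 := push_anti (han 3 0 (by decide))
  have p31 := push_anti (han 3 1 (by decide)); have p32 := push_anti (han 3 2 (by decide))
  have ps0 := push_sq_smul (hsq 0); have ps1 := push_sq_smul (hsq 1)
  have ps2 := push_sq_smul (hsq 2); have ps3 := push_sq_smul (hsq 3)
  simp only [Om4, mul_assoc, han 1 0 (by decide), han 2 0 (by decide), han 2 1 (by decide),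
    han 3 0 (by decide), han 3 1 (by decide), han 3 2 (by decide), p10, p20, p21, p30, p31, p32,
    hsq 0, hsq 1, hsq 2, hsq 3, ps0, ps1, ps2, ps3, mul_neg, neg_mul, neg_neg, mul_smul_comm,
    smul_mul_assoc, smul_smul, smul_neg, neg_smul, hσ, one_smul, mul_one, one_mul]

lemma uOm_Om (k : Fin 4) : (u k * Om4 u) * Om4 u = u k := by
  have p10 := push_anti (han 1 0 (by decide)); have p20 := push_anti (han 2 0 (by decide))
  have p21 := push_anti (han 2 1 (by decide)); have p30 := push_anti (han 3 0 (by decide))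
  have p31 := push_anti (han 3 1 (by decide)); have p32 := push_anti (han 3 2 (by decide))
  have ps0 := push_sq_smul (hsq 0); have ps1 := push_sq_smul (hsq 1)
  have ps2 := push_sq_smul (hsq 2); have ps3 := push_sq_smul (hsq 3)
  fin_cases k <;>
  simp only [Om4, Fin.zero_eta, Fin.mk_one, Fin.reduceFinMk, Fin.isValue, mul_assoc,
    han 1 0 (by decide), han 2 0 (by decide), han 2 1 (by decide),
    han 3 0 (by decide), han 3 1 (by decide), han 3 2 (by decide), p10, p20, p21, p30, p31, p32,
    hsq 0, hsq 1, hsq 2, hsq 3, ps0, ps1, ps2, ps3, mul_neg, neg_mul, neg_neg, mul_smul_comm,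
    smul_mul_assoc, smul_smul, smul_neg, neg_smul, hσ, one_smul, mul_one, one_mul]

end Omega4

noncomputable section Swap4
variable (p q : ℕ)

-- the four distinguished negative generators of the target Cl(p, q+4)
def cT (j : Fin 4) : Clpq p (q+4) := egen _ ⟨p + q + (j:ℕ), by have := j.isLt; omega⟩
def OmT : Clpq p (q+4) := Om4 (cT p q)

lemma hσneg : (-1:ℝ) * (-1) = 1 := by norm_num
lemma hσpos : (1:ℝ) * (1:ℝ) = 1 := by norm_num

lemma cT_sq (j : Fin 4) : cT p q j * cT p q j = (-1:ℝ) • 1 := by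
  rw [cT, egen_sq, show wpq p (q+4) ⟨p + q + (j:ℕ), by have := j.isLt; omega⟩ = -1 by
    simp only [wpq]; rw [if_neg]; omega, Algebra.algebraMap_eq_smul_one]

lemma cT_anti (i j : Fin 4) (h : i ≠ j) : cT p q i * cT p q j = -(cT p q j * cT p q i) := by
  rw [cT, cT]
  exact egen_anticomm _ (by
    simp only [ne_eq, Fin.mk.injEq]
    have : (i:ℕ) ≠ (j:ℕ) := fun hh => h (Fin.ext hh)
    omega)

-- the four distinguished positive generators of the source Cl(p+4, q)
def aS (j : Fin 4) : Clpq (p+4) q := egen _ ⟨p + (j:ℕ), by have := j.isLt; omega⟩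
def OmS : Clpq (p+4) q := Om4 (aS p q)

lemma aS_sq (j : Fin 4) : aS p q j * aS p q j = (1:ℝ) • 1 := by
  rw [aS, egen_sq, show wpq (p+4) q ⟨p + (j:ℕ), by have := j.isLt; omega⟩ = 1 by
    simp only [wpq]; rw [if_pos]; have := j.isLt; omega, Algebra.algebraMap_eq_smul_one]

lemma aS_anti (i j : Fin 4) (h : i ≠ j) : aS p q i * aS p q j = -(aS p q j * aS p q i) := by
  rw [aS, aS]
  exact egen_anticomm _ (by
    simp only [ne_eq, Fin.mk.injEq]
    have : (i:ℕ) ≠ (j:ℕ) := fun hh => h (Fin.ext hh)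
    omega)

/-- generator images for `Cl(p+4,q) → Cl(p,q+4)` -/
def ASfam (k : Fin ((p+4) + q)) : Clpq p (q+4) :=
  if h1 : (k:ℕ) < p then egen _ ⟨(k:ℕ), by omega⟩
  else if h2 : (k:ℕ) < p + 4 then cT p q ⟨(k:ℕ) - p, by omega⟩ * OmT p q
  else egen _ ⟨(k:ℕ) - 4, by omega⟩

lemma ASfam_lt {k : Fin ((p+4) + q)} (h : (k:ℕ) < p) :
    ASfam p q k = egen _ ⟨(k:ℕ), by omega⟩ := by rw [ASfam, dif_pos h]

lemma ASfam_mid {k : Fin ((p+4) + q)} (h1 : p ≤ (k:ℕ)) (h2 : (k:ℕ) < p + 4) :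
    ASfam p q k = cT p q ⟨(k:ℕ) - p, by omega⟩ * OmT p q := by
  rw [ASfam, dif_neg (by omega), dif_pos h2]

lemma ASfam_top {k : Fin ((p+4) + q)} (h : p + 4 ≤ (k:ℕ)) :
    ASfam p q k = egen _ ⟨(k:ℕ) - 4, by omega⟩ := by
  rw [ASfam, dif_neg (by omega), dif_neg (by omega)]

/-- generator images for `Cl(p,q+4) → Cl(p+4,q)` -/
def BSfam (k : Fin (p + (q+4))) : Clpq (p+4) q :=
  if h1 : (k:ℕ) < p then egen _ ⟨(k:ℕ), by omega⟩
  else if h2 : (k:ℕ) < p + q then egen _ ⟨(k:ℕ) + 4, by omega⟩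
  else aS p q ⟨(k:ℕ) - (p + q), by omega⟩ * OmS p q

lemma BSfam_lt {k : Fin (p + (q+4))} (h : (k:ℕ) < p) :
    BSfam p q k = egen _ ⟨(k:ℕ), by omega⟩ := by rw [BSfam, dif_pos h]

lemma BSfam_mid {k : Fin (p + (q+4))} (h1 : p ≤ (k:ℕ)) (h2 : (k:ℕ) < p + q) :
    BSfam p q k = egen _ ⟨(k:ℕ) + 4, by omega⟩ := by
  rw [BSfam, dif_neg (by omega), dif_pos h2]

lemma BSfam_top {k : Fin (p + (q+4))} (h : p + q ≤ (k:ℕ)) :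
    BSfam p q k = aS p q ⟨(k:ℕ) - (p + q), by omega⟩ * OmS p q := by
  rw [BSfam, dif_neg (by omega), dif_neg (by omega)]

lemma AS_sq (k : Fin ((p+4) + q)) :
    ASfam p q k * ASfam p q k = algebraMap ℝ _ (wpq (p+4) q k) := by
  have hkb := k.isLt
  rcases (by omega : (k:ℕ) < p ∨ (p ≤ (k:ℕ) ∧ (k:ℕ) < p + 4) ∨ p + 4 ≤ (k:ℕ)) with h | h | h
  · rw [ASfam_lt p q h, egen_sq]
    congr 1
    simp only [wpq, Fin.val_mk]
    split_ifs <;> first | rfl | omega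
  · rw [ASfam_mid p q h.1 h.2, OmT, sq_uOm (hσneg) (cT_sq p q) (cT_anti p q), neg_neg, one_smul,
      show wpq (p+4) q k = 1 by simp only [wpq]; rw [if_pos]; omega, map_one]
  · rw [ASfam_top p q h, egen_sq]
    congr 1
    simp only [wpq, Fin.val_mk]
    split_ifs <;> first | rfl | omega

lemma BS_sq (k : Fin (p + (q+4))) :
    BSfam p q k * BSfam p q k = algebraMap ℝ _ (wpq p (q+4) k) := by
  have hkb := k.isLt
  rcases (by omega : (k:ℕ) < p ∨ (p ≤ (k:ℕ) ∧ (k:ℕ) < p + q) ∨ p + q ≤ (k:ℕ)) with h | h | h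
  · rw [BSfam_lt p q h, egen_sq]
    congr 1
    simp only [wpq, Fin.val_mk]
    split_ifs <;> first | rfl | omega
  · rw [BSfam_mid p q h.1 h.2, egen_sq]
    congr 1
    simp only [wpq, Fin.val_mk]
    split_ifs <;> first | rfl | omega
  · rw [BSfam_top p q h, OmS, sq_uOm (hσpos) (aS_sq p q) (aS_anti p q),
      show wpq p (q+4) k = -1 by simp only [wpq]; rw [if_neg]; omega, map_neg, map_one,
      neg_smul, one_smul]

lemma AS_anti (k l : Fin ((p+4) + q)) (hkl : k ≠ l) :
    ASfam p q k * ASfam p q l = -(ASfam p q l * ASfam p q k) := by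
  have hkl' : (k : ℕ) ≠ (l : ℕ) := fun h => hkl (Fin.ext h)
  have hkb := k.isLt
  have hlb := l.isLt
  have hganti : ∀ (v : Fin (p + q + 4)) (_ : (v : ℕ) < p + q),
      ∀ i : Fin 4, egen (wpq p (q+4)) ⟨(v:ℕ), by omega⟩ * cT p q i
        = -(cT p q i * egen (wpq p (q+4)) ⟨(v:ℕ), by omega⟩) := by
    intro v hv i
    rw [cT]
    exact egen_anticomm _ (by simp only [ne_eq, Fin.mk.injEq]; omega)
  rcases (by omega : (k:ℕ) < p ∨ (p ≤ (k:ℕ) ∧ (k:ℕ) < p + 4) ∨ p + 4 ≤ (k:ℕ)) with h | h | h <;>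
    rcases (by omega : (l:ℕ) < p ∨ (p ≤ (l:ℕ) ∧ (l:ℕ) < p + 4) ∨ p + 4 ≤ (l:ℕ)) with g | g | g
  · rw [ASfam_lt p q h, ASfam_lt p q g]
    exact egen_anticomm _ (by simp only [ne_eq, Fin.mk.injEq]; omega)
  · rw [ASfam_lt p q h, ASfam_mid p q g.1 g.2]
    exact g_anti_uOm _
      (hganti ⟨(k:ℕ), by omega⟩ (by simp only [Fin.val_mk]; omega)) _
  · rw [ASfam_lt p q h, ASfam_top p q g]
    exact egen_anticomm _ (by simp only [ne_eq, Fin.mk.injEq]; omega)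
  · rw [ASfam_mid p q h.1 h.2, ASfam_lt p q g]
    exact anti_symm (g_anti_uOm _
      (hganti ⟨(l:ℕ), by omega⟩ (by simp only [Fin.val_mk]; omega)) _)
  · rw [ASfam_mid p q h.1 h.2, ASfam_mid p q g.1 g.2]
    exact anti_uOm (hσneg) (cT_sq p q) (cT_anti p q) _ _
      (by simp only [ne_eq, Fin.mk.injEq]; omega)
  · rw [ASfam_mid p q h.1 h.2, ASfam_top p q g]
    exact anti_symm (g_anti_uOm _
      (hganti ⟨(l:ℕ) - 4, by omega⟩ (by simp only [Fin.val_mk]; omega)) _)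
  · rw [ASfam_top p q h, ASfam_lt p q g]
    exact egen_anticomm _ (by simp only [ne_eq, Fin.mk.injEq]; omega)
  · rw [ASfam_top p q h, ASfam_mid p q g.1 g.2]
    exact g_anti_uOm _
      (hganti ⟨(k:ℕ) - 4, by omega⟩ (by simp only [Fin.val_mk]; omega)) _
  · rw [ASfam_top p q h, ASfam_top p q g]
    exact egen_anticomm _ (by simp only [ne_eq, Fin.mk.injEq]; omega)

lemma BS_anti (k l : Fin (p + (q+4))) (hkl : k ≠ l) :
    BSfam p q k * BSfam p q l = -(BSfam p q l * BSfam p q k) := by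
  have hkl' : (k : ℕ) ≠ (l : ℕ) := fun h => hkl (Fin.ext h)
  have hkb := k.isLt
  have hlb := l.isLt
  have hganti : ∀ (v : Fin (p + 4 + q)) (_ : (v : ℕ) < p ∨ p + 4 ≤ (v:ℕ)),
      ∀ i : Fin 4, egen (wpq (p+4) q) ⟨(v:ℕ), by omega⟩ * aS p q i
        = -(aS p q i * egen (wpq (p+4) q) ⟨(v:ℕ), by omega⟩) := by
    intro v hv i
    rw [aS]
    have := i.isLt
    exact egen_anticomm _ (by simp only [ne_eq, Fin.mk.injEq]; omega)
  rcases (by omega : (k:ℕ) < p ∨ (p ≤ (k:ℕ) ∧ (k:ℕ) < p + q) ∨ p + q ≤ (k:ℕ)) with h | h | h <;>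
    rcases (by omega : (l:ℕ) < p ∨ (p ≤ (l:ℕ) ∧ (l:ℕ) < p + q) ∨ p + q ≤ (l:ℕ)) with g | g | g
  · rw [BSfam_lt p q h, BSfam_lt p q g]
    exact egen_anticomm _ (by simp only [ne_eq, Fin.mk.injEq]; omega)
  · rw [BSfam_lt p q h, BSfam_mid p q g.1 g.2]
    exact egen_anticomm _ (by simp only [ne_eq, Fin.mk.injEq]; omega)
  · rw [BSfam_lt p q h, BSfam_top p q g]
    exact g_anti_uOm _
      (hganti ⟨(k:ℕ), by omega⟩ (by simp only [Fin.val_mk]; omega) ) _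
  · rw [BSfam_mid p q h.1 h.2, BSfam_lt p q g]
    exact egen_anticomm _ (by simp only [ne_eq, Fin.mk.injEq]; omega)
  · rw [BSfam_mid p q h.1 h.2, BSfam_mid p q g.1 g.2]
    exact egen_anticomm _ (by simp only [ne_eq, Fin.mk.injEq]; omega)
  · rw [BSfam_mid p q h.1 h.2, BSfam_top p q g]
    exact g_anti_uOm _
      (hganti ⟨(k:ℕ) + 4, by omega⟩ (by simp only [Fin.val_mk]; omega)) _
  · rw [BSfam_top p q h, BSfam_lt p q g]
    exact anti_symm (g_anti_uOm _
      (hganti ⟨(l:ℕ), by omega⟩ (by simp only [Fin.val_mk]; omega)) _)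
  · rw [BSfam_top p q h, BSfam_mid p q g.1 g.2]
    exact anti_symm (g_anti_uOm _
      (hganti ⟨(l:ℕ) + 4, by omega⟩ (by simp only [Fin.val_mk]; omega)) _)
  · rw [BSfam_top p q h, BSfam_top p q g]
    exact anti_uOm (hσpos) (aS_sq p q) (aS_anti p q) _ _
      (by simp only [ne_eq, Fin.mk.injEq]; omega)

def phiS : Clpq (p+4) q →ₐ[ℝ] Clpq p (q+4) :=
  mkHom (wpq (p+4) q) (ASfam p q) (AS_sq p q) (AS_anti p q)

def psiS : Clpq p (q+4) →ₐ[ℝ] Clpq (p+4) q :=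
  mkHom (wpq p (q+4)) (BSfam p q) (BS_sq p q) (BS_anti p q)

lemma phiS_aS (j : Fin 4) : phiS p q (aS p q j) = cT p q j * OmT p q := by
  have hj := j.isLt
  rw [phiS, aS, mkHom_egen,
    ASfam_mid p q (by simp only [Fin.val_mk]; omega) (by simp only [Fin.val_mk]; omega)]
  congr 2
  exact Fin.ext (show p + (j:ℕ) - p = (j:ℕ) by omega)

lemma psiS_cT (j : Fin 4) : psiS p q (cT p q j) = aS p q j * OmS p q := by
  rw [psiS, cT, mkHom_egen, BSfam_top p q (by simp only [Fin.val_mk]; omega)]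
  congr 2
  exact Fin.ext (show p + q + (j:ℕ) - (p + q) = (j:ℕ) by omega)

lemma phiS_OmS : phiS p q (OmS p q) = OmT p q := by
  rw [OmS, Om4, map_mul, map_mul, map_mul, phiS_aS, phiS_aS, phiS_aS, phiS_aS]
  exact quad_uOm (hσneg) (cT_sq p q) (cT_anti p q)

lemma psiS_OmT : psiS p q (OmT p q) = OmS p q := by
  rw [OmT, Om4, map_mul, map_mul, map_mul, psiS_cT, psiS_cT, psiS_cT, psiS_cT]
  exact quad_uOm (hσpos) (aS_sq p q) (aS_anti p q)

def equivS : Clpq (p+4) q ≃ₐ[ℝ] Clpq p (q+4) := by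
  refine AlgEquiv.ofAlgHom (phiS p q) (psiS p q) (hom_ext_egen _ ?_) (hom_ext_egen _ ?_)
  · intro k
    rw [AlgHom.comp_apply, AlgHom.id_apply, psiS, mkHom_egen]
    have hkb := k.isLt
    rcases (by omega : (k:ℕ) < p ∨ (p ≤ (k:ℕ) ∧ (k:ℕ) < p + q) ∨ p + q ≤ (k:ℕ)) with h | h | h
    · rw [BSfam_lt p q h, phiS, mkHom_egen, ASfam_lt p q (by simp only [Fin.val_mk]; omega)]
    · rw [BSfam_mid p q h.1 h.2, phiS, mkHom_egen,
        ASfam_top p q (by simp only [Fin.val_mk]; omega)]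
      exact congrArg _ (Fin.ext (show (k:ℕ) + 4 - 4 = (k:ℕ) by omega))
    · rw [BSfam_top p q h, map_mul, phiS_aS, phiS_OmS, OmT,
        uOm_Om (hσneg) (cT_sq p q) (cT_anti p q), cT]
      exact congrArg _ (Fin.ext (show p + q + ((k:ℕ) - (p + q)) = (k:ℕ) by omega))
  · intro k
    rw [AlgHom.comp_apply, AlgHom.id_apply, phiS, mkHom_egen]
    have hkb := k.isLt
    rcases (by omega : (k:ℕ) < p ∨ (p ≤ (k:ℕ) ∧ (k:ℕ) < p + 4) ∨ p + 4 ≤ (k:ℕ)) with h | h | h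
    · rw [ASfam_lt p q h, psiS, mkHom_egen, BSfam_lt p q (by simp only [Fin.val_mk]; omega)]
    · rw [ASfam_mid p q h.1 h.2, map_mul, psiS_cT, psiS_OmT, OmS,
        uOm_Om (hσpos) (aS_sq p q) (aS_anti p q), aS]
      exact congrArg _ (Fin.ext (show p + ((k:ℕ) - p) = (k:ℕ) by omega))
    · rw [ASfam_top p q h, psiS, mkHom_egen,
        BSfam_mid p q (by simp only [Fin.val_mk]; omega) (by simp only [Fin.val_mk]; omega)]
      exact congrArg _ (Fin.ext (show (k:ℕ) - 4 + 4 = (k:ℕ) by omega))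

end Swap4

noncomputable section Assembly

/-- collapsing 2×2 matrices over 2^k×2^k matrices -/
def collapse (k : ℕ) :
    Matrix (Fin 2) (Fin 2) (Matrix (Fin (2^k)) (Fin (2^k)) ℝ) ≃ₐ[ℝ]
      Matrix (Fin (2^(k+1))) (Fin (2^(k+1))) ℝ :=
  (Matrix.compAlgEquiv (Fin 2) (Fin (2^k)) ℝ ℝ).trans
    (Matrix.reindexAlgEquiv ℝ ℝ
      (finProdFinEquiv.trans (finCongr (by rw [pow_succ, Nat.mul_comm]))))

lemma main (N : ℕ) : ∀ p q n : ℕ, p + q ≤ N → p + q = 2*n →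
    ((8:ℤ) ∣ 1 - ((p:ℤ) - q + 1) ∨ (8:ℤ) ∣ 3 - ((p:ℤ) - q + 1)) →
    Nonempty (Clpq p q ≃ₐ[ℝ] Matrix (Fin (2^n)) (Fin (2^n)) ℝ) := by
  induction N with
  | zero =>
    intro p q n h1 h2 _h3
    obtain rfl : p = 0 := by omega
    obtain rfl : q = 0 := by omega
    obtain rfl : n = 0 := by omega
    exact ⟨(equiv00.trans mat1equiv.symm).trans
      (Matrix.reindexAlgEquiv ℝ ℝ (finCongr (by norm_num)))⟩
  | succ N ih =>
    intro p q n h1 h2 h3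
    by_cases hp0 : p = 0
    · subst hp0
      by_cases hq0 : q = 0
      · subst hq0
        obtain rfl : n = 0 := by omega
        exact ⟨(equiv00.trans mat1equiv.symm).trans
          (Matrix.reindexAlgEquiv ℝ ℝ (finCongr (by norm_num)))⟩
      · -- p = 0, q ≥ 1 : then q ≡ 0 or 6 mod 8, so q ≥ 6
        have hq6 : 6 ≤ q := by
          rcases h3 with h | h <;> [skip; skip] <;>
            · push_cast at h
              omega
        obtain ⟨r, rfl⟩ : ∃ r, q = r + 5 := ⟨q - 5, by omega⟩
        obtain ⟨m, rfl⟩ : ∃ m, n = m + 1 := ⟨n - 1, by omega⟩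
        have cond : (8:ℤ) ∣ 1 - ((3:ℤ) - r + 1) ∨ (8:ℤ) ∣ 3 - ((3:ℤ) - r + 1) := by
          rcases h3 with h | h <;> push_cast at h <;> [left; right] <;> omega
        obtain ⟨e⟩ := ih 3 r m (by omega) (by omega) cond
        exact ⟨((equivS 0 (r+1)).symm.trans (equivH 3 r)).trans
          ((e.mapMatrix).trans (collapse m))⟩
    · by_cases hq0 : q = 0
      · subst hq0
        by_cases hp2 : p = 2
        · subst hp2
          obtain rfl : n = 1 := by omega
          exact ⟨equiv20.trans (Matrix.reindexAlgEquiv ℝ ℝ (finCongr (by norm_num)))⟩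
        · have hp8 : 8 ≤ p := by
            rcases h3 with h | h <;>
              · push_cast at h
                omega
          obtain ⟨r, rfl⟩ : ∃ r, p = r + 5 := ⟨p - 5, by omega⟩
          obtain ⟨m, rfl⟩ : ∃ m, n = m + 1 := ⟨n - 1, by omega⟩
          have cond : (8:ℤ) ∣ 1 - ((r:ℤ) - 3 + 1) ∨ (8:ℤ) ∣ 3 - ((r:ℤ) - 3 + 1) := by
            rcases h3 with h | h <;> push_cast at h <;> [left; right] <;> omega
          obtain ⟨e⟩ := ih r 3 m (by omega) (by omega) cond
          exact ⟨((equivS (r+1) 0).trans (equivH r 3)).trans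
            ((e.mapMatrix).trans (collapse m))⟩
      · -- p ≥ 1, q ≥ 1
        obtain ⟨p', rfl⟩ : ∃ p', p = p' + 1 := ⟨p - 1, by omega⟩
        obtain ⟨q', rfl⟩ : ∃ q', q = q' + 1 := ⟨q - 1, by omega⟩
        obtain ⟨m, rfl⟩ : ∃ m, n = m + 1 := ⟨n - 1, by omega⟩
        have cond : (8:ℤ) ∣ 1 - ((p':ℤ) - q' + 1) ∨ (8:ℤ) ∣ 3 - ((p':ℤ) - q' + 1) := by
          rcases h3 with h | h <;> push_cast at h <;> [left; right] <;> omega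
        obtain ⟨e⟩ := ih p' q' m (by omega) (by omega) cond
        exact ⟨(equivH p' q').trans ((e.mapMatrix).trans (collapse m))⟩

end Assembly

theorem clifford_iso_matrix_real (p q n : ℕ) (h : p + q = 2 * n)
    (hc : ((p : ℤ) - q + 1) ≡ 1 [ZMOD 8] ∨ ((p : ℤ) - q + 1) ≡ 3 [ZMOD 8]) :
    Nonempty (CliffordAlgebra (Qpq p q) ≃ₐ[ℝ] Matrix (Fin (2 ^ n)) (Fin (2 ^ n)) ℝ) := by
  have hc' : (8:ℤ) ∣ 1 - ((p:ℤ) - q + 1) ∨ (8:ℤ) ∣ 3 - ((p:ℤ) - q + 1) := by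
    rcases hc with h' | h'
    · exact Or.inl h'.dvd
    · exact Or.inr h'.dvd
  obtain ⟨e⟩ := main (p + q) p q n le_rfl h hc'
  exact ⟨e⟩
end

section
/- Let p, q, n be natural numbers with p + q = 2n + 1 and with p − q + 1 congruent to 2 modulo 8 (as integers). Then the real Clifford algebra Cl_{p,q}(ℝ) is isomorphic, as an ℝ-algebra, to the product algebra M_{2^n}(ℝ) × M_{2^n}(ℝ). -/
/-!
`Cl_{p,q}(ℝ)` is generated by `p + q` anticommuting elements squaring to `±1`, subject to no
further relations. Such a family is first built in `M_{2^n}(ℝ)` by Kronecker products with the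
`2 × 2` matrices `X, Y, Z`: from signature `(p, q)` one gets `(p + 1, q + 1)` and `(q + 2, p)` in
twice the size, and `(q, p + 6)` in eight times the size, starting from `(1, 0)` in `M_1(ℝ)`;
these three steps reach every `(p, q)` with `p + q = 2n + 1` and `p - q ≡ 1 mod 8`.

Sending each generator `γ` to `(γ, -γ)` gives an algebra map `Cl_{p,q} → M × M`. The ordered
products of distinct generators are orthogonal for the trace form `tr (x * y)`: odd products have
trace zero because of the sign in the second factor, and any other product anticommutes with
some generator. So these `2^(p+q) = dim (M × M)` products are linearly independent, the map is
onto, and it is an isomorphism because `dim Cl_{p,q} = 2^(p+q)` as well.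
-/

open Matrix
open scoped Kronecker

namespace Matrix

theorem neg_kronecker {R l m n p : Type*} [Mul R] [HasDistribNeg R] (a : Matrix l m R)
    (b : Matrix n p R) : (-a) ⊗ₖ b = -(a ⊗ₖ b) := by
  ext; simp [neg_mul]

theorem kronecker_neg {R l m n p : Type*} [Mul R] [HasDistribNeg R] (a : Matrix l m R)
    (b : Matrix n p R) : a ⊗ₖ (-b) = -(a ⊗ₖ b) := by
  ext; simp [mul_neg]

theorem algebraMap_kronecker_algebraMap {R m n : Type*} [Fintype m] [Fintype n] [DecidableEq m]
    [DecidableEq n] [CommRing R] (a b : R) :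
    algebraMap R (Matrix m m R) a ⊗ₖ algebraMap R (Matrix n n R) b =
      algebraMap R (Matrix (m × n) (m × n) R) (a * b) := by
  simp only [Algebra.algebraMap_eq_smul_one, smul_kronecker, kronecker_smul, one_kronecker_one,
    smul_smul, mul_comm]

end Matrix

theorem Finset.sum_mul_sum_self_of_pairwise_anticomm {ι A : Type*} [NonUnitalNonAssocRing A]
    (s : Finset ι) (a : ι → A) (h : Pairwise fun i j => a i * a j = -(a j * a i)) :
    (∑ i ∈ s, a i) * ∑ i ∈ s, a i = ∑ i ∈ s, a i * a i := by
  classical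
  induction s using Finset.induction_on with
  | empty => simp
  | insert x s hx ih =>
    have hcross : a x * ∑ i ∈ s, a i + (∑ i ∈ s, a i) * a x = 0 := by
      rw [Finset.mul_sum, Finset.sum_mul, ← Finset.sum_add_distrib]
      refine Finset.sum_eq_zero fun i hi => ?_
      rw [h (ne_of_mem_of_not_mem hi hx).symm, neg_add_cancel]
    rw [Finset.sum_insert hx, Finset.sum_insert hx, ← ih, add_mul, mul_add, mul_add,
      ← add_assoc, add_assoc (a x * a x), hcross, add_zero]

theorem LinearMap.eq_zero_of_mul_eq_neg_mul {K A : Type*} [Field K] [NeZero (2 : K)] [Ring A]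
    [Algebra K A] (τ : A →ₗ[K] K) (hτ : ∀ x y, τ (x * y) = τ (y * x)) {a x : A} {c : K}
    (hc : c ≠ 0) (ha : a * a = algebraMap K A c) (hax : a * x = -(x * a)) : τ x = 0 := by
  have hscalar : τ (x * (a * a)) = c * τ x := by
    rw [ha, ← Algebra.commutes, ← Algebra.smul_def, map_smul, smul_eq_mul]
  have hneg : τ (x * (a * a)) = -τ (x * (a * a)) :=
    calc τ (x * (a * a)) = τ (a * (x * a)) := by rw [← mul_assoc, hτ]
      _ = -τ (x * (a * a)) := by rw [← mul_assoc, hax, neg_mul, map_neg, mul_assoc]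
  rw [eq_neg_iff_add_eq_zero, ← two_mul, hscalar, mul_eq_zero, mul_eq_zero] at hneg
  exact (hneg.resolve_left two_ne_zero).resolve_left hc

theorem List.prod_map_prodMk_neg {ι K A : Type*} [CommRing K] [Ring A] [Algebra K A]
    (γ : ι → A) (w : List ι) :
    (w.map fun i => (γ i, -γ i)).prod = ((w.map γ).prod, (-1 : K) ^ w.length • (w.map γ).prod) := by
  induction w with
  | nil => simp [Prod.one_eq_mk]
  | cons i w ih => simp [ih, pow_succ']

section CliffordDimension

variable {K M : Type*} [Field K] [Invertible (2 : K)] [AddCommGroup M] [Module K M]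
  [FiniteDimensional K M] (Q : QuadraticForm K M)

instance CliffordAlgebra.instModuleFinite : Module.Finite K (CliffordAlgebra Q) :=
  have := Module.Finite.of_basis (Module.finBasis K M).ExteriorAlgebra
  Module.Finite.equiv (CliffordAlgebra.equivExterior Q).symm

theorem CliffordAlgebra.finrank_eq_two_pow :
    Module.finrank K (CliffordAlgebra Q) = 2 ^ Module.finrank K M := by
  rw [(CliffordAlgebra.equivExterior Q).finrank_eq,
    Module.finrank_eq_card_basis (Module.finBasis K M).ExteriorAlgebra, Fintype.card_finset,
    Fintype.card_fin]

end CliffordDimension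

/-- The relations satisfied by the images of the standard basis vectors under an algebra map out
of the Clifford algebra of `QuadraticMap.weightedSumSquares R ε`. -/
structure IsCliffordFamily {ι R A : Type*} [CommRing R] [Ring A] [Algebra R A]
    (γ : ι → A) (ε : ι → R) : Prop where
  anticomm : Pairwise fun i j => γ i * γ j = -(γ j * γ i)
  mul_self : ∀ i, γ i * γ i = algebraMap R A (ε i)

def orderedProd {ι A : Type*} [LinearOrder ι] [Monoid A] (γ : ι → A) (s : Finset ι) : A :=
  (s.sort.map γ).prod

namespace IsCliffordFamily

section CommRing

variable {ι κ R A B : Type*} [CommRing R] [Ring A] [Algebra R A] [Ring B] [Algebra R B]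
  {γ : ι → A} {ε : ι → R}

theorem map (h : IsCliffordFamily γ ε) (f : A →ₐ[R] B) : IsCliffordFamily (f ∘ γ) ε where
  anticomm _ _ hij := by simp only [Function.comp_apply, ← map_mul, h.anticomm hij, map_neg]
  mul_self i := by simp only [Function.comp_apply, ← map_mul, h.mul_self, AlgHom.commutes]

theorem comp (h : IsCliffordFamily γ ε) {e : κ → ι} (he : e.Injective) :
    IsCliffordFamily (γ ∘ e) (ε ∘ e) where
  anticomm _ _ hij := h.anticomm (he.ne hij)
  mul_self i := h.mul_self (e i)

theorem neg (h : IsCliffordFamily γ ε) : IsCliffordFamily (-γ) ε where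
  anticomm _ _ hij := by simp only [Pi.neg_apply, neg_mul_neg, h.anticomm hij]
  mul_self i := by simp only [Pi.neg_apply, neg_mul_neg, h.mul_self]

theorem prod {γ' : ι → B} (h : IsCliffordFamily γ ε) (h' : IsCliffordFamily γ' ε) :
    IsCliffordFamily (fun i => (γ i, γ' i)) ε where
  anticomm _ _ hij := Prod.ext (h.anticomm hij) (h'.anticomm hij)
  mul_self i := Prod.ext (h.mul_self i) (h'.mul_self i)

theorem kronecker {m n : Type*} [Fintype m] [Fintype n] [DecidableEq m] [DecidableEq n]
    {δ : κ → Matrix m m R} {η : κ → R} (hδ : IsCliffordFamily δ η) {ω : Matrix m m R} {c : R}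
    (hω : ω * ω = algebraMap R _ c) (hδω : ∀ k, δ k * ω = -(ω * δ k))
    {γ : ι → Matrix n n R} (hγ : IsCliffordFamily γ ε) :
    IsCliffordFamily (Sum.elim (fun k => δ k ⊗ₖ (1 : Matrix n n R)) (fun i => ω ⊗ₖ γ i))
      (Sum.elim η fun i => c * ε i) where
  anticomm := by
    rintro (k | i) (l | j) hne <;>
      simp only [Sum.elim_inl, Sum.elim_inr, ← mul_kronecker_mul, mul_one, one_mul,
        ← neg_kronecker]
    · rw [hδ.anticomm (ne_of_apply_ne _ hne)]
    · rw [hδω]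
    · rw [hδω, neg_neg]
    · rw [hγ.anticomm (ne_of_apply_ne _ hne), kronecker_neg, neg_kronecker]
  mul_self := by
    rintro (k | i)
    · rw [Sum.elim_inl, Sum.elim_inl, ← mul_kronecker_mul, hδ.mul_self, mul_one,
        ← map_one (algebraMap R (Matrix n n R)), algebraMap_kronecker_algebraMap, mul_one]
    · rw [Sum.elim_inr, Sum.elim_inr, ← mul_kronecker_mul, hω, hγ.mul_self,
        algebraMap_kronecker_algebraMap]

theorem mul_list_prod [DecidableEq ι] (h : IsCliffordFamily γ ε) (i : ι) (w : List ι) :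
    γ i * (w.map γ).prod = (-1 : R) ^ (w.length + w.count i) • ((w.map γ).prod * γ i) := by
  induction w with
  | nil => simp
  | cons j w ih =>
    have hswap : γ i * γ j = (-1 : R) ^ (1 + if j = i then 1 else 0) • (γ j * γ i) := by
      obtain rfl | hij := eq_or_ne j i
      · simp
      · simp [hij, h.anticomm hij.symm]
    rw [List.map_cons, List.prod_cons, ← mul_assoc, hswap, smul_mul_assoc, mul_assoc, ih,
      mul_smul_comm, smul_smul, ← pow_add, ← mul_assoc, List.length_cons, List.count_cons]
    congr 2
    simp only [beq_iff_eq]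
    omega

variable [Fintype ι]

noncomputable def lift (h : IsCliffordFamily γ ε) :
    CliffordAlgebra (QuadraticMap.weightedSumSquares R ε) →ₐ[R] A :=
  CliffordAlgebra.lift _ ⟨Fintype.linearCombination R γ, fun v => by
    rw [Fintype.linearCombination_apply, Finset.sum_mul_sum_self_of_pairwise_anticomm _ _
      fun i j hij => by simp only [smul_mul_smul_comm, h.anticomm hij, smul_neg, mul_comm (v i)],
      QuadraticMap.weightedSumSquares_apply, map_sum]
    refine Finset.sum_congr rfl fun i _ => ?_
    rw [smul_mul_smul_comm, h.mul_self, Algebra.smul_def, ← map_mul, smul_eq_mul, mul_comm]⟩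

theorem lift_ι_single [DecidableEq ι] (h : IsCliffordFamily γ ε) (i : ι) :
    h.lift (CliffordAlgebra.ι _ (Pi.single i 1)) = γ i := by
  rw [lift, CliffordAlgebra.lift_ι_apply, Fintype.linearCombination_apply_single, one_smul]

end CommRing

section Field

variable {ι K A : Type*} [Field K] [Ring A] [Algebra K A] {γ : ι → A} {ε : ι → K}

theorem list_prod_mul_self (h : IsCliffordFamily γ ε) (hε : ∀ i, ε i ≠ 0) {w : List ι}
    (hw : w.Nodup) : ∃ c : K, c ≠ 0 ∧ (w.map γ).prod * (w.map γ).prod = algebraMap K A c := by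
  classical
  induction w with
  | nil => exact ⟨1, one_ne_zero, by simp⟩
  | cons i w ih =>
    obtain ⟨hi, hw⟩ := List.nodup_cons.mp hw
    obtain ⟨c, hc, hsq⟩ := ih hw
    refine ⟨(-1) ^ w.length * ε i * c, by simp [hc, hε i], ?_⟩
    rw [List.map_cons, List.prod_cons]
    nth_rw 1 [h.mul_list_prod i w]
    rw [List.count_eq_zero_of_not_mem hi, add_zero, smul_mul_assoc, mul_assoc, ← mul_assoc (γ i),
      h.mul_self, ← mul_assoc, ← Algebra.commutes, mul_assoc, hsq, ← map_mul, Algebra.smul_def,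
      ← map_mul, mul_assoc]

variable [LinearOrder ι]

theorem trace_orderedProd_mul_orderedProd [NeZero (2 : K)] (h : IsCliffordFamily γ ε)
    (hε : ∀ i, ε i ≠ 0) (τ : A →ₗ[K] K) (hτ : ∀ x y, τ (x * y) = τ (y * x))
    (hodd : ∀ w : List ι, Odd w.length → τ (w.map γ).prod = 0) {s t : Finset ι} (hst : s ≠ t) :
    τ (orderedProd γ s * orderedProd γ t) = 0 := by
  rw [orderedProd, orderedProd, ← List.prod_append, ← List.map_append]
  obtain ⟨i, hi⟩ := not_forall.mp (mt Finset.ext hst)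
  have hcount : (s.sort ++ t.sort).count i = 1 := by
    rw [List.count_append, (s.sort_nodup _).count, (t.sort_nodup _).count]
    by_cases his : i ∈ s <;> simp_all
  rcases Nat.even_or_odd (s.sort ++ t.sort).length with heven | hodd'
  · refine τ.eq_zero_of_mul_eq_neg_mul hτ (hε i) (h.mul_self i) ?_
    rw [h.mul_list_prod, hcount, heven.add_one.neg_one_pow, neg_one_smul]
  · exact hodd _ hodd'

theorem linearIndependent_orderedProd [NeZero (2 : K)] (h : IsCliffordFamily γ ε)
    (hε : ∀ i, ε i ≠ 0) (τ : A →ₗ[K] K) (hτ : ∀ x y, τ (x * y) = τ (y * x)) (hτ1 : τ 1 ≠ 0)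
    (hodd : ∀ w : List ι, Odd w.length → τ (w.map γ).prod = 0) :
    LinearIndependent K (orderedProd γ) :=
  LinearMap.linearIndependent_of_isOrthoᵢ (B := (LinearMap.mul K A).compr₂ τ)
    (fun _ _ hst => h.trace_orderedProd_mul_orderedProd hε τ hτ hodd hst) fun s => by
      obtain ⟨c, hc, hsq⟩ := h.list_prod_mul_self hε (s.sort_nodup (· ≤ ·))
      simpa [orderedProd, hsq, Algebra.algebraMap_eq_smul_one, hc] using hτ1

theorem lift_bijective [Fintype ι] [Invertible (2 : K)] [FiniteDimensional K A]
    (h : IsCliffordFamily γ ε) (hli : LinearIndependent K (orderedProd γ))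
    (hdim : Module.finrank K A = 2 ^ Fintype.card ι) : Function.Bijective h.lift := by
  have hspan : Submodule.span K (Set.range (orderedProd γ)) = ⊤ :=
    hli.span_eq_top_of_card_eq_finrank' (by rw [Fintype.card_finset, hdim])
  have hsurj : Function.Surjective h.lift := by
    intro x
    have hle : Submodule.span K (Set.range (orderedProd γ)) ≤
        Subalgebra.toSubmodule h.lift.range := by
      rw [Submodule.span_le]
      rintro _ ⟨s, rfl⟩
      refine Subalgebra.list_prod_mem _ fun _ hx => ?_
      obtain ⟨i, -, rfl⟩ := List.mem_map.mp hx
      exact ⟨_, h.lift_ι_single i⟩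
    exact hle (hspan ▸ Submodule.mem_top)
  refine ⟨(LinearMap.injective_iff_surjective_of_finrank_eq_finrank (f := h.lift.toLinearMap)
    ?_).mpr hsurj, hsurj⟩
  rw [CliffordAlgebra.finrank_eq_two_pow, Module.finrank_fintype_fun_eq_card, hdim]

end Field

section MatrixPair

variable {ι K m : Type*} [Field K] [CharZero K] [Fintype m] [DecidableEq m] [LinearOrder ι]
  {γ : ι → Matrix m m K} {ε : ι → K}

theorem linearIndependent_orderedProd_prodMk_neg [Nonempty m] (h : IsCliffordFamily γ ε)
    (hε : ∀ i, ε i ≠ 0) : LinearIndependent K (orderedProd fun i => (γ i, -γ i)) := by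
  let τ : Matrix m m K × Matrix m m K →ₗ[K] K :=
    traceLinearMap m K K ∘ₗ LinearMap.fst K _ _ + traceLinearMap m K K ∘ₗ LinearMap.snd K _ _
  refine (h.prod h.neg).linearIndependent_orderedProd hε τ (fun x y => ?_) ?_ fun w hw => ?_
  · simp only [τ, LinearMap.add_apply, LinearMap.comp_apply, LinearMap.fst_apply,
      LinearMap.snd_apply, traceLinearMap_apply, Prod.fst_mul, Prod.snd_mul]
    rw [trace_mul_comm x.1, trace_mul_comm x.2]
  · simp [τ]
  · simp [τ, List.prod_map_prodMk_neg (K := K), hw.neg_one_pow]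

theorem nonempty_algEquiv_matrix_prod [Fintype ι] (h : IsCliffordFamily γ ε)
    (hε : ∀ i, ε i ≠ 0) (hcard : 2 ^ Fintype.card ι = 2 * Fintype.card m ^ 2) :
    Nonempty (CliffordAlgebra (QuadraticMap.weightedSumSquares K ε) ≃ₐ[K]
      Matrix m m K × Matrix m m K) := by
  have : Nonempty m := Fintype.card_pos_iff.mp <| Nat.pos_of_ne_zero fun h0 => by
    simp [h0] at hcard
  have hpair := h.prod h.neg
  refine ⟨.ofBijective hpair.lift (hpair.lift_bijective
    (h.linearIndependent_orderedProd_prodMk_neg hε) ?_)⟩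
  rw [Module.finrank_prod, Module.finrank_matrix, Module.finrank_self, hcard]
  ring

end MatrixPair

end IsCliffordFamily

section Pauli

variable {R : Type*} [CommRing R]

def pauliX : Matrix (Fin 2) (Fin 2) R := !![0, 1; 1, 0]

/-- The real form `i σ_y` of the Pauli matrix, so that it squares to `-1`. -/
def pauliY : Matrix (Fin 2) (Fin 2) R := !![0, -1; 1, 0]

def pauliZ : Matrix (Fin 2) (Fin 2) R := !![1, 0; 0, -1]

@[simp] theorem pauliX_mul_pauliX : pauliX * pauliX = (1 : Matrix (Fin 2) (Fin 2) R) := by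
  ext i j; fin_cases i <;> fin_cases j <;> simp [pauliX]

@[simp] theorem pauliY_mul_pauliY : pauliY * pauliY = (-1 : Matrix (Fin 2) (Fin 2) R) := by
  ext i j; fin_cases i <;> fin_cases j <;> simp [pauliY]

@[simp] theorem pauliZ_mul_pauliZ : pauliZ * pauliZ = (1 : Matrix (Fin 2) (Fin 2) R) := by
  ext i j; fin_cases i <;> fin_cases j <;> simp [pauliZ]

@[simp] theorem pauliX_mul_pauliY : pauliX * pauliY = (pauliZ : Matrix (Fin 2) (Fin 2) R) := by
  ext i j; fin_cases i <;> fin_cases j <;> simp [pauliX, pauliY, pauliZ]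

@[simp] theorem pauliY_mul_pauliX : pauliY * pauliX = -(pauliZ : Matrix (Fin 2) (Fin 2) R) := by
  ext i j; fin_cases i <;> fin_cases j <;> simp [pauliX, pauliY, pauliZ]

@[simp] theorem pauliX_mul_pauliZ : pauliX * pauliZ = (pauliY : Matrix (Fin 2) (Fin 2) R) := by
  ext i j; fin_cases i <;> fin_cases j <;> simp [pauliX, pauliY, pauliZ]

@[simp] theorem pauliZ_mul_pauliX : pauliZ * pauliX = -(pauliY : Matrix (Fin 2) (Fin 2) R) := by
  ext i j; fin_cases i <;> fin_cases j <;> simp [pauliX, pauliY, pauliZ]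

@[simp] theorem pauliY_mul_pauliZ : pauliY * pauliZ = (pauliX : Matrix (Fin 2) (Fin 2) R) := by
  ext i j; fin_cases i <;> fin_cases j <;> simp [pauliX, pauliY, pauliZ]

@[simp] theorem pauliZ_mul_pauliY : pauliZ * pauliY = -(pauliX : Matrix (Fin 2) (Fin 2) R) := by
  ext i j; fin_cases i <;> fin_cases j <;> simp [pauliX, pauliY, pauliZ]

/-- With `zyzMatrix`, the `8 × 8` base case: signature `(0, 7)` cannot be reached by Kronecker
steps with `2 × 2` matrices alone, since those preserve `p - q = 1`. -/
def negSixFamily :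
    Fin 0 ⊕ Fin 6 → Matrix ((Fin 2 × Fin 2) × Fin 2) ((Fin 2 × Fin 2) × Fin 2) R :=
  Sum.elim Fin.elim0 ![1 ⊗ₖ 1 ⊗ₖ pauliY, 1 ⊗ₖ pauliY ⊗ₖ pauliX, pauliX ⊗ₖ pauliY ⊗ₖ pauliZ,
    pauliY ⊗ₖ 1 ⊗ₖ pauliZ, pauliY ⊗ₖ pauliX ⊗ₖ pauliX, pauliY ⊗ₖ pauliZ ⊗ₖ pauliX]

def zyzMatrix : Matrix ((Fin 2 × Fin 2) × Fin 2) ((Fin 2 × Fin 2) × Fin 2) R :=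
  pauliZ ⊗ₖ pauliY ⊗ₖ pauliZ

end Pauli

section HasCliffordFamily

variable (R : Type*) [CommRing R]

def signature (p q : ℕ) : Fin p ⊕ Fin q → R := Sum.elim 1 (-1)

@[simp] theorem signature_inl {p q : ℕ} (i : Fin p) : signature R p q (.inl i) = 1 := rfl

@[simp] theorem signature_inr {p q : ℕ} (i : Fin q) : signature R p q (.inr i) = -1 := rfl

def HasCliffordFamily (N p q : ℕ) : Prop :=
  ∃ γ : Fin p ⊕ Fin q → Matrix (Fin N) (Fin N) R, IsCliffordFamily γ (signature R p q)

variable {R} {N p q : ℕ}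

theorem IsCliffordFamily.hasCliffordFamily {m ι : Type*} [Fintype m] [DecidableEq m]
    {γ : ι → Matrix m m R} {ε : ι → R} (h : IsCliffordFamily γ ε) (e : ι ≃ Fin p ⊕ Fin q)
    (he : ∀ i, ε i = signature R p q (e i)) : HasCliffordFamily R (Fintype.card m) p q := by
  have hε : ε ∘ e.symm = signature R p q := funext fun x => by simp [he]
  exact ⟨_, hε ▸ (h.map (reindexAlgEquiv R R (Fintype.equivFin m)).toAlgHom).comp e.symm.injective⟩

theorem HasCliffordFamily.kronecker_of_mul_self_eq_one {m : Type*} [Fintype m] [DecidableEq m]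
    {p' q' : ℕ} {δ : Fin p' ⊕ Fin q' → Matrix m m R} (hδ : IsCliffordFamily δ (signature R p' q'))
    {ω : Matrix m m R} (hω : ω * ω = 1) (hδω : ∀ k, δ k * ω = -(ω * δ k))
    (h : HasCliffordFamily R N p q) :
    HasCliffordFamily R (Fintype.card m * N) (p' + p) (q' + q) := by
  obtain ⟨γ, hγ⟩ := h
  have := hδ.kronecker (c := 1) (by rw [hω, map_one]) hδω hγ
  simpa using this.hasCliffordFamily ((Equiv.sumSumSumComm _ _ _ _).trans
    (finSumFinEquiv.sumCongr finSumFinEquiv)) (by rintro ((k | k) | (i | i)) <;> simp)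

theorem HasCliffordFamily.kronecker_of_mul_self_eq_neg_one {m : Type*} [Fintype m]
    [DecidableEq m] {p' q' : ℕ} {δ : Fin p' ⊕ Fin q' → Matrix m m R}
    (hδ : IsCliffordFamily δ (signature R p' q')) {ω : Matrix m m R} (hω : ω * ω = -1)
    (hδω : ∀ k, δ k * ω = -(ω * δ k)) (h : HasCliffordFamily R N p q) :
    HasCliffordFamily R (Fintype.card m * N) (p' + q) (q' + p) := by
  obtain ⟨γ, hγ⟩ := h
  have := hδ.kronecker (c := -1) (by rw [hω, map_neg, map_one]) hδω hγ
  simpa using this.hasCliffordFamily (((Equiv.refl _).sumCongr (Equiv.sumComm _ _)).trans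
    ((Equiv.sumSumSumComm _ _ _ _).trans (finSumFinEquiv.sumCongr finSumFinEquiv)))
    (by rintro ((k | k) | (i | i)) <;> simp)

theorem HasCliffordFamily.one_one_zero : HasCliffordFamily R 1 1 0 :=
  ⟨fun _ => 1, by
    refine ⟨?_, ?_⟩
    · rintro (i | i) (j | j) hij
      · exact absurd (congrArg _ (Subsingleton.elim i j)) hij
      all_goals exact Fin.elim0 ‹_›
    · rintro (i | i)
      · simp
      · exact i.elim0⟩

theorem HasCliffordFamily.add_one_add_one (h : HasCliffordFamily R N p q) :
    HasCliffordFamily R (2 * N) (p + 1) (q + 1) := by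
  have hδ : IsCliffordFamily (Sum.elim (fun _ => pauliZ) (fun _ => pauliY) :
      Fin 1 ⊕ Fin 1 → Matrix (Fin 2) (Fin 2) R) (signature R 1 1) := by
    refine ⟨?_, ?_⟩
    · rintro (i | i) (j | j) hij <;> simp_all [Subsingleton.elim i j]
    · rintro (i | i) <;> simp
  simpa [add_comm] using
    kronecker_of_mul_self_eq_one hδ pauliX_mul_pauliX (by rintro (i | i) <;> simp) h

theorem HasCliffordFamily.swap_add_two (h : HasCliffordFamily R N p q) :
    HasCliffordFamily R (2 * N) (q + 2) p := by
  have hδ : IsCliffordFamily (Sum.elim ![pauliZ, pauliX] Fin.elim0 :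
      Fin 2 ⊕ Fin 0 → Matrix (Fin 2) (Fin 2) R) (signature R 2 0) := by
    refine ⟨?_, ?_⟩
    · rintro (i | i) (j | j) hij
      · fin_cases i <;> fin_cases j <;> simp_all
      all_goals exact Fin.elim0 ‹_›
    · rintro (i | i)
      · fin_cases i <;> simp
      · exact i.elim0
  simpa [add_comm] using kronecker_of_mul_self_eq_neg_one hδ pauliY_mul_pauliY
    (by rintro (i | i) <;> [fin_cases i <;> simp; exact i.elim0]) h

theorem isCliffordFamily_negSixFamily :
    IsCliffordFamily (negSixFamily (R := R)) (signature R 0 6) where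
  anticomm := by
    rintro (i | i) (j | j) hij
    · exact i.elim0
    · exact i.elim0
    · exact j.elim0
    fin_cases i <;> fin_cases j <;>
      simp_all [negSixFamily, ← mul_kronecker_mul, neg_kronecker, kronecker_neg]
  mul_self := by
    rintro (i | i)
    · exact i.elim0
    · fin_cases i <;> simp [negSixFamily, ← mul_kronecker_mul, neg_kronecker, kronecker_neg]

theorem HasCliffordFamily.swap_add_six (h : HasCliffordFamily R N p q) :
    HasCliffordFamily R (8 * N) q (p + 6) := by
  have hω : zyzMatrix * zyzMatrix = (-1 : Matrix _ _ R) := by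
    simp [zyzMatrix, ← mul_kronecker_mul, neg_kronecker, kronecker_neg]
  have hδω : ∀ k, negSixFamily k * zyzMatrix = -(zyzMatrix * negSixFamily (R := R) k) := by
    rintro (i | i)
    · exact i.elim0
    · fin_cases i <;>
        simp [negSixFamily, zyzMatrix, ← mul_kronecker_mul, neg_kronecker, kronecker_neg]
  simpa [add_comm] using
    kronecker_of_mul_self_eq_neg_one isCliffordFamily_negSixFamily hω hδω h

theorem hasCliffordFamily_two_pow {n p q : ℕ} (h : p + q = 2 * n + 1)
    (hpq : (p : ℤ) - q ≡ 1 [ZMOD 8]) : HasCliffordFamily R (2 ^ n) p q := by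
  induction n using Nat.strong_induction_on generalizing p q with
  | _ n ih =>
  rw [Int.ModEq] at hpq
  rcases p with _ | p
  · obtain ⟨k, rfl⟩ : ∃ k, n = k + 3 := ⟨n - 3, by omega⟩
    obtain ⟨r, rfl⟩ : ∃ r, q = r + 6 := ⟨q - 6, by omega⟩
    rw [show 2 ^ (k + 3) = 8 * 2 ^ k by ring]
    exact (ih k (by omega) (q := 0) (by omega) (by rw [Int.ModEq]; omega)).swap_add_six
  rcases q with _ | q
  · rcases p with _ | p
    · obtain rfl : n = 0 := by omega
      exact .one_one_zero
    · obtain ⟨k, rfl⟩ : ∃ k, n = k + 1 := ⟨n - 1, by omega⟩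
      rw [pow_succ']
      exact (ih k (by omega) (p := 0) (by omega) (by rw [Int.ModEq]; omega)).swap_add_two
  · obtain ⟨k, rfl⟩ : ∃ k, n = k + 1 := ⟨n - 1, by omega⟩
    rw [pow_succ']
    exact (ih k (by omega) (by omega) (by rw [Int.ModEq]; omega)).add_one_add_one

end HasCliffordFamily

theorem clifford_iso_prod_matrix_real (p q n : ℕ) (h : p + q = 2 * n + 1)
    (hc : ((p : ℤ) - q + 1) ≡ 2 [ZMOD 8]) :
    Nonempty (CliffordAlgebra (Qpq p q) ≃ₐ[ℝ]
      (Matrix (Fin (2 ^ n)) (Fin (2 ^ n)) ℝ × Matrix (Fin (2 ^ n)) (Fin (2 ^ n)) ℝ)) := by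
  obtain ⟨γ, hγ⟩ := hasCliffordFamily_two_pow (R := ℝ) h (by rw [Int.ModEq] at hc ⊢; omega)
  have hweight : signature ℝ p q ∘ finSumFinEquiv.symm =
      fun i : Fin (p + q) => if (i : ℕ) < p then 1 else -1 := by
    funext i
    induction i using Fin.addCases <;> simp
  have hfam := hγ.comp finSumFinEquiv.symm.injective
  rw [hweight] at hfam
  refine hfam.nonempty_algEquiv_matrix_prod (fun i => by split_ifs <;> norm_num) ?_
  rw [Fintype.card_fin, Fintype.card_fin, h]
  ring
end

section
/- For all natural numbers p and q, the real Clifford algebra Cl_{p+1,q+1}(ℝ) is isomorphic, as an ℝ-algebra, to the tensor product Cl_{p,q}(ℝ) ⊗_ℝ M_2(ℝ), where M_2(ℝ) is the algebra of 2 × 2 real matrices. -/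
/-!
Splitting off one positive and one negative coordinate, `Q_{p+1,q+1} ≅ Q_{p,q} ⊥ H` where
`H(a, b) = a b` is the hyperbolic plane, since `a² - b² = (a + b)(a - b)`.

For any quadratic module `(M, Q)`, the images `x, y` in `Cl(Q ⊥ H)` of the standard basis of `H`
satisfy `x² = y² = 0` and `xy + yx = 1`, so `xy, x, y, yx` are `2 × 2` matrix units. The element
`u = xy - yx` squares to `1` and anticommutes with `x`, `y` and `M`, so `m ↦ m u` extends to a copy
of `Cl(Q)` commuting with these matrix units, and together they give `Cl(Q) ⊗ M₂ → Cl(Q ⊥ H)`.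
Its inverse sends `m ↦ m ⊗ diag(1, -1)` and `(a, b) ↦ a E₀₁ + b E₁₀`.
-/

namespace Matrix
variable {n R A : Type*} [Fintype n] [DecidableEq n] [CommSemiring R] [Semiring A] [Algebra R A]

def liftOfMatrixUnits (c : n → n → A)
    (hmul : ∀ i j k l, c i j * c k l = if j = k then c i l else 0) (hone : ∑ i, c i i = 1) :
    Matrix n n R →ₐ[R] A :=
  AlgHom.ofLinearMap (liftLinear R fun i j => LinearMap.toSpanSingleton R A (c i j))
    (by simp [liftLinear_apply, one_apply, hone])
    (by
      intro M N
      induction M using Matrix.induction_on' with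
      | h_zero => simp
      | h_add M₁ M₂ h₁ h₂ => simp [add_mul, h₁, h₂]
      | h_std_basis i j a =>
        induction N using Matrix.induction_on' with
        | h_zero => simp
        | h_add N₁ N₂ h₁ h₂ => simp [mul_add, h₁, h₂]
        | h_std_basis k l b =>
          simp only [liftLinear_single, LinearMap.toSpanSingleton_apply, smul_mul_smul_comm, hmul]
          split_ifs with h
          · subst h; simp
          · rw [single_mul_single_of_ne a i j k h, map_zero, smul_zero])

@[simp]
lemma liftOfMatrixUnits_single (c : n → n → A)
    (hmul : ∀ i j k l, c i j * c k l = if j = k then c i l else 0) (hone : ∑ i, c i i = 1)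
    (i j : n) (a : R) :
    liftOfMatrixUnits c hmul hone (single i j a) = a • c i j :=
  liftLinear_single R _ i j a

end Matrix

lemma commute_mul_of_anticommute {A : Type*} [Ring A] {v a b : A} (ha : v * a = -(a * v))
    (hb : v * b = -(b * v)) : Commute v (a * b) := by
  rw [commute_iff_eq, ← mul_assoc, ha, neg_mul, mul_assoc, hb, mul_neg, neg_neg, mul_assoc]

structure IsHyperbolicPair {A : Type*} [Ring A] (x y : A) : Prop where
  mul_self_left : x * x = 0
  mul_self_right : y * y = 0
  mul_add_mul_swap : x * y + y * x = 1

namespace IsHyperbolicPair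
variable {A : Type*} [Ring A] {x y : A}

lemma mul_mul_left (h : IsHyperbolicPair x y) : x * y * x = x := by
  rw [mul_assoc, eq_sub_of_add_eq' h.mul_add_mul_swap, mul_sub, mul_one, ← mul_assoc,
    h.mul_self_left, zero_mul, sub_zero]

lemma mul_mul_right (h : IsHyperbolicPair x y) : y * x * y = y := by
  rw [eq_sub_of_add_eq' h.mul_add_mul_swap, sub_mul, one_mul, mul_assoc, h.mul_self_right,
    mul_zero, sub_zero]

lemma matrixUnits_mul (h : IsHyperbolicPair x y) (i j k l : Fin 2) :
    ![![x * y, x], ![y, y * x]] i j * ![![x * y, x], ![y, y * x]] k l =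
      if j = k then ![![x * y, x], ![y, y * x]] i l else 0 := by
  have hx (a : A) : a * x * x = 0 := by rw [mul_assoc, h.mul_self_left, mul_zero]
  have hy (a : A) : a * y * y = 0 := by rw [mul_assoc, h.mul_self_right, mul_zero]
  fin_cases i <;> fin_cases j <;> fin_cases k <;> fin_cases l <;>
    simp [← mul_assoc, h.mul_self_left, h.mul_self_right, hx, hy, h.mul_mul_left, h.mul_mul_right]

lemma commutator_mul_left (h : IsHyperbolicPair x y) : (x * y - y * x) * x = x := by
  rw [sub_mul, h.mul_mul_left, mul_assoc, h.mul_self_left, mul_zero, sub_zero]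

lemma mul_commutator_left (h : IsHyperbolicPair x y) : x * (x * y - y * x) = -x := by
  rw [mul_sub, ← mul_assoc, h.mul_self_left, zero_mul, ← mul_assoc, h.mul_mul_left, zero_sub]

lemma commutator_mul_right (h : IsHyperbolicPair x y) : (x * y - y * x) * y = -y := by
  rw [sub_mul, mul_assoc, h.mul_self_right, mul_zero, h.mul_mul_right, zero_sub]

lemma mul_commutator_right (h : IsHyperbolicPair x y) : y * (x * y - y * x) = y := by
  rw [mul_sub, ← mul_assoc, h.mul_mul_right, ← mul_assoc, h.mul_self_right, zero_mul, sub_zero]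

lemma commutator_mul_self (h : IsHyperbolicPair x y) :
    (x * y - y * x) * (x * y - y * x) = 1 := by
  rw [mul_sub (x * y - y * x), ← mul_assoc, h.commutator_mul_left, ← mul_assoc,
    h.commutator_mul_right, neg_mul, sub_neg_eq_add, h.mul_add_mul_swap]

lemma commute_mul_commutator_left (h : IsHyperbolicPair x y) {v : A} (hv : v * x = -(x * v)) :
    Commute (v * (x * y - y * x)) x := by
  rw [commute_iff_eq, mul_assoc, h.commutator_mul_left, ← mul_assoc, ← neg_neg (x * v), ← hv,
    neg_mul, mul_assoc, h.mul_commutator_left, mul_neg, neg_neg]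

lemma commute_mul_commutator_right (h : IsHyperbolicPair x y) {v : A} (hv : v * y = -(y * v)) :
    Commute (v * (x * y - y * x)) y := by
  rw [commute_iff_eq, mul_assoc, h.commutator_mul_right, ← mul_assoc, ← neg_neg (y * v), ← hv,
    neg_mul, mul_assoc, h.mul_commutator_right, mul_neg]

lemma anticommute_mul_commutator_left (h : IsHyperbolicPair x y) {v : A} (hv : Commute v x) :
    v * (x * y - y * x) * x = -(x * (v * (x * y - y * x))) := by
  rw [mul_assoc, h.commutator_mul_left, ← mul_assoc, ← hv.eq, mul_assoc, h.mul_commutator_left,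
    mul_neg, neg_neg]

lemma anticommute_mul_commutator_right (h : IsHyperbolicPair x y) {v : A} (hv : Commute v y) :
    v * (x * y - y * x) * y = -(y * (v * (x * y - y * x))) := by
  rw [mul_assoc, h.commutator_mul_right, ← mul_assoc, ← hv.eq, mul_assoc, h.mul_commutator_right,
    mul_neg]

lemma add_smul_add_smul_mul_self {R : Type*} [CommRing R] [Algebra R A] (h : IsHyperbolicPair x y)
    {w : A} (hx : w * x = -(x * w)) (hy : w * y = -(y * w)) (a b : R) :
    (w + a • x + b • y) * (w + a • x + b • y) = w * w + (a * b) • 1 := by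
  simp only [add_mul, mul_add, smul_mul_assoc, mul_smul_comm, hx, hy,
    h.mul_self_left, h.mul_self_right, smul_zero, ← h.mul_add_mul_swap]
  module

lemma map {B F : Type*} [Ring B] [FunLike F A B] [RingHomClass F A B]
    (h : IsHyperbolicPair x y) (f : F) : IsHyperbolicPair (f x) (f y) where
  mul_self_left := by rw [← map_mul, h.mul_self_left, map_zero]
  mul_self_right := by rw [← map_mul, h.mul_self_right, map_zero]
  mul_add_mul_swap := by rw [← map_mul, ← map_mul, ← map_add, h.mul_add_mul_swap, map_one]

variable {R : Type*} [CommRing R] [Algebra R A]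

def matrixAlgHom (h : IsHyperbolicPair x y) : Matrix (Fin 2) (Fin 2) R →ₐ[R] A :=
  Matrix.liftOfMatrixUnits _ h.matrixUnits_mul <| by
    simpa [Fin.sum_univ_two] using h.mul_add_mul_swap

@[simp]
lemma matrixAlgHom_single_zero_one (h : IsHyperbolicPair x y) :
    h.matrixAlgHom (Matrix.single 0 1 (1 : R)) = x := by
  simp [matrixAlgHom]

@[simp]
lemma matrixAlgHom_single_one_zero (h : IsHyperbolicPair x y) :
    h.matrixAlgHom (Matrix.single 1 0 (1 : R)) = y := by
  simp [matrixAlgHom]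

lemma commute_matrixAlgHom (h : IsHyperbolicPair x y) {a : A} (hx : Commute a x) (hy : Commute a y)
    (N : Matrix (Fin 2) (Fin 2) R) : Commute a (h.matrixAlgHom N) := by
  induction N using Matrix.induction_on' with
  | h_zero => simp
  | h_add N₁ N₂ h₁ h₂ => rw [map_add]; exact h₁.add_right h₂
  | h_std_basis i j r =>
    simp only [matrixAlgHom, Matrix.liftOfMatrixUnits_single]
    refine Commute.smul_right ?_ r
    fin_cases i <;> fin_cases j
    exacts [hx.mul_right hy, hx, hy, hy.mul_right hx]

end IsHyperbolicPair

namespace Matrix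
variable {R A : Type*} [CommRing R] [Ring A] [Algebra R A]

lemma isHyperbolicPair_single :
    IsHyperbolicPair (single (0 : Fin 2) (1 : Fin 2) (1 : R)) (single 1 0 1) where
  mul_self_left := by simp
  mul_self_right := by simp
  mul_add_mul_swap := by
    ext i j
    fin_cases i <;> fin_cases j <;> simp

lemma algHom_ext_fin_two {f g : Matrix (Fin 2) (Fin 2) R →ₐ[R] A}
    (h₀₁ : f (single 0 1 1) = g (single 0 1 1)) (h₁₀ : f (single 1 0 1) = g (single 1 0 1)) :
    f = g := by
  have h₀₀ : single (0 : Fin 2) (0 : Fin 2) (1 : R) = single 0 1 1 * single 1 0 1 := by simp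
  have h₁₁ : single (1 : Fin 2) (1 : Fin 2) (1 : R) = single 1 0 1 * single 0 1 1 := by simp
  have hsingle (i j : Fin 2) : f (single i j 1) = g (single i j 1) := by
    fin_cases i <;> fin_cases j
    · simp only [Fin.zero_eta, h₀₀, map_mul, h₀₁, h₁₀]
    · exact h₀₁
    · exact h₁₀
    · simp only [Fin.mk_one, h₁₁, map_mul, h₀₁, h₁₀]
  refine AlgHom.toLinearMap_injective (ext_linearMap R fun i j => LinearMap.ext fun a => ?_)
  have : single i j a = a • single i j 1 := by rw [smul_single, smul_eq_mul, mul_one]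
  simp only [LinearMap.comp_apply, singleLinearMap_apply, AlgHom.toLinearMap_apply, this, map_smul,
    hsingle]

end Matrix

namespace QuadraticMap

def hyperbolicPlane (R : Type*) [CommRing R] : QuadraticForm R (R × R) :=
  linMulLin (LinearMap.fst R R R) (LinearMap.snd R R R)

@[simp]
lemma hyperbolicPlane_apply {R : Type*} [CommRing R] (v : R × R) :
    hyperbolicPlane R v = v.1 * v.2 := rfl

def weightedSumSquaresFinAddEquiv {R : Type*} [CommSemiring R] {m n : ℕ} (w : Fin (m + n) → R) :
    (weightedSumSquares R w).IsometryEquiv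
      ((weightedSumSquares R (w ∘ Fin.castAdd n)).prod
        (weightedSumSquares R (w ∘ Fin.natAdd m))) where
  toLinearEquiv := (LinearEquiv.funCongrLeft R R finSumFinEquiv).trans
    (LinearEquiv.sumArrowLequivProdArrow _ _ R R)
  map_app' v := by simp [Fin.sum_univ_add]

noncomputable def isometryEquivHyperbolicPlane :
    ((weightedSumSquares ℝ fun _ : Fin 1 => (1 : ℝ)).prod
      (weightedSumSquares ℝ fun _ : Fin 1 => (-1 : ℝ))).IsometryEquiv (hyperbolicPlane ℝ) where
  toFun v := (v.1 0 + v.2 0, v.1 0 - v.2 0)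
  invFun v := (fun _ => (v.1 + v.2) / 2, fun _ => (v.1 - v.2) / 2)
  map_add' _ _ := by ext <;> simp only [Prod.fst_add, Prod.snd_add, Pi.add_apply] <;> ring
  map_smul' _ _ := by ext <;> simp only [Prod.smul_fst, Prod.smul_snd, Pi.smul_apply, smul_eq_mul,
    RingHom.id_apply] <;> ring
  left_inv v := by ext i <;> fin_cases i <;> simp
  right_inv v := by ext <;> simp only <;> ring
  map_app' v := by simp; ring

end QuadraticMap

open scoped TensorProduct
open QuadraticMap (hyperbolicPlane)
open Algebra.TensorProduct (includeLeft includeRight)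

namespace CliffordAlgebra
variable {R M : Type*} [CommRing R] [AddCommGroup M] [Module R M] (Q : QuadraticForm R M)

local notation "𝕩" => ι (Q.prod (hyperbolicPlane R)) (0, (1, 0))
local notation "𝕪" => ι (Q.prod (hyperbolicPlane R)) (0, (0, 1))
local notation "E₀₁" => Matrix.single (0 : Fin 2) (1 : Fin 2) (1 : R)
local notation "E₁₀" => Matrix.single (1 : Fin 2) (0 : Fin 2) (1 : R)

lemma isHyperbolicPair_ι_hyperbolicPlane :
    IsHyperbolicPair 𝕩 𝕪 where
  mul_self_left := by simp [ι_sq_scalar]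
  mul_self_right := by simp [ι_sq_scalar]
  mul_add_mul_swap := by simp [ι_mul_ι_add_swap, QuadraticMap.polar]

lemma ι_inl_mul_ι_inr (m : M) (v : R × R) :
    ι (Q.prod (hyperbolicPlane R)) (m, 0) * ι _ (0, v) =
      -(ι (Q.prod (hyperbolicPlane R)) (0, v) * ι _ (m, 0)) :=
  eq_neg_of_add_eq_zero_left (ι_mul_ι_add_swap_of_isOrtho (.inl_inr m v))

variable {A : Type*} [Ring A] [Algebra R A]

def liftProdHyperbolicPlane (f : CliffordAlgebra Q →ₐ[R] A) {x y : A} (h : IsHyperbolicPair x y)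
    (hx : ∀ m, Commute (f (ι Q m)) x) (hy : ∀ m, Commute (f (ι Q m)) y) :
    CliffordAlgebra (Q.prod (hyperbolicPlane R)) →ₐ[R] A :=
  lift _ ⟨(LinearMap.mulRight R (x * y - y * x) ∘ₗ f.toLinearMap ∘ₗ ι Q).coprod
      ((LinearMap.toSpanSingleton R A x).coprod (LinearMap.toSpanSingleton R A y)), by
    rintro ⟨m, a, b⟩
    have hsq : f (ι Q m) * (x * y - y * x) * (f (ι Q m) * (x * y - y * x)) =
        algebraMap R A (Q m) := by
      rw [((hx m).mul_right (hy m) |>.sub_right ((hy m).mul_right (hx m))).symm.mul_mul_mul_comm,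
        h.commutator_mul_self, mul_one, ← map_mul, ι_sq_scalar, AlgHom.commutes]
    simp only [LinearMap.coprod_apply, LinearMap.comp_apply, LinearMap.mulRight_apply,
      AlgHom.toLinearMap_apply, LinearMap.toSpanSingleton_apply, ← add_assoc]
    rw [h.add_smul_add_smul_mul_self (h.anticommute_mul_commutator_left (hx m))
      (h.anticommute_mul_commutator_right (hy m)), hsq]
    simp [Algebra.algebraMap_eq_smul_one, add_smul]⟩

@[simp]
lemma liftProdHyperbolicPlane_ι (f : CliffordAlgebra Q →ₐ[R] A) {x y : A} (h : IsHyperbolicPair x y)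
    (hx : ∀ m, Commute (f (ι Q m)) x) (hy : ∀ m, Commute (f (ι Q m)) y) (m : M) (a b : R) :
    liftProdHyperbolicPlane Q f h hx hy (ι _ (m, (a, b))) =
      f (ι Q m) * (x * y - y * x) + a • x + b • y := by
  simp [liftProdHyperbolicPlane, add_assoc]

def twistedInl : CliffordAlgebra Q →ₐ[R] CliffordAlgebra (Q.prod (hyperbolicPlane R)) :=
  lift Q ⟨LinearMap.mulRight R (𝕩 * 𝕪 - 𝕪 * 𝕩) ∘ₗ ι _ ∘ₗ LinearMap.inl R M (R × R), by
    intro m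
    have hu : Commute (ι (Q.prod (hyperbolicPlane R)) (m, 0)) (𝕩 * 𝕪 - 𝕪 * 𝕩) :=
      (commute_mul_of_anticommute (ι_inl_mul_ι_inr Q m _) (ι_inl_mul_ι_inr Q m _)).sub_right
        (commute_mul_of_anticommute (ι_inl_mul_ι_inr Q m _) (ι_inl_mul_ι_inr Q m _))
    simp only [LinearMap.comp_apply, LinearMap.inl_apply, LinearMap.mulRight_apply]
    rw [hu.symm.mul_mul_mul_comm, (isHyperbolicPair_ι_hyperbolicPlane Q).commutator_mul_self,
      mul_one, ι_sq_scalar]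
    simp⟩

@[simp]
lemma twistedInl_ι (m : M) :
    twistedInl Q (ι Q m) = ι _ (m, 0) * (𝕩 * 𝕪 - 𝕪 * 𝕩) :=
  lift_ι_apply _ _ _

lemma twistedInl_mem_centralizer (z : CliffordAlgebra Q) :
    twistedInl Q z ∈ Subalgebra.centralizer R {𝕩, 𝕪} := by
  induction z using CliffordAlgebra.induction with
  | algebraMap r => rw [AlgHom.commutes]; exact Subalgebra.algebraMap_mem _ r
  | ι m =>
    rw [twistedInl_ι, Subalgebra.mem_centralizer_iff]
    rintro g (rfl | rfl)
    · exact ((isHyperbolicPair_ι_hyperbolicPlane Q).commute_mul_commutator_left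
        (ι_inl_mul_ι_inr Q m _)).eq.symm
    · exact ((isHyperbolicPair_ι_hyperbolicPlane Q).commute_mul_commutator_right
        (ι_inl_mul_ι_inr Q m _)).eq.symm
  | mul a b ha hb => rw [map_mul]; exact mul_mem ha hb
  | add a b ha hb => rw [map_add]; exact add_mem ha hb

def ofTensorMatrix :
    CliffordAlgebra Q ⊗[R] Matrix (Fin 2) (Fin 2) R →ₐ[R]
      CliffordAlgebra (Q.prod (hyperbolicPlane R)) :=
  Algebra.TensorProduct.lift (twistedInl Q) (isHyperbolicPair_ι_hyperbolicPlane Q).matrixAlgHom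
    fun z N => by
      have hz := (Subalgebra.mem_centralizer_iff R).mp (twistedInl_mem_centralizer Q z)
      exact (isHyperbolicPair_ι_hyperbolicPlane Q).commute_matrixAlgHom
        (hz _ (Set.mem_insert _ _)).symm (hz _ (Set.mem_insert_of_mem _ rfl)).symm N

def toTensorMatrix :
    CliffordAlgebra (Q.prod (hyperbolicPlane R)) →ₐ[R]
      CliffordAlgebra Q ⊗[R] Matrix (Fin 2) (Fin 2) R :=
  liftProdHyperbolicPlane Q includeLeft (Matrix.isHyperbolicPair_single.map includeRight)
    (fun _ => .tmul (.one_right _) (.one_left _)) (fun _ => .tmul (.one_right _) (.one_left _))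

lemma ofTensorMatrix_tmul (z : CliffordAlgebra Q) (N : Matrix (Fin 2) (Fin 2) R) :
    ofTensorMatrix Q (z ⊗ₜ N) =
      twistedInl Q z * (isHyperbolicPair_ι_hyperbolicPlane Q).matrixAlgHom N :=
  Algebra.TensorProduct.lift_tmul _ _ _ _ _

lemma toTensorMatrix_ι (m : M) (a b : R) :
    toTensorMatrix Q (ι _ (m, (a, b))) =
      ι Q m ⊗ₜ (E₀₁ * E₁₀ - E₁₀ * E₀₁) + a • (1 ⊗ₜ E₀₁) + b • (1 ⊗ₜ E₁₀) := by
  simp only [toTensorMatrix, liftProdHyperbolicPlane_ι, Algebra.TensorProduct.includeLeft_apply,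
    Algebra.TensorProduct.includeRight_apply, Algebra.TensorProduct.tmul_mul_tmul, one_mul, mul_one,
    ← TensorProduct.tmul_sub]

lemma ofTensorMatrix_comp_toTensorMatrix :
    (ofTensorMatrix Q).comp (toTensorMatrix Q) = AlgHom.id R _ := by
  have h := isHyperbolicPair_ι_hyperbolicPlane Q
  refine CliffordAlgebra.hom_ext (LinearMap.ext fun ⟨m, a, b⟩ => ?_)
  simp only [LinearMap.comp_apply, AlgHom.toLinearMap_apply, AlgHom.comp_apply, AlgHom.id_apply,
    toTensorMatrix_ι, map_add, map_mul, map_sub, map_smul, ofTensorMatrix_tmul, map_one, one_mul,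
    twistedInl_ι, h.matrixAlgHom_single_zero_one, h.matrixAlgHom_single_one_zero, mul_assoc,
    h.commutator_mul_self, mul_one]
  rw [← map_smul, ← map_smul, ← map_add, ← map_add]
  simp

lemma toTensorMatrix_comp_ofTensorMatrix :
    (toTensorMatrix Q).comp (ofTensorMatrix Q) = AlgHom.id R _ := by
  have hx : toTensorMatrix Q 𝕩 = 1 ⊗ₜ E₀₁ := by simp [toTensorMatrix_ι]
  have hy : toTensorMatrix Q 𝕪 = 1 ⊗ₜ E₁₀ := by simp [toTensorMatrix_ι]
  ext : 1
  · refine CliffordAlgebra.hom_ext (LinearMap.ext fun m => ?_)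
    have hm := toTensorMatrix_ι Q m 0 0
    rw [zero_smul, zero_smul, add_zero, add_zero, Prod.mk_zero_zero] at hm
    simp only [LinearMap.comp_apply, AlgHom.toLinearMap_apply, AlgHom.comp_apply, AlgHom.id_apply,
      Algebra.TensorProduct.includeLeft_apply, ofTensorMatrix_tmul, map_one, mul_one, twistedInl_ι,
      map_mul, map_sub, hx, hy, hm, Algebra.TensorProduct.tmul_mul_tmul,
      ← TensorProduct.tmul_sub, Matrix.isHyperbolicPair_single.commutator_mul_self]
  · apply Matrix.algHom_ext_fin_two <;> simp [ofTensorMatrix_tmul, hx, hy]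

def prodHyperbolicPlaneEquiv :
    CliffordAlgebra (Q.prod (hyperbolicPlane R)) ≃ₐ[R]
      CliffordAlgebra Q ⊗[R] Matrix (Fin 2) (Fin 2) R :=
  .ofAlgHom (toTensorMatrix Q) (ofTensorMatrix Q) (toTensorMatrix_comp_ofTensorMatrix Q)
    (ofTensorMatrix_comp_toTensorMatrix Q)

end CliffordAlgebra

open QuadraticMap

def Qpq.isometryEquivProd (p q : ℕ) :
    (Qpq p q).IsometryEquiv ((weightedSumSquares ℝ fun _ : Fin p => (1 : ℝ)).prod
      (weightedSumSquares ℝ fun _ : Fin q => (-1 : ℝ))) :=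
  (weightedSumSquaresFinAddEquiv _).trans <|
    .prod (QuadraticForm.weightedSumSquaresCongr (by ext; simp))
      (QuadraticForm.weightedSumSquaresCongr (by ext; simp))

noncomputable def Qpq.isometryEquivProdHyperbolicPlane (p q : ℕ) :
    (Qpq (p + 1) (q + 1)).IsometryEquiv ((Qpq p q).prod (hyperbolicPlane ℝ)) :=
  (Qpq.isometryEquivProd (p + 1) (q + 1)).trans <|
    ((weightedSumSquaresFinAddEquiv _).prod (weightedSumSquaresFinAddEquiv _)).trans <|
      (IsometryEquiv.prodProdProdComm _ _ _ _).trans <|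
        (Qpq.isometryEquivProd p q).symm.prod isometryEquivHyperbolicPlane

open scoped TensorProduct in
theorem clifford_periodicity_one_one (p q : ℕ) :
    Nonempty (CliffordAlgebra (Qpq (p + 1) (q + 1)) ≃ₐ[ℝ]
      (CliffordAlgebra (Qpq p q) ⊗[ℝ] Matrix (Fin 2) (Fin 2) ℝ)) :=
  ⟨(CliffordAlgebra.equivOfIsometry (Qpq.isometryEquivProdHyperbolicPlane p q)).trans
    (CliffordAlgebra.prodHyperbolicPlaneEquiv (Qpq p q))⟩
end

section
/- For all natural numbers p and q, the real Clifford algebra Cl_{p+2,q}(ℝ) is isomorphic, as an ℝ-algebra, to the tensor product Cl_{q,p}(ℝ) ⊗_ℝ M_2(ℝ), where M_2(ℝ) is the algebra of 2 × 2 real matrices. -/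
set_option synthInstance.maxHeartbeats 1000000
set_option maxHeartbeats 1000000

namespace CliffordPeriodicity

open CliffordAlgebra

lemma Qpq_apply (p q : ℕ) (v : Fin (p + q) → ℝ) :
    Qpq p q v = ∑ i : Fin (p + q), (if (i : ℕ) < p then (1:ℝ) else -1) * (v i * v i) := by
  rw [Qpq, QuadraticMap.weightedSumSquares_apply]
  simp [smul_eq_mul]

lemma Qpq_single (p q : ℕ) (k : Fin (p + q)) (a : ℝ) :
    Qpq p q (Pi.single k a) = (if (k : ℕ) < p then (1:ℝ) else -1) * (a * a) := by
  rw [Qpq_apply]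
  rw [Finset.sum_eq_single k]
  · simp
  · intro i _ hik
    simp [Pi.single_apply, hik]
  · simp

lemma Qpq_polar (p q : ℕ) (i j : Fin (p + q)) (hij : i ≠ j) :
    QuadraticMap.polar (Qpq p q) (Pi.single i 1) (Pi.single j 1) = 0 := by
  have hmul : ∀ k, (Pi.single i 1 : Fin (p+q) → ℝ) k * (Pi.single j 1 : Fin (p+q) → ℝ) k = 0 := by
    intro k
    rcases eq_or_ne k i with rfl | hk
    · simp [Pi.single_apply, hij.symm]
    · simp [Pi.single_apply, hk]
  simp only [QuadraticMap.polar, Qpq_apply, ← Finset.sum_sub_distrib]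
  apply Finset.sum_eq_zero
  intro k _
  have := hmul k
  simp only [Pi.add_apply]
  linear_combination (2 * (if (k:ℕ) < p then (1:ℝ) else -1)) * this

/-- The generator `e k` of the Clifford algebra. -/
noncomputable def gen (p q : ℕ) (k : Fin (p + q)) : CliffordAlgebra (Qpq p q) :=
  CliffordAlgebra.ι (Qpq p q) (Pi.single k 1)

lemma gen_sq (p q : ℕ) (k : Fin (p + q)) :
    gen p q k * gen p q k
      = algebraMap ℝ _ (if (k : ℕ) < p then (1:ℝ) else -1) := by
  rw [gen, CliffordAlgebra.ι_sq_scalar, Qpq_single]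
  norm_num

lemma gen_anti (p q : ℕ) {i j : Fin (p + q)} (hij : i ≠ j) :
    gen p q i * gen p q j = -(gen p q j * gen p q i) := by
  have h := CliffordAlgebra.ι_mul_ι_add_swap (Q := Qpq p q)
      (Pi.single i 1) (Pi.single j 1)
  rw [Qpq_polar p q i j hij, map_zero] at h
  rw [gen, gen, eq_neg_iff_add_eq_zero, h]

lemma ι_eq_sum (p q : ℕ) (v : Fin (p + q) → ℝ) :
    CliffordAlgebra.ι (Qpq p q) v = ∑ k, v k • gen p q k := by
  have hv : v = ∑ k : Fin (p+q), v k • (Pi.single k 1 : Fin (p+q) → ℝ) := by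
    ext j; simp [Pi.single_apply]
  conv_lhs => rw [hv]
  simp [gen]

section Generic

variable {A : Type*} [Ring A] [Algebra ℝ A]

/-- Square of a linear combination of pairwise-anticommuting square roots of scalars. -/
lemma sum_smul_sq {n : ℕ} (f : Fin n → A) (c : Fin n → ℝ)
    (hsq : ∀ i, f i * f i = algebraMap ℝ A (c i))
    (hanti : ∀ i j, i ≠ j → f i * f j = -(f j * f i)) (v : Fin n → ℝ) :
    (∑ i, v i • f i) * (∑ i, v i • f i)
      = algebraMap ℝ A (∑ i, c i * (v i * v i)) := by
  rw [Finset.sum_mul_sum]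
  have hterm : ∀ i j : Fin n, (v i • f i) * (v j • f j) = (v i * v j) • (f i * f j) :=
    fun i j => smul_mul_smul_comm _ _ _ _
  simp only [hterm]
  have hsplit : ∀ i : Fin n, ∑ j, (v i * v j) • (f i * f j)
      = (v i * v i) • (f i * f i) + ∑ j ∈ Finset.univ.erase i, (v i * v j) • (f i * f j) := by
    intro i
    rw [← Finset.sum_erase_add _ _ (Finset.mem_univ i), add_comm]
  simp only [hsplit]
  rw [Finset.sum_add_distrib]
  have hoff : ∑ i, ∑ j ∈ Finset.univ.erase i, (v i * v j) • (f i * f j) = 0 := by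
    rw [Finset.sum_sigma']
    refine Finset.sum_involution (fun a _ => ⟨a.2, a.1⟩) ?_ ?_ ?_ ?_
    · rintro ⟨i, j⟩ ha
      simp only [Finset.mem_sigma, Finset.mem_univ, Finset.mem_erase] at ha
      have : f i * f j = -(f j * f i) := hanti i j (Ne.symm ha.2.1)
      rw [this]
      simp [mul_comm (v i) (v j)]
    · rintro ⟨i, j⟩ ha _
      simp only [Finset.mem_sigma, Finset.mem_univ, Finset.mem_erase] at ha
      intro h
      have hfst := congrArg Sigma.fst h
      simp only at hfst
      exact ha.2.1 hfst
    · rintro ⟨i, j⟩ ha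
      simp only [Finset.mem_sigma, Finset.mem_univ, Finset.mem_erase, and_true, true_and] at ha ⊢
      exact Ne.symm ha
    · rintro ⟨i, j⟩ _
      rfl
  rw [hoff, add_zero, map_sum]
  congr 1
  ext i
  rw [hsq i, Algebra.smul_def, ← map_mul]
  congr 1
  ring

/-- Packaging a family as a linear map on `Fin n → ℝ`. -/
noncomputable def mkMap {n : ℕ} (f : Fin n → A) : (Fin n → ℝ) →ₗ[ℝ] A :=
  ∑ i, LinearMap.smulRight (LinearMap.proj i) (f i)

lemma mkMap_apply {n : ℕ} (f : Fin n → A) (v : Fin n → ℝ) :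
    mkMap f v = ∑ i, v i • f i := by
  simp [mkMap]

lemma mkMap_single {n : ℕ} (f : Fin n → A) (k : Fin n) :
    mkMap f (Pi.single k 1) = f k := by
  rw [mkMap_apply, Finset.sum_eq_single k]
  · simp
  · intro i _ hik; simp [Pi.single_apply, hik]
  · simp

end Generic


section Matrices

/-- `σ₃`. -/
def MA : Matrix (Fin 2) (Fin 2) ℝ := !![1, 0; 0, -1]
/-- `σ₁`. -/
def MB : Matrix (Fin 2) (Fin 2) ℝ := !![0, 1; 1, 0]

lemma MA_mul_MA : MA * MA = 1 := by
  ext i j; fin_cases i <;> fin_cases j <;>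
    simp [MA, Matrix.mul_apply, Fin.sum_univ_two]

lemma MB_mul_MB : MB * MB = 1 := by
  ext i j; fin_cases i <;> fin_cases j <;>
    simp [MB, Matrix.mul_apply, Fin.sum_univ_two]

lemma MB_mul_MA : MB * MA = -(MA * MB) := by
  ext i j; fin_cases i <;> fin_cases j <;>
    simp [MA, MB, Matrix.mul_apply, Fin.sum_univ_two]

lemma MAB_mul_MAB : (MA * MB) * (MA * MB) = -1 := by
  ext i j; fin_cases i <;> fin_cases j <;>
    simp [MA, MB, Matrix.mul_apply, Fin.sum_univ_two]

lemma MAB_mul_MA : (MA * MB) * MA = -(MA * (MA * MB)) := by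
  ext i j; fin_cases i <;> fin_cases j <;>
    simp [MA, MB, Matrix.mul_apply, Fin.sum_univ_two]

lemma MAB_mul_MB : (MA * MB) * MB = -(MB * (MA * MB)) := by
  ext i j; fin_cases i <;> fin_cases j <;>
    simp [MA, MB, Matrix.mul_apply, Fin.sum_univ_two]

lemma MAB_mul_MBA : (MA * MB) * (MB * MA) = 1 := by
  ext i j; fin_cases i <;> fin_cases j <;>
    simp [MA, MB, Matrix.mul_apply, Fin.sum_univ_two]

/-- Every 2×2 matrix decomposes over `1, MA, MB, MA*MB`. -/
lemma matrix_decomp (M : Matrix (Fin 2) (Fin 2) ℝ) :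
    ((M 0 0 + M 1 1)/2) • (1 : Matrix (Fin 2) (Fin 2) ℝ)
      + ((M 0 0 - M 1 1)/2) • MA
      + ((M 0 1 + M 1 0)/2) • MB
      + ((M 0 1 - M 1 0)/2) • (MA * MB) = M := by
  ext i j; fin_cases i <;> fin_cases j <;>
    (simp [MA, MB, Matrix.mul_apply, Fin.sum_univ_two, Matrix.one_apply] <;> ring)

end Matrices

section NCHelpers

variable {A : Type*} [Ring A] [Algebra ℝ A]

lemma sq_of_mul_comm (x w : A) (cx cw : ℝ) (hc : x * w = w * x)
    (hx : x * x = algebraMap ℝ A cx) (hw : w * w = algebraMap ℝ A cw) :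
    (x * w) * (x * w) = algebraMap ℝ A (cx * cw) := by
  calc (x * w) * (x * w) = x * (w * x) * w := by noncomm_ring
    _ = x * (x * w) * w := by rw [hc]
    _ = (x * x) * (w * w) := by noncomm_ring
    _ = algebraMap ℝ A cx * algebraMap ℝ A cw := by rw [hx, hw]
    _ = algebraMap ℝ A (cx * cw) := by rw [← map_mul]

lemma anti_of_mul_comm (x y w : A) (hxy : x * y = -(y * x))
    (hxw : x * w = w * x) (hyw : y * w = w * y) :
    (x * w) * (y * w) = -((y * w) * (x * w)) := by
  calc (x * w) * (y * w) = x * (w * y) * w := by noncomm_ring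
    _ = x * (y * w) * w := by rw [hyw]
    _ = (x * y) * (w * w) := by noncomm_ring
    _ = (-(y * x)) * (w * w) := by rw [hxy]
    _ = -(y * (x * w) * w) := by noncomm_ring
    _ = -(y * (w * x) * w) := by rw [hxw]
    _ = -((y * w) * (x * w)) := by noncomm_ring

/-- If `x` anticommutes with `y` and `z`, and `y` with `z`, then `x*(y*z)` commutes with `z`. -/
lemma comm_z (x y z : A) (hxz : x * z = -(z * x)) (hyz : y * z = -(z * y)) :
    (x * (y * z)) * z = z * (x * (y * z)) := by
  have hzy : z * y = -(y * z) := by rw [hyz, neg_neg]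
  calc (x * (y * z)) * z = x * y * (z * z) := by noncomm_ring
    _ = -(x * (z * y) * z) := by rw [hzy]; noncomm_ring
    _ = -((x * z) * (y * z)) := by noncomm_ring
    _ = -((-(z * x)) * (y * z)) := by rw [hxz]
    _ = z * (x * (y * z)) := by noncomm_ring

lemma comm_y (x y z : A) (hxy : x * y = -(y * x)) (hyz : y * z = -(z * y)) :
    (x * (y * z)) * y = y * (x * (y * z)) := by
  have hzy : z * y = -(y * z) := by rw [hyz, neg_neg]
  have hyx : y * x = -(x * y) := by rw [hxy, neg_neg]
  calc (x * (y * z)) * y = x * (y * (z * y)) := by noncomm_ring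
    _ = x * (y * (-(y * z))) := by rw [hzy]
    _ = -(x * (y * (y * z))) := by noncomm_ring
    _ = (-(x * y)) * (y * z) := by noncomm_ring
    _ = (y * x) * (y * z) := by rw [hyx]
    _ = y * (x * (y * z)) := by noncomm_ring

/-- If `x` anticommutes with `y` and `z`, then `x` commutes with `y*z`. -/
lemma comm_w (x y z : A) (hxy : x * y = -(y * x)) (hxz : x * z = -(z * x)) :
    x * (y * z) = (y * z) * x := by
  calc x * (y * z) = (x * y) * z := by noncomm_ring
    _ = (-(y * x)) * z := by rw [hxy]
    _ = -(y * (x * z)) := by noncomm_ring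
    _ = -(y * (-(z * x))) := by rw [hxz]
    _ = (y * z) * x := by noncomm_ring

end NCHelpers


open scoped TensorProduct

section Concrete

variable (p q : ℕ)

local notation "Cl" => CliffordAlgebra (Qpq (p+2) q)
local notation "Cl'" => CliffordAlgebra (Qpq q p)
local notation "T" => CliffordAlgebra (Qpq q p) ⊗[ℝ] Matrix (Fin 2) (Fin 2) ℝ

/-- Index translation `Fin (p+2+q) → Fin (q+p)` (on values). -/
def tjn (k : ℕ) : ℕ := if k < p then q + k else k - (p + 2)

lemma tjn_lt {k : Fin (p+2+q)} (h1 : (k:ℕ) ≠ p) (h2 : (k:ℕ) ≠ p+1) :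
    tjn p q k < q + p := by
  have := k.isLt
  unfold tjn
  split <;> omega

lemma tjn_inj {k l : Fin (p+2+q)} (hk1 : (k:ℕ) ≠ p) (hk2 : (k:ℕ) ≠ p+1)
    (hl1 : (l:ℕ) ≠ p) (hl2 : (l:ℕ) ≠ p+1) (hkl : k ≠ l) :
    tjn p q k ≠ tjn p q l := by
  have hk := k.isLt
  have hl := l.isLt
  have : (k : ℕ) ≠ (l : ℕ) := fun h => hkl (Fin.ext h)
  unfold tjn
  split <;> split <;> omega

/-- The image of the `k`-th generator of `Cl_{p+2,q}` in `Cl_{q,p} ⊗ M₂(ℝ)`. -/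
noncomputable def gvec (k : Fin (p+2+q)) : T :=
  if h1 : (k : ℕ) = p then 1 ⊗ₜ MA
  else if h2 : (k : ℕ) = p + 1 then 1 ⊗ₜ MB
  else gen q p ⟨tjn p q k, tjn_lt p q h1 h2⟩ ⊗ₜ (MA * MB)

lemma gvec_p {k : Fin (p+2+q)} (h : (k:ℕ) = p) : gvec p q k = 1 ⊗ₜ MA := by
  rw [gvec, dif_pos h]

lemma gvec_p1 {k : Fin (p+2+q)} (h : (k:ℕ) = p+1) : gvec p q k = 1 ⊗ₜ MB := by
  rw [gvec, dif_neg (by omega), dif_pos h]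

lemma gvec_tensor {k : Fin (p+2+q)} (h1 : (k:ℕ) ≠ p) (h2 : (k:ℕ) ≠ p+1) :
    gvec p q k = gen q p ⟨tjn p q k, tjn_lt p q h1 h2⟩ ⊗ₜ (MA * MB) := by
  rw [gvec, dif_neg h1, dif_neg h2]

lemma gvec_sq (k : Fin (p+2+q)) :
    gvec p q k * gvec p q k
      = algebraMap ℝ T (if (k:ℕ) < p + 2 then (1:ℝ) else -1) := by
  have hk := k.isLt
  by_cases h1 : (k:ℕ) = p
  · rw [gvec_p p q h1, if_pos (by omega), map_one,
      Algebra.TensorProduct.tmul_mul_tmul, MA_mul_MA, one_mul]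
    rfl
  by_cases h2 : (k:ℕ) = p + 1
  · rw [gvec_p1 p q h2, if_pos (by omega), map_one,
      Algebra.TensorProduct.tmul_mul_tmul, MB_mul_MB, one_mul]
    rfl
  · rw [gvec_tensor p q h1 h2, Algebra.TensorProduct.tmul_mul_tmul,
      gen_sq, MAB_mul_MAB, Algebra.TensorProduct.algebraMap_apply]
    rw [TensorProduct.tmul_neg]
    by_cases h3 : (k:ℕ) < p
    · have hnq : ¬ (tjn p q k < q) := by unfold tjn; split <;> omega
      rw [if_neg hnq, if_pos (by omega)]
      rw [map_neg, map_one, TensorProduct.neg_tmul, neg_neg]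
    · have hq : tjn p q k < q := by unfold tjn; split <;> omega
      rw [if_pos hq, if_neg (by omega)]
      simp [TensorProduct.neg_tmul]

lemma anti_symm {A : Type*} [Ring A] {x y : A} (h : x * y = -(y * x)) :
    y * x = -(x * y) := by rw [h, neg_neg]

lemma gvec_anti {k l : Fin (p+2+q)} (hkl : k ≠ l) :
    gvec p q k * gvec p q l = -(gvec p q l * gvec p q k) := by
  have hk := k.isLt
  have hl := l.isLt
  have hklv : (k:ℕ) ≠ (l:ℕ) := fun h => hkl (Fin.ext h)
  -- helper for the (tensor, A/B) mixed cases
  have mixTA : ∀ (x : CliffordAlgebra (Qpq q p)),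
      (x ⊗ₜ (MA * MB) : T) * (1 ⊗ₜ MA) = -((1 ⊗ₜ MA : T) * (x ⊗ₜ (MA * MB))) := by
    intro x
    rw [Algebra.TensorProduct.tmul_mul_tmul, Algebra.TensorProduct.tmul_mul_tmul,
      mul_one, one_mul, MAB_mul_MA, TensorProduct.tmul_neg]
  have mixTB : ∀ (x : CliffordAlgebra (Qpq q p)),
      (x ⊗ₜ (MA * MB) : T) * (1 ⊗ₜ MB) = -((1 ⊗ₜ MB : T) * (x ⊗ₜ (MA * MB))) := by
    intro x
    rw [Algebra.TensorProduct.tmul_mul_tmul, Algebra.TensorProduct.tmul_mul_tmul,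
      mul_one, one_mul, MAB_mul_MB, TensorProduct.tmul_neg]
  have mixAB : (1 ⊗ₜ MA : T) * (1 ⊗ₜ MB) = -((1 ⊗ₜ MB : T) * (1 ⊗ₜ MA)) := by
    rw [Algebra.TensorProduct.tmul_mul_tmul, Algebra.TensorProduct.tmul_mul_tmul,
      mul_one]
    simp [MB_mul_MA, TensorProduct.neg_tmul, TensorProduct.tmul_neg]
  by_cases hk1 : (k:ℕ) = p
  · rw [gvec_p p q hk1]
    by_cases hl2 : (l:ℕ) = p + 1
    · rw [gvec_p1 p q hl2]; exact mixAB
    · rw [gvec_tensor p q (by omega) hl2]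
      exact anti_symm (mixTA _)
  by_cases hk2 : (k:ℕ) = p + 1
  · rw [gvec_p1 p q hk2]
    by_cases hl1 : (l:ℕ) = p
    · rw [gvec_p p q hl1]; exact anti_symm mixAB
    · rw [gvec_tensor p q hl1 (by omega)]
      exact anti_symm (mixTB _)
  · rw [gvec_tensor p q hk1 hk2]
    by_cases hl1 : (l:ℕ) = p
    · rw [gvec_p p q hl1]; exact mixTA _
    by_cases hl2 : (l:ℕ) = p + 1
    · rw [gvec_p1 p q hl2]; exact mixTB _
    · rw [gvec_tensor p q hl1 hl2]
      have hne : (⟨tjn p q k, tjn_lt p q hk1 hk2⟩ : Fin (q+p))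
          ≠ ⟨tjn p q l, tjn_lt p q hl1 hl2⟩ := by
        simp only [ne_eq, Fin.mk.injEq]
        exact tjn_inj p q hk1 hk2 hl1 hl2 hkl
      rw [Algebra.TensorProduct.tmul_mul_tmul, Algebra.TensorProduct.tmul_mul_tmul,
        gen_anti q p hne, TensorProduct.neg_tmul]

/-- The forward algebra map `Cl_{p+2,q} → Cl_{q,p} ⊗ M₂(ℝ)`. -/
noncomputable def Φ : CliffordAlgebra (Qpq (p+2) q) →ₐ[ℝ] T :=
  CliffordAlgebra.lift (Qpq (p+2) q)
    ⟨mkMap (gvec p q), by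
      intro v
      rw [mkMap_apply, sum_smul_sq (gvec p q) (fun k => if (k:ℕ) < p + 2 then (1:ℝ) else -1)
        (gvec_sq p q) (fun i j hij => gvec_anti p q hij) v, Qpq_apply]⟩

lemma Φ_gen (k : Fin (p+2+q)) : Φ p q (gen (p+2) q k) = gvec p q k := by
  rw [Φ, gen, CliffordAlgebra.lift_ι_apply, mkMap_single]

/-- The two distinguished positive generators of `Cl_{p+2,q}`. -/
noncomputable def ea : CliffordAlgebra (Qpq (p+2) q) := gen (p+2) q ⟨p, by omega⟩
noncomputable def eb : CliffordAlgebra (Qpq (p+2) q) := gen (p+2) q ⟨p+1, by omega⟩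

lemma ea_sq : ea p q * ea p q = 1 := by
  rw [ea, gen_sq]; rw [if_pos (by omega : p < p + 2)]; exact map_one _

lemma eb_sq : eb p q * eb p q = 1 := by
  rw [eb, gen_sq]; rw [if_pos (by omega : p + 1 < p + 2)]; exact map_one _

lemma ea_anti_eb : ea p q * eb p q = -(eb p q * ea p q) :=
  gen_anti (p+2) q (by simp [Fin.ext_iff])

lemma omega_sq : (eb p q * ea p q) * (eb p q * ea p q)
    = algebraMap ℝ (CliffordAlgebra (Qpq (p+2) q)) (-1) := by
  have h : eb p q * ea p q = -(ea p q * eb p q) := anti_symm (ea_anti_eb p q)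
  calc (eb p q * ea p q) * (eb p q * ea p q)
      = eb p q * (ea p q * eb p q) * ea p q := by noncomm_ring
    _ = eb p q * (-(eb p q * ea p q)) * ea p q := by rw [ea_anti_eb]
    _ = -((eb p q * eb p q) * (ea p q * ea p q)) := by noncomm_ring
    _ = -1 := by rw [eb_sq, ea_sq, one_mul]
    _ = algebraMap ℝ _ (-1) := by rw [map_neg, map_one]

/-- Index translation `Fin (q+p) → Fin (p+2+q)` (on values). -/
def eIdxn (j : ℕ) : ℕ := if j < q then p + 2 + j else j - q

lemma eIdxn_lt (j : Fin (q+p)) : eIdxn p q j < p + 2 + q := by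
  have := j.isLt; unfold eIdxn; split <;> omega

lemma eIdxn_ne_p (j : Fin (q+p)) : eIdxn p q j ≠ p := by
  have := j.isLt; unfold eIdxn; split <;> omega

lemma eIdxn_ne_p1 (j : Fin (q+p)) : eIdxn p q j ≠ p + 1 := by
  have := j.isLt; unfold eIdxn; split <;> omega

lemma eIdxn_inj {i j : Fin (q+p)} (hij : i ≠ j) : eIdxn p q i ≠ eIdxn p q j := by
  have hi := i.isLt; have hj := j.isLt
  have : (i:ℕ) ≠ (j:ℕ) := fun h => hij (Fin.ext h)
  unfold eIdxn; split <;> split <;> omega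

/-- The basis image for the reverse map. -/
noncomputable def hvec (j : Fin (q+p)) : CliffordAlgebra (Qpq (p+2) q) :=
  gen (p+2) q ⟨eIdxn p q j, eIdxn_lt p q j⟩ * (eb p q * ea p q)

lemma gen_anti_ea {k : Fin (p+2+q)} (h : (k:ℕ) ≠ p) :
    gen (p+2) q k * ea p q = -(ea p q * gen (p+2) q k) :=
  gen_anti (p+2) q (by simp [Fin.ext_iff]; omega)

lemma gen_anti_eb {k : Fin (p+2+q)} (h : (k:ℕ) ≠ p + 1) :
    gen (p+2) q k * eb p q = -(eb p q * gen (p+2) q k) :=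
  gen_anti (p+2) q (by simp [Fin.ext_iff]; omega)

lemma gen_comm_omega {k : Fin (p+2+q)} (h1 : (k:ℕ) ≠ p) (h2 : (k:ℕ) ≠ p + 1) :
    gen (p+2) q k * (eb p q * ea p q) = (eb p q * ea p q) * gen (p+2) q k :=
  comm_w _ _ _ (gen_anti_eb p q h2) (gen_anti_ea p q h1)

lemma hvec_sq (j : Fin (q+p)) :
    hvec p q j * hvec p q j
      = algebraMap ℝ _ (if (j:ℕ) < q then (1:ℝ) else -1) := by
  rw [hvec, sq_of_mul_comm _ _ (if (eIdxn p q j : ℕ) < p + 2 then (1:ℝ) else -1) (-1)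
    (gen_comm_omega p q (eIdxn_ne_p p q j) (eIdxn_ne_p1 p q j))
    (gen_sq (p+2) q _) (omega_sq p q)]
  congr 1
  have := j.isLt
  by_cases h : (j:ℕ) < q
  · rw [if_pos h, if_neg (by unfold eIdxn; split <;> omega)]; norm_num
  · rw [if_neg h, if_pos (by unfold eIdxn; split <;> omega)]; norm_num

lemma hvec_anti {i j : Fin (q+p)} (hij : i ≠ j) :
    hvec p q i * hvec p q j = -(hvec p q j * hvec p q i) := by
  rw [hvec, hvec]
  exact anti_of_mul_comm _ _ _
    (gen_anti (p+2) q (by simp [Fin.ext_iff]; exact eIdxn_inj p q hij))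
    (gen_comm_omega p q (eIdxn_ne_p p q i) (eIdxn_ne_p1 p q i))
    (gen_comm_omega p q (eIdxn_ne_p p q j) (eIdxn_ne_p1 p q j))

/-- The reverse algebra map on the Clifford factor. -/
noncomputable def φ₁ : CliffordAlgebra (Qpq q p) →ₐ[ℝ] CliffordAlgebra (Qpq (p+2) q) :=
  CliffordAlgebra.lift (Qpq q p)
    ⟨mkMap (hvec p q), by
      intro v
      rw [mkMap_apply, sum_smul_sq (hvec p q) (fun j => if (j:ℕ) < q then (1:ℝ) else -1)
        (hvec_sq p q) (fun i j hij => hvec_anti p q hij) v, Qpq_apply]⟩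

lemma φ₁_gen (j : Fin (q+p)) : φ₁ p q (gen q p j) = hvec p q j := by
  rw [φ₁, gen, CliffordAlgebra.lift_ι_apply, mkMap_single]

section MatrixHom

lemma ba_eq : eb p q * ea p q = -(ea p q * eb p q) := anti_symm (ea_anti_eb p q)

lemma a_ab : ea p q * (ea p q * eb p q) = eb p q := by
  rw [← mul_assoc, ea_sq, one_mul]

lemma b_ab : eb p q * (ea p q * eb p q) = -(ea p q) := by
  calc eb p q * (ea p q * eb p q) = (eb p q * ea p q) * eb p q := by rw [mul_assoc]
    _ = (-(ea p q * eb p q)) * eb p q := by rw [ba_eq]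
    _ = -(ea p q * (eb p q * eb p q)) := by noncomm_ring
    _ = -(ea p q) := by rw [eb_sq, mul_one]

lemma ab_a : (ea p q * eb p q) * ea p q = -(eb p q) := by
  calc (ea p q * eb p q) * ea p q = ea p q * (eb p q * ea p q) := by rw [mul_assoc]
    _ = ea p q * (-(ea p q * eb p q)) := by rw [ba_eq]
    _ = -((ea p q * ea p q) * eb p q) := by noncomm_ring
    _ = -(eb p q) := by rw [ea_sq, one_mul]

lemma ab_b : (ea p q * eb p q) * eb p q = ea p q := by
  rw [mul_assoc, eb_sq, mul_one]

lemma ab_ab : (ea p q * eb p q) * (ea p q * eb p q) = -1 := by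
  calc (ea p q * eb p q) * (ea p q * eb p q)
      = ((ea p q * eb p q) * ea p q) * eb p q := by noncomm_ring
    _ = (-(eb p q)) * eb p q := by rw [ab_a]
    _ = -(eb p q * eb p q) := by noncomm_ring
    _ = -1 := by rw [eb_sq]

/-- The linear map `M₂(ℝ) → Cl_{p+2,q}` sending `MA ↦ ea`, `MB ↦ eb`. -/
noncomputable def Lmat : Matrix (Fin 2) (Fin 2) ℝ →ₗ[ℝ] CliffordAlgebra (Qpq (p+2) q) where
  toFun M := ((M 0 0 + M 1 1)/2) • (1 : CliffordAlgebra (Qpq (p+2) q))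
      + ((M 0 0 - M 1 1)/2) • ea p q
      + ((M 0 1 + M 1 0)/2) • eb p q
      + ((M 0 1 - M 1 0)/2) • (ea p q * eb p q)
  map_add' M N := by
    simp only [Matrix.add_apply]
    module
  map_smul' r M := by
    simp only [Matrix.smul_apply, smul_eq_mul, RingHom.id_apply]
    module

lemma Lmat_one : Lmat p q 1 = 1 := by
  simp only [Lmat, LinearMap.coe_mk, AddHom.coe_mk, Matrix.one_apply_eq,
    Matrix.one_apply_ne (by decide : (0 : Fin 2) ≠ 1),
    Matrix.one_apply_ne (by decide : (1 : Fin 2) ≠ 0)]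
  norm_num

lemma Lmat_mul (M N : Matrix (Fin 2) (Fin 2) ℝ) :
    Lmat p q (M * N) = Lmat p q M * Lmat p q N := by
  simp only [Lmat, LinearMap.coe_mk, AddHom.coe_mk, Matrix.mul_apply, Fin.sum_univ_two]
  simp only [add_mul, mul_add, smul_mul_smul_comm, one_mul, mul_one,
    ea_sq, eb_sq, ba_eq, a_ab, b_ab, ab_a, ab_b, ab_ab, smul_neg]
  module

/-- The reverse algebra map on the matrix factor. -/
noncomputable def φ₂ : Matrix (Fin 2) (Fin 2) ℝ →ₐ[ℝ] CliffordAlgebra (Qpq (p+2) q) :=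
  AlgHom.ofLinearMap (Lmat p q) (Lmat_one p q) (Lmat_mul p q)

lemma φ₂_MA : φ₂ p q MA = ea p q := by
  simp only [φ₂, AlgHom.ofLinearMap_apply, Lmat, LinearMap.coe_mk, AddHom.coe_mk, MA]
  norm_num

lemma φ₂_MB : φ₂ p q MB = eb p q := by
  simp only [φ₂, AlgHom.ofLinearMap_apply, Lmat, LinearMap.coe_mk, AddHom.coe_mk, MB]
  norm_num

lemma φ₂_MAB : φ₂ p q (MA * MB) = ea p q * eb p q := by
  rw [map_mul, φ₂_MA, φ₂_MB]

end MatrixHom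

section Inverse

lemma commute_smul_left {A : Type*} [Ring A] [Algebra ℝ A] {x y : A} (r : ℝ)
    (h : Commute x y) : Commute (r • x) y := by
  unfold Commute SemiconjBy
  rw [smul_mul_assoc, h.eq, mul_smul_comm]

lemma φ₁_apply_ι (v : Fin (q+p) → ℝ) :
    φ₁ p q (CliffordAlgebra.ι (Qpq q p) v) = ∑ j, v j • hvec p q j := by
  rw [φ₁, CliffordAlgebra.lift_ι_apply, mkMap_apply]

lemma hvec_comm_ea (j : Fin (q+p)) : Commute (hvec p q j) (ea p q) :=
  comm_z _ _ _ (gen_anti_ea p q (eIdxn_ne_p p q j)) (ba_eq p q)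

lemma hvec_comm_eb (j : Fin (q+p)) : Commute (hvec p q j) (eb p q) :=
  comm_y _ _ _ (gen_anti_eb p q (eIdxn_ne_p1 p q j)) (ba_eq p q)

lemma φ₁_comm_ab (x : CliffordAlgebra (Qpq q p)) :
    Commute (φ₁ p q x) (ea p q) ∧ Commute (φ₁ p q x) (eb p q) := by
  induction x using CliffordAlgebra.induction with
  | algebraMap r =>
    simp only [AlgHom.commutes]
    exact ⟨Algebra.commutes r _, Algebra.commutes r _⟩
  | ι v =>
    rw [φ₁_apply_ι]
    constructor <;>
      (refine Commute.sum_left _ _ _ fun j _ => commute_smul_left _ ?_)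
    · exact hvec_comm_ea p q j
    · exact hvec_comm_eb p q j
  | mul x y hx hy =>
    simp only [map_mul]
    exact ⟨hx.1.mul_left hy.1, hx.2.mul_left hy.2⟩
  | add x y hx hy =>
    simp only [map_add]
    exact ⟨hx.1.add_left hy.1, hx.2.add_left hy.2⟩

lemma φ₁_comm_φ₂ (x : CliffordAlgebra (Qpq q p)) (M : Matrix (Fin 2) (Fin 2) ℝ) :
    Commute (φ₁ p q x) (φ₂ p q M) := by
  obtain ⟨ha, hb⟩ := φ₁_comm_ab p q x
  have : φ₂ p q M = ((M 0 0 + M 1 1)/2) • (1 : CliffordAlgebra (Qpq (p+2) q))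
      + ((M 0 0 - M 1 1)/2) • ea p q
      + ((M 0 1 + M 1 0)/2) • eb p q
      + ((M 0 1 - M 1 0)/2) • (ea p q * eb p q) := rfl
  rw [this]
  exact (((((Commute.one_right _).smul_right _).add_right
    ((ha.smul_right _))).add_right ((hb.smul_right _))).add_right
    (((ha.mul_right hb).smul_right _)))

/-- The reverse algebra map. -/
noncomputable def Ψ : (CliffordAlgebra (Qpq q p) ⊗[ℝ] Matrix (Fin 2) (Fin 2) ℝ)
    →ₐ[ℝ] CliffordAlgebra (Qpq (p+2) q) :=
  Algebra.TensorProduct.lift (φ₁ p q) (φ₂ p q) (φ₁_comm_φ₂ p q)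

lemma ba_ab : (eb p q * ea p q) * (ea p q * eb p q) = 1 := by
  calc (eb p q * ea p q) * (ea p q * eb p q)
      = eb p q * ((ea p q * ea p q) * eb p q) := by noncomm_ring
    _ = eb p q * eb p q := by rw [ea_sq, one_mul]
    _ = 1 := eb_sq p q

lemma Ψ_gvec (k : Fin (p+2+q)) : Ψ p q (gvec p q k) = gen (p+2) q k := by
  have hk := k.isLt
  by_cases h1 : (k:ℕ) = p
  · have hfin : (⟨p, by omega⟩ : Fin (p+2+q)) = k := Fin.ext (by simp [h1])
    rw [gvec_p p q h1, Ψ, Algebra.TensorProduct.lift_tmul, map_one, one_mul,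
      φ₂_MA, ea, hfin]
  by_cases h2 : (k:ℕ) = p + 1
  · have hfin : (⟨p+1, by omega⟩ : Fin (p+2+q)) = k := Fin.ext (by simp [h2])
    rw [gvec_p1 p q h2, Ψ, Algebra.TensorProduct.lift_tmul, map_one, one_mul,
      φ₂_MB, eb, hfin]
  · rw [gvec_tensor p q h1 h2, Ψ, Algebra.TensorProduct.lift_tmul, φ₁_gen, φ₂_MAB,
      hvec, mul_assoc, ba_ab, mul_one]
    congr 1
    apply Fin.ext
    simp only
    unfold eIdxn tjn
    split <;> split <;> omega

lemma comp1 : (Ψ p q).comp (Φ p q) = AlgHom.id ℝ _ := by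
  apply CliffordAlgebra.hom_ext
  apply Module.Basis.ext (Pi.basisFun ℝ (Fin (p+2+q)))
  intro k
  simp only [Pi.basisFun_apply, LinearMap.coe_comp, Function.comp_apply,
    AlgHom.toLinearMap_apply, AlgHom.coe_comp, AlgHom.coe_id, id_eq]
  show Ψ p q (Φ p q (gen (p+2) q k)) = gen (p+2) q k
  rw [Φ_gen, Ψ_gvec]

lemma tjn_eIdxn (j : Fin (q+p)) : tjn p q (eIdxn p q j) = (j : ℕ) := by
  have := j.isLt
  unfold tjn eIdxn
  split <;> split <;> omega

lemma Φ_ea : Φ p q (ea p q) = 1 ⊗ₜ MA := by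
  rw [ea, Φ_gen, gvec_p p q rfl]

lemma Φ_eb : Φ p q (eb p q) = 1 ⊗ₜ MB := by
  rw [eb, Φ_gen, gvec_p1 p q rfl]

lemma Φ_hvec (j : Fin (q+p)) : Φ p q (hvec p q j) = gen q p j ⊗ₜ (1 : Matrix (Fin 2) (Fin 2) ℝ) := by
  have hgv : gvec p q ⟨eIdxn p q j, eIdxn_lt p q j⟩
      = gen q p j ⊗ₜ (MA * MB) := by
    rw [gvec_tensor p q (eIdxn_ne_p p q j) (eIdxn_ne_p1 p q j)]
    congr 1
    · congr 1
      exact Fin.ext (tjn_eIdxn p q j)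
  rw [hvec, map_mul, map_mul, Φ_gen, Φ_ea, Φ_eb, hgv,
    Algebra.TensorProduct.tmul_mul_tmul, Algebra.TensorProduct.tmul_mul_tmul,
    one_mul, mul_one]
  rw [show MA * MB * (MB * MA) = 1 from MAB_mul_MBA]

lemma comp2 : (Φ p q).comp (Ψ p q) = AlgHom.id ℝ _ := by
  apply Algebra.TensorProduct.ext
  · apply CliffordAlgebra.hom_ext
    apply Module.Basis.ext (Pi.basisFun ℝ (Fin (q+p)))
    intro j
    simp only [Pi.basisFun_apply, LinearMap.coe_comp, Function.comp_apply,
      AlgHom.toLinearMap_apply, AlgHom.coe_comp, Algebra.TensorProduct.includeLeft_apply]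
    show Φ p q (Ψ p q (gen q p j ⊗ₜ 1)) = gen q p j ⊗ₜ 1
    rw [Ψ, Algebra.TensorProduct.lift_tmul, map_one, mul_one, φ₁_gen, Φ_hvec]
  · apply AlgHom.ext
    intro M
    simp only [AlgHom.coe_comp, AlgHom.coe_restrictScalars', Function.comp_apply,
      Algebra.TensorProduct.includeRight_apply, AlgHom.coe_id, id_eq]
    show Φ p q (Ψ p q ((1 : CliffordAlgebra (Qpq q p)) ⊗ₜ M)) = 1 ⊗ₜ M
    rw [Ψ, Algebra.TensorProduct.lift_tmul, map_one, one_mul]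
    have hφ₂ : φ₂ p q M = ((M 0 0 + M 1 1)/2) • (1 : CliffordAlgebra (Qpq (p+2) q))
        + ((M 0 0 - M 1 1)/2) • ea p q
        + ((M 0 1 + M 1 0)/2) • eb p q
        + ((M 0 1 - M 1 0)/2) • (ea p q * eb p q) := rfl
    rw [hφ₂]
    simp only [map_add, map_smul, map_one, map_mul, Φ_ea, Φ_eb]
    conv_rhs => rw [← matrix_decomp M]
    simp only [TensorProduct.tmul_add, TensorProduct.tmul_smul,
      Algebra.TensorProduct.tmul_mul_tmul, one_mul, ← Algebra.TensorProduct.one_def]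

end Inverse

end Concrete

end CliffordPeriodicity

open scoped TensorProduct in
theorem clifford_periodicity_plus_two (p q : ℕ) :
    Nonempty (CliffordAlgebra (Qpq (p + 2) q) ≃ₐ[ℝ]
      (CliffordAlgebra (Qpq q p) ⊗[ℝ] Matrix (Fin 2) (Fin 2) ℝ)) := by
  exact ⟨AlgEquiv.ofAlgHom (CliffordPeriodicity.Φ p q) (CliffordPeriodicity.Ψ p q)
    (CliffordPeriodicity.comp2 p q) (CliffordPeriodicity.comp1 p q)⟩
end

section
/- For all natural numbers p and q, the real Clifford algebra Cl_{p,q+2}(ℝ) is isomorphic, as an ℝ-algebra, to the tensor product Cl_{q,p}(ℝ) ⊗_ℝ ℍ, where ℍ is the real quaternion algebra. -/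
/-
In `Cl(Q ⊥ ⟨c₁, c₂⟩)` with `c₁ c₂ = 1`, let `e₁, e₂` span the plane `⟨c₁, c₂⟩` and `ω = e₁ e₂`.
Then `ω² = -c₁ c₂ = -1`, `ω` anticommutes with `e₁, e₂` and, being even, commutes with the
vectors `m = (m, 0)`; so `(m ω)² = -Q(m)` and `m ↦ m ω` is a Clifford map for `-Q` whose image
commutes with the quaternion algebra `⟨e₁, e₂⟩ ≅ ℍ[c₁, c₂]`. This gives `Cl(-Q) ⊗ ℍ[c₁, c₂] → Cl(Q ⊥ ⟨c₁, c₂⟩)`, inverted by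
`(m, v) ↦ m ⊗ (-k) + 1 ⊗ (v₁ i + v₂ j)`. The theorem is the case `c₁ = c₂ = -1`, `Q = Q_{p,q}`,
since `Q_{p,q+2} ≅ Q_{p,q} ⊥ ⟨-1, -1⟩` and `-Q_{p,q} ≅ Q_{q,p}`.
-/

open scoped TensorProduct Quaternion

namespace QuaternionAlgebra

variable {R : Type*} [CommRing R] {c₁ c₂ : R}

theorem k_mul_k : (⟨0, 0, 0, 1⟩ : ℍ[R,c₁,c₂]) * ⟨0, 0, 0, 1⟩ = -(c₁ * c₂ : R) := by
  ext <;> simp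

theorem k_mul_span_ij (a b : R) :
    (⟨0, 0, 0, 1⟩ : ℍ[R,c₁,c₂]) * ⟨0, a, b, 0⟩ = -((⟨0, a, b, 0⟩ : ℍ[R,c₁,c₂]) * ⟨0, 0, 0, 1⟩) := by
  ext <;> simp

end QuaternionAlgebra

section

variable {R M M₁ M₂ A : Type*} [CommRing R] [AddCommGroup M] [Module R M]
  [AddCommGroup M₁] [Module R M₁] [AddCommGroup M₂] [Module R M₂] [Ring A] [Algebra R A]

theorem LinearMap.coprod_mul_self {Q₁ : QuadraticForm R M₁} {Q₂ : QuadraticForm R M₂}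
    {f₁ : M₁ →ₗ[R] A} {f₂ : M₂ →ₗ[R] A}
    (h₁ : ∀ m, f₁ m * f₁ m = algebraMap R A (Q₁ m)) (h₂ : ∀ m, f₂ m * f₂ m = algebraMap R A (Q₂ m))
    (h : ∀ m₁ m₂, f₁ m₁ * f₂ m₂ + f₂ m₂ * f₁ m₁ = 0) (x : M₁ × M₂) :
    f₁.coprod f₂ x * f₁.coprod f₂ x = algebraMap R A (Q₁.prod Q₂ x) := by
  rw [LinearMap.coprod_apply, QuadraticMap.prod_apply, map_add, ← h₁, ← h₂]
  calc (f₁ x.1 + f₂ x.2) * (f₁ x.1 + f₂ x.2)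
      = f₁ x.1 * f₁ x.1 + f₂ x.2 * f₂ x.2 + (f₁ x.1 * f₂ x.2 + f₂ x.2 * f₁ x.1) := by noncomm_ring
    _ = f₁ x.1 * f₁ x.1 + f₂ x.2 * f₂ x.2 := by rw [h, add_zero]

theorem CliffordAlgebra.commute_of_commute_ι {Q : QuadraticForm R M}
    (f : CliffordAlgebra Q →ₐ[R] A) {a : A} (h : ∀ m, Commute (f (CliffordAlgebra.ι Q m)) a)
    (x : CliffordAlgebra Q) : Commute (f x) a := by
  induction x using CliffordAlgebra.induction with
  | algebraMap r => rw [AlgHom.commutes]; exact Algebra.commute_algebraMap_left r a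
  | ι m => exact h m
  | mul x y hx hy => rw [map_mul]; exact hx.mul_left hy
  | add x y hx hy => rw [map_add]; exact hx.add_left hy

end

namespace CliffordAlgebra

open QuaternionAlgebra CliffordAlgebraQuaternion

variable {R M : Type*} [CommRing R] [AddCommGroup M] [Module R M] (Q : QuadraticForm R M)
  {c₁ c₂ : R}

noncomputable def toTensorQuaternion (hc : c₁ * c₂ = 1) :
    CliffordAlgebra (Q.prod (CliffordAlgebraQuaternion.Q c₁ c₂)) →ₐ[R]
      CliffordAlgebra (-Q) ⊗[R] ℍ[R,c₁,c₂] :=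
  lift _ ⟨((TensorProduct.mk R _ _).flip (-⟨0, 0, 0, 1⟩) ∘ₗ ι (-Q)).coprod
      ((Algebra.TensorProduct.includeRight.comp toQuaternion).toLinearMap ∘ₗ ι _),
    LinearMap.coprod_mul_self
      (fun m => by
        show (ι (-Q) m ⊗ₜ (-⟨0, 0, 0, 1⟩ : ℍ[R,c₁,c₂])) *
          (ι (-Q) m ⊗ₜ (-⟨0, 0, 0, 1⟩ : ℍ[R,c₁,c₂])) = _
        rw [Algebra.TensorProduct.tmul_mul_tmul, ι_sq_scalar, neg_mul_neg, k_mul_k, hc,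
          QuaternionAlgebra.coe_one, TensorProduct.tmul_neg,
          ← Algebra.TensorProduct.algebraMap_apply, ← map_neg, neg_apply, neg_neg])
      (fun v => by
        simp only [LinearMap.comp_apply, AlgHom.toLinearMap_apply, ← map_mul, ι_sq_scalar,
          AlgHom.commutes])
      (fun m v => by
        rw [LinearMap.comp_apply, LinearMap.flip_apply, TensorProduct.mk_apply,
          LinearMap.comp_apply, AlgHom.toLinearMap_apply, AlgHom.comp_apply, toQuaternion_ι,
          Algebra.TensorProduct.includeRight_apply, Algebra.TensorProduct.tmul_mul_tmul,
          Algebra.TensorProduct.tmul_mul_tmul, one_mul, mul_one, ← TensorProduct.tmul_add,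
          neg_mul, mul_neg, k_mul_span_ij, neg_neg, add_neg_cancel, TensorProduct.tmul_zero])⟩

theorem toTensorQuaternion_ι (hc : c₁ * c₂ = 1) (x : M × (R × R)) :
    toTensorQuaternion Q hc (ι _ x) =
      ι (-Q) x.1 ⊗ₜ (-⟨0, 0, 0, 1⟩ : ℍ[R,c₁,c₂]) + 1 ⊗ₜ toQuaternion (ι _ x.2) :=
  lift_ι_apply _ _ _

noncomputable def quaternionToProd :
    ℍ[R,c₁,c₂] →ₐ[R] CliffordAlgebra (Q.prod (CliffordAlgebraQuaternion.Q c₁ c₂)) :=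
  (map (QuadraticMap.Isometry.inr _ _)).comp ofQuaternion

theorem quaternionToProd_toQuaternion_ι (v : R × R) :
    quaternionToProd Q (toQuaternion (ι (CliffordAlgebraQuaternion.Q c₁ c₂) v)) = ι _ (0, v) := by
  rw [quaternionToProd, AlgHom.comp_apply, ofQuaternion_toQuaternion, map_apply_ι,
    QuadraticMap.Isometry.inr_apply]

theorem quaternionToProd_k_mul_ι_inr (v : R × R) :
    quaternionToProd Q (⟨0, 0, 0, 1⟩ : ℍ[R,c₁,c₂]) * ι _ (0, v) =
      -(ι _ (0, v) * quaternionToProd Q ⟨0, 0, 0, 1⟩) := by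
  rw [← quaternionToProd_toQuaternion_ι, ← map_mul, ← map_mul, toQuaternion_ι, k_mul_span_ij,
    map_neg]

theorem commute_quaternionToProd_k_ι_inl (m : M) :
    Commute (quaternionToProd Q (⟨0, 0, 0, 1⟩ : ℍ[R,c₁,c₂])) (ι _ (m, 0)) := by
  have hk : ofQuaternion (⟨0, 0, 0, 1⟩ : ℍ[R,c₁,c₂]) ∈ evenOdd _ 0 := by
    rw [ofQuaternion_mk, map_zero, zero_smul, zero_smul, one_smul, zero_add, zero_add, zero_add]
    exact ι_mul_ι_mem_evenOdd_zero _ _ _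
  rw [← QuadraticMap.Isometry.inl_apply Q (CliffordAlgebraQuaternion.Q c₁ c₂), ← map_apply_ι]
  exact commute_map_mul_map_of_isOrtho_of_mem_evenOdd_zero_left _ _
    (fun _ _ => QuadraticMap.IsOrtho.inr_inl _ _) _ _ hk (ι_mem_evenOdd_one _ m)

theorem quaternionToProd_k_mul_k (hc : c₁ * c₂ = 1) :
    quaternionToProd Q (⟨0, 0, 0, 1⟩ : ℍ[R,c₁,c₂]) * quaternionToProd Q ⟨0, 0, 0, 1⟩ = -1 := by
  rw [← map_mul, k_mul_k, hc, QuaternionAlgebra.coe_one, map_neg, map_one]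

noncomputable def negToProd (hc : c₁ * c₂ = 1) :
    CliffordAlgebra (-Q) →ₐ[R] CliffordAlgebra (Q.prod (CliffordAlgebraQuaternion.Q c₁ c₂)) :=
  lift (-Q) ⟨LinearMap.mulRight R (quaternionToProd Q ⟨0, 0, 0, 1⟩) ∘ₗ ι _ ∘ₗ LinearMap.inl R M _,
    fun m => by
      rw [LinearMap.comp_apply, LinearMap.comp_apply, LinearMap.inl_apply, LinearMap.mulRight_apply,
        (commute_quaternionToProd_k_ι_inl Q m).mul_mul_mul_comm, ι_sq_scalar,
        quaternionToProd_k_mul_k Q hc, mul_neg_one, ← map_neg, QuadraticMap.prod_apply, map_zero,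
        add_zero, neg_apply]⟩

theorem negToProd_ι (hc : c₁ * c₂ = 1) (m : M) :
    negToProd Q hc (ι (-Q) m) = ι _ (m, 0) * quaternionToProd Q ⟨0, 0, 0, 1⟩ :=
  lift_ι_apply _ _ _

theorem commute_negToProd_quaternionToProd (hc : c₁ * c₂ = 1) (x : CliffordAlgebra (-Q))
    (y : ℍ[R,c₁,c₂]) : Commute (negToProd Q hc x) (quaternionToProd Q y) := by
  refine (commute_of_commute_ι
    (map (QuadraticMap.Isometry.inr Q (CliffordAlgebraQuaternion.Q c₁ c₂))) (fun v => ?_)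
    (ofQuaternion y)).symm
  refine (commute_of_commute_ι _ (fun m => ?_) x).symm
  rw [map_apply_ι, QuadraticMap.Isometry.inr_apply, negToProd_ι, Commute, SemiconjBy, mul_assoc,
    quaternionToProd_k_mul_ι_inr, mul_neg, ← mul_assoc,
    ι_mul_ι_comm_of_isOrtho (QuadraticMap.IsOrtho.inl_inr m v), neg_mul, neg_neg, mul_assoc]

noncomputable def ofTensorQuaternion (hc : c₁ * c₂ = 1) :
    CliffordAlgebra (-Q) ⊗[R] ℍ[R,c₁,c₂] →ₐ[R]
      CliffordAlgebra (Q.prod (CliffordAlgebraQuaternion.Q c₁ c₂)) :=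
  Algebra.TensorProduct.lift (negToProd Q hc) (quaternionToProd Q)
    (commute_negToProd_quaternionToProd Q hc)

theorem toTensorQuaternion_comp_quaternionToProd (hc : c₁ * c₂ = 1) :
    (toTensorQuaternion Q hc).comp (quaternionToProd Q) = Algebra.TensorProduct.includeRight := by
  have h : (toTensorQuaternion Q hc).comp (map (QuadraticMap.Isometry.inr _ _)) =
      Algebra.TensorProduct.includeRight.comp toQuaternion := by
    refine hom_ext (LinearMap.ext fun v => ?_)
    simp [toTensorQuaternion_ι]
  rw [quaternionToProd, ← AlgHom.comp_assoc, h, AlgHom.comp_assoc, toQuaternion_comp_ofQuaternion,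
    AlgHom.comp_id]

theorem ofTensorQuaternion_tmul (hc : c₁ * c₂ = 1) (x : CliffordAlgebra (-Q)) (y : ℍ[R,c₁,c₂]) :
    ofTensorQuaternion Q hc (x ⊗ₜ y) = negToProd Q hc x * quaternionToProd Q y :=
  Algebra.TensorProduct.lift_tmul _ _ _ _ _

theorem ofTensorQuaternion_comp_toTensorQuaternion (hc : c₁ * c₂ = 1) :
    (ofTensorQuaternion Q hc).comp (toTensorQuaternion Q hc) = AlgHom.id _ _ := by
  refine hom_ext (LinearMap.ext fun x => ?_)
  show ofTensorQuaternion Q hc (toTensorQuaternion Q hc (ι _ x)) = ι _ x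
  rw [toTensorQuaternion_ι, map_add, ofTensorQuaternion_tmul, ofTensorQuaternion_tmul, map_one,
    one_mul, negToProd_ι, map_neg, mul_neg, mul_assoc, quaternionToProd_k_mul_k Q hc, mul_neg_one,
    neg_neg, quaternionToProd_toQuaternion_ι, ← map_add, Prod.mk_add_mk, add_zero, zero_add]

theorem toTensorQuaternion_comp_ofTensorQuaternion (hc : c₁ * c₂ = 1) :
    (toTensorQuaternion Q hc).comp (ofTensorQuaternion Q hc) = AlgHom.id _ _ := by
  have hF (y : ℍ[R,c₁,c₂]) : toTensorQuaternion Q hc (quaternionToProd Q y) = 1 ⊗ₜ y :=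
    AlgHom.congr_fun (toTensorQuaternion_comp_quaternionToProd Q hc) y
  refine Algebra.TensorProduct.ext (hom_ext (LinearMap.ext fun m => ?_)) (AlgHom.ext fun y => ?_)
  · show toTensorQuaternion Q hc (ofTensorQuaternion Q hc (ι (-Q) m ⊗ₜ 1)) = ι (-Q) m ⊗ₜ 1
    rw [ofTensorQuaternion_tmul, map_one, mul_one, negToProd_ι, map_mul, hF, toTensorQuaternion_ι,
      map_zero, map_zero, TensorProduct.tmul_zero, add_zero, Algebra.TensorProduct.tmul_mul_tmul,
      mul_one, neg_mul, k_mul_k, hc, QuaternionAlgebra.coe_one, neg_neg]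
  · show toTensorQuaternion Q hc (ofTensorQuaternion Q hc (1 ⊗ₜ y)) = 1 ⊗ₜ y
    rw [ofTensorQuaternion_tmul, map_one, one_mul, hF]

noncomputable def prodQuaternionEquiv (hc : c₁ * c₂ = 1) :
    CliffordAlgebra (Q.prod (CliffordAlgebraQuaternion.Q c₁ c₂)) ≃ₐ[R]
      CliffordAlgebra (-Q) ⊗[R] ℍ[R,c₁,c₂] :=
  AlgEquiv.ofAlgHom (toTensorQuaternion Q hc) (ofTensorQuaternion Q hc)
    (toTensorQuaternion_comp_ofTensorQuaternion Q hc)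
    (ofTensorQuaternion_comp_toTensorQuaternion Q hc)

end CliffordAlgebra

theorem Qpq_apply (p q : ℕ) (v : Fin (p + q) → ℝ) :
    Qpq p q v = ∑ i : Fin (p + q), (if (i : ℕ) < p then v i * v i else -(v i * v i)) := by
  simp [Qpq, QuadraticMap.weightedSumSquares_apply, ite_mul]

noncomputable def Qpq.addTwoIsometryEquivProd (p q : ℕ) :
    (Qpq p (q + 2)).IsometryEquiv ((Qpq p q).prod (CliffordAlgebraQuaternion.Q (-1) (-1))) where
  toLinearEquiv := LinearEquiv.funCongrLeft ℝ ℝ (finSumFinEquiv (m := p + q) (n := 2)) ≪≫ₗ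
    LinearEquiv.sumArrowLequivProdArrow _ _ ℝ ℝ ≪≫ₗ
    (LinearEquiv.refl ℝ _).prodCongr (LinearEquiv.finTwoArrow ℝ ℝ)
  map_app' v := by
    rw [QuadraticMap.prod_apply, Qpq_apply, Qpq_apply]
    refine Eq.trans ?_ (Fin.sum_univ_add (a := p + q) (b := 2) _).symm
    simp [Fin.sum_univ_two, show ¬ p + q + 1 < p by omega]

noncomputable def Qpq.negIsometryEquiv (p q : ℕ) : (-Qpq p q).IsometryEquiv (Qpq q p) where
  toLinearEquiv := LinearEquiv.funCongrLeft ℝ ℝ finAddFlip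
  map_app' v := by
    rw [Qpq_apply, neg_apply, Qpq_apply, Fin.sum_univ_add, Fin.sum_univ_add]
    simp

open scoped TensorProduct in
theorem clifford_periodicity_minus_two (p q : ℕ) :
    Nonempty (CliffordAlgebra (Qpq p (q + 2)) ≃ₐ[ℝ]
      (CliffordAlgebra (Qpq q p) ⊗[ℝ] Quaternion ℝ)) :=
  ⟨(CliffordAlgebra.equivOfIsometry (Qpq.addTwoIsometryEquivProd p q)).trans <|
    (CliffordAlgebra.prodQuaternionEquiv (Qpq p q) (by norm_num)).trans <|
      Algebra.TensorProduct.congr (CliffordAlgebra.equivOfIsometry (Qpq.negIsometryEquiv p q))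
        AlgEquiv.refl⟩
end

section
/- Let n be a natural number with n ≥ 1 and N = 2n. Let A be the unital associative ℝ-algebra presented by generators x_0, …, x_{N−1} subject to the relations: x_0² = −1, x_1² = −1, and x_i² = 1 for all i ≥ 2; x_{2k}·x_{2k+1} = −x_{2k+1}·x_{2k} for every 0 ≤ k < n; and x_i·x_j = x_j·x_i for every other pair i ≠ j (i.e., whenever {i,j} is not of the form {2k, 2k+1}). Then A is isomorphic, as an ℝ-algebra, to the matrix algebra M_{2^{n−1}}(ℍ) over the real quaternions ℍ. (This algebra A is the twisted group algebra 𝒜_ℝ(μ_1^{2n}) attached to the quadratic form q_1^{2n}(x) = x_1x_2 + ⋯ + x_{2n−1}x_{2n} + x_1 + x_2 over the field of two elements.) -/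
/-!
Write `A_n` for the algebra presented by `Rel11 n`.
For `n ≥ 1` the last two generators `x_{2n}, x_{2n+1}` of `A_{n+1}` square to `1`, anticommute
and commute with `x_0, …, x_{2n-1}`; they therefore span a copy of the split quaternions
`ℍ[ℝ,1,0,1] ≃ M₂(ℝ)` centralising `A_n`, whence `A_{n+1} ≃ A_n ⊗ M₂(ℝ) ≃ M₂(A_n)`. For `n = 0` the
same splitting, with `x_0² = x_1² = -1`, gives `A_1 ≃ ℝ ⊗ ℍ ≃ ℍ`. Induction on `n` concludes.
-/

/-- The relations presenting the twisted group algebra `𝒜_ℝ(μ₁^{2n})`: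
generators `x_i` (`i : Fin (2n)`) with `x_0² = x_1² = -1`, `x_i² = 1` for `i ≥ 2`,
`x_{2k} x_{2k+1} = - x_{2k+1} x_{2k}` for `k < n`, and `x_i x_j = x_j x_i`
for every other pair `i ≠ j`. -/
inductive Rel11 (n : ℕ) : FreeAlgebra ℝ (Fin (2 * n)) → FreeAlgebra ℝ (Fin (2 * n)) → Prop
  | sq (i : Fin (2 * n)) :
      Rel11 n (FreeAlgebra.ι ℝ i * FreeAlgebra.ι ℝ i)
        (if (i : ℕ) < 2 then -1 else 1)
  | anti (k : ℕ) (hk : k < n) :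
      Rel11 n
        (FreeAlgebra.ι ℝ (⟨2 * k, by omega⟩ : Fin (2 * n)) *
          FreeAlgebra.ι ℝ (⟨2 * k + 1, by omega⟩ : Fin (2 * n)))
        (-(FreeAlgebra.ι ℝ (⟨2 * k + 1, by omega⟩ : Fin (2 * n)) *
          FreeAlgebra.ι ℝ (⟨2 * k, by omega⟩ : Fin (2 * n))))
  | comm (i j : Fin (2 * n)) (hij : i ≠ j)
      (h : ¬∃ k : ℕ, ((i : ℕ) = 2 * k ∧ (j : ℕ) = 2 * k + 1) ∨
        ((i : ℕ) = 2 * k + 1 ∧ (j : ℕ) = 2 * k)) :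
      Rel11 n (FreeAlgebra.ι ℝ i * FreeAlgebra.ι ℝ j) (FreeAlgebra.ι ℝ j * FreeAlgebra.ι ℝ i)

open scoped Quaternion TensorProduct

namespace QuaternionAlgebra.Basis

variable {R A : Type*} [CommRing R] [Ring A] [Algebra R A] {c₁ c₂ c₃ : R}
  (q : Basis A c₁ c₂ c₃)

@[simp]
theorem liftHom_self_i : q.liftHom (Basis.self R).i = q.i := by
  simp [Basis.lift]

@[simp]
theorem liftHom_self_j : q.liftHom (Basis.self R).j = q.j := by
  simp [Basis.lift]

theorem commute_liftHom {a : A} (hi : Commute a q.i) (hj : Commute a q.j)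
    (x : ℍ[R,c₁,c₂,c₃]) : Commute a (q.liftHom x) := by
  rw [liftHom_apply, Basis.lift, ← q.i_mul_j]
  exact (((Algebra.commute_algebraMap_right _ _).add_right (hi.smul_right _)).add_right
    (hj.smul_right _)).add_right ((hi.mul_right hj).smul_right _)

end QuaternionAlgebra.Basis

namespace Matrix

section SplitQuaternion

variable (K : Type*) [Field K]

def quaternionBasis : QuaternionAlgebra.Basis (Matrix (Fin 2) (Fin 2) K) (1 : K) 0 1 where
  i := !![1, 0; 0, -1]
  j := !![0, 1; 1, 0]
  k := !![0, 1; -1, 0]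
  i_mul_i := by ext i j; fin_cases i <;> fin_cases j <;> simp
  j_mul_j := by ext i j; fin_cases i <;> fin_cases j <;> simp
  i_mul_j := by ext i j; fin_cases i <;> fin_cases j <;> simp
  j_mul_i := by ext i j; fin_cases i <;> fin_cases j <;> simp

variable [NeZero (2 : K)]

theorem quaternionBasis_liftHom_surjective : Function.Surjective (quaternionBasis K).liftHom := by
  intro M
  refine ⟨⟨(M 0 0 + M 1 1) / 2, (M 0 0 - M 1 1) / 2, (M 0 1 + M 1 0) / 2, (M 0 1 - M 1 0) / 2⟩, ?_⟩
  ext i j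
  fin_cases i <;> fin_cases j <;>
    simp [QuaternionAlgebra.Basis.lift, quaternionBasis, algebraMap_matrix_apply] <;>
    field_simp <;> ring

noncomputable def splitQuaternionAlgEquiv : ℍ[K,1,0,1] ≃ₐ[K] Matrix (Fin 2) (Fin 2) K :=
  AlgEquiv.ofBijective (quaternionBasis K).liftHom <| by
    have hdim : Module.finrank K ℍ[K,1,0,1] = Module.finrank K (Matrix (Fin 2) (Fin 2) K) := by
      simp [QuaternionAlgebra.finrank_eq_four, Module.finrank_matrix]
    refine ⟨?_, quaternionBasis_liftHom_surjective K⟩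
    exact (LinearMap.injective_iff_surjective_of_finrank_eq_finrank hdim
      (f := (quaternionBasis K).liftHom.toLinearMap)).2 (quaternionBasis_liftHom_surjective K)

end SplitQuaternion

variable (R A : Type*) [CommSemiring R] [Semiring A] [Algebra R A]

noncomputable def finOneAlgEquiv : A ≃ₐ[R] Matrix (Fin 1) (Fin 1) A :=
  AlgEquiv.ofBijective (scalarAlgHom (Fin 1) R) <| by
    refine ⟨fun a b h => by simpa using congrFun₂ h 0 0, fun M => ⟨M 0 0, ?_⟩⟩
    ext i j
    simp [Subsingleton.elim i 0, Subsingleton.elim j 0]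

def finMulAlgEquiv (m k : ℕ) :
    Matrix (Fin m) (Fin m) (Matrix (Fin k) (Fin k) A) ≃ₐ[R] Matrix (Fin (m * k)) (Fin (m * k)) A :=
  (compAlgEquiv _ _ A R).trans (reindexAlgEquiv R A finProdFinEquiv)

end Matrix

theorem Nat.not_exists_pair_iff {i j : ℕ} :
    (¬∃ k : ℕ, (i = 2 * k ∧ j = 2 * k + 1) ∨ (i = 2 * k + 1 ∧ j = 2 * k)) ↔
      (i = j ∨ i / 2 ≠ j / 2) := by
  constructor
  · intro h
    by_contra! hc
    exact h ⟨i / 2, by omega⟩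
  · rintro h ⟨k, hk⟩
    omega

abbrev TwistedAlgebra (n : ℕ) : Type := RingQuot (Rel11 n)

namespace TwistedAlgebra

variable {n : ℕ}

variable (n) in
noncomputable def gen (i : Fin (2 * n)) : TwistedAlgebra n :=
  RingQuot.mkAlgHom ℝ (Rel11 n) (FreeAlgebra.ι ℝ i)

theorem gen_mul_self (i : Fin (2 * n)) :
    gen n i * gen n i = if (i : ℕ) < 2 then -1 else 1 := by
  simpa [gen, apply_ite] using RingQuot.mkAlgHom_rel ℝ (Rel11.sq i)

theorem gen_anticomm (k : ℕ) (hk : k < n) :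
    gen n ⟨2 * k, by omega⟩ * gen n ⟨2 * k + 1, by omega⟩ =
      -(gen n ⟨2 * k + 1, by omega⟩ * gen n ⟨2 * k, by omega⟩) := by
  simpa [gen] using RingQuot.mkAlgHom_rel ℝ (Rel11.anti k hk)

theorem gen_commute {i j : Fin (2 * n)} (h : (i : ℕ) / 2 ≠ j / 2) :
    Commute (gen n i) (gen n j) := by
  have hij : i ≠ j := by rintro rfl; exact h rfl
  have := RingQuot.mkAlgHom_rel ℝ (Rel11.comm i j hij (Nat.not_exists_pair_iff.2 (Or.inr h)))
  rw [map_mul, map_mul] at this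
  exact this

section Lift

variable {B : Type*} [Ring B] [Algebra ℝ B] (f : Fin (2 * n) → B)
  (hsq : ∀ i, f i * f i = if (i : ℕ) < 2 then -1 else 1)
  (hanti : ∀ k (hk : k < n), f ⟨2 * k, by omega⟩ * f ⟨2 * k + 1, by omega⟩ =
    -(f ⟨2 * k + 1, by omega⟩ * f ⟨2 * k, by omega⟩))
  (hcomm : ∀ i j : Fin (2 * n), (i : ℕ) / 2 ≠ j / 2 → Commute (f i) (f j))

noncomputable def lift : TwistedAlgebra n →ₐ[ℝ] B :=
  RingQuot.liftAlgHom ℝ ⟨FreeAlgebra.lift ℝ f, fun x y hxy => by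
    induction hxy with
    | sq i => simpa [apply_ite] using hsq i
    | anti k hk => simpa using hanti k hk
    | comm i j hij h =>
      have hne : (i : ℕ) / 2 ≠ j / 2 :=
        (Nat.not_exists_pair_iff.1 h).resolve_left fun h' => hij (Fin.ext h')
      simpa using (hcomm i j hne).eq⟩

@[simp]
theorem lift_gen (i : Fin (2 * n)) : lift f hsq hanti hcomm (gen n i) = f i := by
  simp [lift, gen]

end Lift

theorem induction_on {C : TwistedAlgebra n → Prop} (x : TwistedAlgebra n)
    (algebraMap : ∀ r : ℝ, C (algebraMap ℝ _ r)) (gen : ∀ i, C (gen n i))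
    (mul : ∀ a b, C a → C b → C (a * b)) (add : ∀ a b, C a → C b → C (a + b)) : C x := by
  obtain ⟨y, rfl⟩ := RingQuot.mkAlgHom_surjective ℝ (Rel11 n) x
  induction y with
  | grade0 r => simpa using algebraMap r
  | grade1 i => exact gen i
  | mul a b ha hb => simpa using mul _ _ ha hb
  | add a b ha hb => simpa using add _ _ ha hb

theorem hom_ext {B : Type*} [Semiring B] [Algebra ℝ B] {f g : TwistedAlgebra n →ₐ[ℝ] B}
    (h : ∀ i, f (gen n i) = g (gen n i)) : f = g :=
  RingQuot.ringQuot_ext' ℝ f g (FreeAlgebra.hom_ext (funext h))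

theorem commute_of_forall_gen {B : Type*} [Semiring B] [Algebra ℝ B]
    (f : TwistedAlgebra n →ₐ[ℝ] B) {b : B} (h : ∀ i, Commute (f (gen n i)) b)
    (x : TwistedAlgebra n) : Commute (f x) b := by
  induction x using induction_on with
  | algebraMap r => simpa using Algebra.commute_algebraMap_left r b
  | gen i => exact h i
  | mul x y hx hy => simpa using hx.mul_left hy
  | add x y hx hy => simpa using hx.add_left hy

noncomputable def equivReal : TwistedAlgebra 0 ≃ₐ[ℝ] ℝ :=
  AlgEquiv.ofAlgHom
    (lift (fun i => i.elim0) (fun i => i.elim0) (fun k hk => absurd hk k.not_lt_zero)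
      (fun i => i.elim0))
    (Algebra.ofId ℝ _) (Subsingleton.elim _ _) (hom_ext fun i => i.elim0)

variable (n) in
noncomputable def inclusion : TwistedAlgebra n →ₐ[ℝ] TwistedAlgebra (n + 1) :=
  lift (fun i => gen (n + 1) (Fin.castLE (by omega) i))
    (fun i => by rw [gen_mul_self, Fin.val_castLE])
    (fun k hk => by simpa using gen_anticomm k (by omega))
    (fun i j h => gen_commute (by simpa using h))

@[simp]
theorem inclusion_gen (i : Fin (2 * n)) :
    inclusion n (gen n i) = gen (n + 1) (Fin.castLE (by omega) i) := lift_gen ..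

section Splitting

variable {c : ℝ}

theorem smul_one_eq_ite_lt_two {B : Type*} [Ring B] [Algebra ℝ B]
    (hc : c = if n = 0 then -1 else 1) {i : ℕ} (hi : 2 * n ≤ i) (hi' : i < 2 * n + 2) :
    c • (1 : B) = if i < 2 then -1 else 1 := by
  rcases Nat.eq_zero_or_pos n with rfl | hn
  · rw [if_pos (by omega), hc, if_pos rfl, neg_one_smul]
  · rw [if_neg (by omega), hc, if_neg (by omega), one_smul]

variable (n) in
noncomputable def lastPair (hc : c = if n = 0 then -1 else 1) :
    QuaternionAlgebra.Basis (TwistedAlgebra (n + 1)) c 0 c where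
  i := gen (n + 1) ⟨2 * n, by omega⟩
  j := gen (n + 1) ⟨2 * n + 1, by omega⟩
  k := gen (n + 1) ⟨2 * n, by omega⟩ * gen (n + 1) ⟨2 * n + 1, by omega⟩
  i_mul_i := by
    rw [gen_mul_self, ← smul_one_eq_ite_lt_two hc (by simp) (by simp), zero_smul, add_zero]
  j_mul_j := by rw [gen_mul_self, ← smul_one_eq_ite_lt_two hc (by simp) (by simp)]
  i_mul_j := rfl
  j_mul_i := by rw [gen_anticomm n n.lt_add_one]; simp

variable (n c) in
noncomputable def splitGen (i : Fin (2 * (n + 1))) : TwistedAlgebra n ⊗[ℝ] ℍ[ℝ,c,0,c] :=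
  if h : (i : ℕ) < 2 * n then
    Algebra.TensorProduct.includeLeft (S := ℝ) (B := ℍ[ℝ,c,0,c]) (gen n ⟨i, h⟩)
  else Algebra.TensorProduct.includeRight
    (if (i : ℕ) = 2 * n then (QuaternionAlgebra.Basis.self ℝ).i
      else (QuaternionAlgebra.Basis.self ℝ).j)

theorem splitGen_mul_self (hc : c = if n = 0 then -1 else 1) (i : Fin (2 * (n + 1))) :
    splitGen n c i * splitGen n c i = if (i : ℕ) < 2 then -1 else 1 := by
  by_cases h : (i : ℕ) < 2 * n
  · rw [splitGen, dif_pos h, ← map_mul, gen_mul_self]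
    split_ifs <;> simp only [map_neg, map_one]
  · have hq : ∀ q : ℍ[ℝ,c,0,c], q = (QuaternionAlgebra.Basis.self ℝ).i ∨
        q = (QuaternionAlgebra.Basis.self ℝ).j → q * q = c • 1 := by
      rintro q (rfl | rfl)
      · rw [QuaternionAlgebra.Basis.i_mul_i, zero_smul, add_zero]
      · exact QuaternionAlgebra.Basis.j_mul_j _
    rw [splitGen, dif_neg h, ← map_mul, hq _ (by split_ifs <;> simp), map_smul, map_one]
    exact smul_one_eq_ite_lt_two (B := TwistedAlgebra n ⊗[ℝ] ℍ[ℝ,c,0,c]) hc (by omega) i.isLt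

theorem splitGen_anticomm (k : ℕ) (hk : k < n + 1) :
    splitGen n c ⟨2 * k, by omega⟩ * splitGen n c ⟨2 * k + 1, by omega⟩ =
      -(splitGen n c ⟨2 * k + 1, by omega⟩ * splitGen n c ⟨2 * k, by omega⟩) := by
  rcases Nat.lt_succ_iff_lt_or_eq.1 hk with hk | rfl
  · rw [splitGen, splitGen, dif_pos (by simp; omega), dif_pos (by simp; omega), ← map_mul,
      ← map_mul, gen_anticomm k hk, map_neg]
  · rw [splitGen, splitGen, dif_neg (by simp), dif_neg (by simp), if_pos rfl, if_neg (by simp),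
      ← map_mul, ← map_mul, QuaternionAlgebra.Basis.i_mul_j, QuaternionAlgebra.Basis.j_mul_i,
      zero_smul, zero_sub, map_neg]
    exact (neg_neg (G := TwistedAlgebra k ⊗[ℝ] ℍ[ℝ,c,0,c]) _).symm

theorem splitGen_commute {i j : Fin (2 * (n + 1))} (h : (i : ℕ) / 2 ≠ j / 2) :
    Commute (splitGen n c i) (splitGen n c j) := by
  have hmixed : ∀ (a : TwistedAlgebra n) (b : ℍ[ℝ,c,0,c]),
      Commute (Algebra.TensorProduct.includeLeft (S := ℝ) (B := ℍ[ℝ,c,0,c]) a)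
        (Algebra.TensorProduct.includeRight (R := ℝ) (A := TwistedAlgebra n) b) := fun a b => by
    simp [Commute, SemiconjBy]
  by_cases hi : (i : ℕ) < 2 * n <;> by_cases hj : (j : ℕ) < 2 * n
  · rw [splitGen, splitGen, dif_pos hi, dif_pos hj]
    exact (gen_commute (i := ⟨i, hi⟩) (j := ⟨j, hj⟩) h).map _
  · rw [splitGen, splitGen, dif_pos hi, dif_neg hj]
    exact hmixed _ _
  · rw [splitGen, splitGen, dif_neg hi, dif_pos hj]
    exact (hmixed _ _).symm
  · omega

variable (hc : c = if n = 0 then -1 else 1)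

variable (n) in
noncomputable def split : TwistedAlgebra (n + 1) →ₐ[ℝ] TwistedAlgebra n ⊗[ℝ] ℍ[ℝ,c,0,c] :=
  lift (splitGen n c) (splitGen_mul_self hc) splitGen_anticomm (fun _ _ => splitGen_commute)

theorem split_gen (i : Fin (2 * (n + 1))) : split n hc (gen (n + 1) i) = splitGen n c i :=
  lift_gen ..

theorem split_comp_inclusion :
    (split n hc).comp (inclusion n) = Algebra.TensorProduct.includeLeft := by
  refine hom_ext fun i => ?_
  rw [AlgHom.comp_apply, inclusion_gen, split_gen, splitGen, dif_pos (by simp)]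
  rfl

theorem split_comp_liftHom_lastPair :
    (split n hc).comp (lastPair n hc).liftHom = Algebra.TensorProduct.includeRight := by
  refine QuaternionAlgebra.hom_ext (A := TwistedAlgebra n ⊗[ℝ] ℍ[ℝ,c,0,c]) ?_ ?_
  · rw [AlgHom.comp_apply, QuaternionAlgebra.Basis.liftHom_self_i]
    exact (split_gen hc _).trans (by rw [splitGen, dif_neg (by simp), if_pos rfl])
  · rw [AlgHom.comp_apply, QuaternionAlgebra.Basis.liftHom_self_j]
    exact (split_gen hc _).trans (by rw [splitGen, dif_neg (by simp), if_neg (by simp)])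

theorem commute_inclusion_lastPair (x : TwistedAlgebra n) (q : ℍ[ℝ,c,0,c]) :
    Commute (inclusion n x) ((lastPair n hc).liftHom q) := by
  refine commute_of_forall_gen _ (fun i => ?_) x
  rw [inclusion_gen]
  exact (lastPair n hc).commute_liftHom (gen_commute (by simp; omega))
    (gen_commute (by simp; omega)) q

variable (n) in
noncomputable def join : TwistedAlgebra n ⊗[ℝ] ℍ[ℝ,c,0,c] →ₐ[ℝ] TwistedAlgebra (n + 1) :=
  Algebra.TensorProduct.lift (inclusion n) (lastPair n hc).liftHom (commute_inclusion_lastPair hc)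

theorem join_splitGen (i : Fin (2 * (n + 1))) : join n hc (splitGen n c i) = gen (n + 1) i := by
  rw [splitGen]
  split_ifs with h h'
  · simp [join, QuaternionAlgebra.Basis.lift_one]
  all_goals
    rw [join, Algebra.TensorProduct.includeRight_apply, Algebra.TensorProduct.lift_tmul,
      map_one, one_mul]
  · rw [QuaternionAlgebra.Basis.liftHom_self_i]
    exact congrArg (gen (n + 1)) (Fin.ext h'.symm)
  · rw [QuaternionAlgebra.Basis.liftHom_self_j]
    exact congrArg (gen (n + 1)) (Fin.ext (by simp; omega))

variable (n) in
noncomputable def equivTensor : TwistedAlgebra (n + 1) ≃ₐ[ℝ] TwistedAlgebra n ⊗[ℝ] ℍ[ℝ,c,0,c] :=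
  AlgEquiv.ofAlgHom (split n hc) (join n hc)
    (by
      refine Algebra.TensorProduct.ext ?_ ?_
      · rw [AlgHom.comp_assoc, join, Algebra.TensorProduct.lift_comp_includeLeft,
          split_comp_inclusion]
        rfl
      · refine AlgHom.ext fun q => ?_
        simpa [join] using AlgHom.congr_fun (split_comp_liftHom_lastPair hc) q)
    (hom_ext fun i => by rw [AlgHom.comp_apply, split_gen, join_splitGen, AlgHom.id_apply])

end Splitting

end TwistedAlgebra

theorem twisted_mu1_even_iso_matrix_quaternion (n : ℕ) (hn : 1 ≤ n) :
    Nonempty (RingQuot (Rel11 n) ≃ₐ[ℝ]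
      Matrix (Fin (2 ^ (n - 1))) (Fin (2 ^ (n - 1))) (Quaternion ℝ)) := by
  induction n, hn using Nat.le_induction with
  | base =>
    exact ⟨(TwistedAlgebra.equivTensor 0 (c := -1) rfl).trans <|
      (Algebra.TensorProduct.congr TwistedAlgebra.equivReal AlgEquiv.refl).trans <|
      (Algebra.TensorProduct.lid ℝ ℍ[ℝ]).trans (Matrix.finOneAlgEquiv ℝ ℍ[ℝ])⟩
  | succ n hn ih =>
    obtain ⟨e⟩ := ih
    rw [show 2 ^ (n + 1 - 1) = 2 * 2 ^ (n - 1) by rw [← pow_succ']; congr 1; omega]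
    exact ⟨(TwistedAlgebra.equivTensor n (c := 1) (if_neg (by omega)).symm).trans <|
      (Algebra.TensorProduct.congr AlgEquiv.refl (Matrix.splitQuaternionAlgEquiv ℝ)).trans <|
      (matrixEquivTensor (Fin 2) ℝ _).symm.trans <| e.mapMatrix.trans <|
      Matrix.finMulAlgEquiv ℝ ℍ[ℝ] 2 _⟩
end
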